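/- arXiv:2305.17882 — 7 statements merged into one kernel-verified Lean document; each statement's English description precedes it below -/
import Mathlib

section
/- Let f, h, g : [0,T] → [0,∞) be continuous nonnegative functions and α ∈ [0,1) be such that f(t) ≤ h(t) + ∫₀ᵗ (t−s)^{−α} g(s) f(s) ds for all t ∈ [0,T]. Then for any q with q > 1/(1−α), there exists a constant C > 0 depending only on q, α, and T such that f(t) ≤ h(t) + C·exp(C‖g‖_{L^q(0,T)}^q)·(∫₀ᵗ h(s)^q g(s)^q ds)^{1/q} for all t ∈ (0,T]. -/
open Real MeasureTheory Set intervalIntegral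

lemma gronwall_const {T A b : ℝ} (hT : 0 < T) (hA : 0 ≤ A) (hb : 0 ≤ b)
    {v c : ℝ → ℝ} (hv : ContinuousOn v (Icc 0 T)) (hc : ContinuousOn c (Icc 0 T))
    (hc0 : ∀ t ∈ Icc (0:ℝ) T, 0 ≤ c t)
    (hineq : ∀ t ∈ Icc (0:ℝ) T, v t ≤ A + b * ∫ s in (0:ℝ)..t, c s * v s) :
    ∀ t ∈ Icc (0:ℝ) T, v t ≤ A * Real.exp (b * ∫ s in (0:ℝ)..t, c s) := by
  set cv : ℝ → ℝ := fun s => c s * v s with hcv_def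
  have hcv : ContinuousOn cv (Icc 0 T) := hc.mul hv
  set V : ℝ → ℝ := fun t => A + b * ∫ s in (0:ℝ)..t, cv s with hV_def
  set I : ℝ → ℝ := fun t => ∫ s in (0:ℝ)..t, c s with hI_def
  set E : ℝ → ℝ := fun t => V t * Real.exp (-(b * I t)) with hE_def
  have hVc : ContinuousOn V (Icc 0 T) := by
    apply continuousOn_const.add (continuousOn_const.mul ?_)
    have := continuousOn_primitive_interval (f := cv) (a := (0:ℝ)) (b := T) (μ := volume)
      (by rw [uIcc_of_le hT.le]; exact hcv.integrableOn_Icc)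
    rwa [uIcc_of_le hT.le] at this
  have hIc : ContinuousOn I (Icc 0 T) := by
    have := continuousOn_primitive_interval (f := c) (a := (0:ℝ)) (b := T) (μ := volume)
      (by rw [uIcc_of_le hT.le]; exact hc.integrableOn_Icc)
    rwa [uIcc_of_le hT.le] at this
  have hEc : ContinuousOn E (Icc 0 T) :=
    hVc.mul (Real.continuous_exp.comp_continuousOn (continuousOn_const.mul hIc).neg)
  have hint : interior (Icc (0:ℝ) T) = Ioo 0 T := interior_Icc
  have key : ∀ x ∈ Ioo (0:ℝ) T, HasDerivAt E
      ((b * cv x) * Real.exp (-(b * I x)) + V x * (Real.exp (-(b * I x)) * (-(b * c x)))) x := by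
    intro x hx
    have hxc : Icc (0:ℝ) T ∈ nhds x := Icc_mem_nhds hx.1 hx.2
    have hdI : HasDerivAt I (c x) x := by
      apply intervalIntegral.integral_hasDerivAt_right
      · exact (hc.mono (Icc_subset_Icc le_rfl hx.2.le)).intervalIntegrable_of_Icc hx.1.le
      · exact (hc.mono interior_subset).stronglyMeasurableAtFilter isOpen_interior x
          (by rw [hint]; exact hx)
      · exact hc.continuousAt hxc
    have hdV : HasDerivAt V (b * cv x) x := by
      apply HasDerivAt.const_add
      have h1 : HasDerivAt (fun t => ∫ s in (0:ℝ)..t, cv s) (cv x) x := by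
        apply intervalIntegral.integral_hasDerivAt_right
        · exact (hcv.mono (Icc_subset_Icc le_rfl hx.2.le)).intervalIntegrable_of_Icc hx.1.le
        · exact (hcv.mono interior_subset).stronglyMeasurableAtFilter isOpen_interior x
            (by rw [hint]; exact hx)
        · exact hcv.continuousAt hxc
      exact h1.const_mul b
    have hdE : HasDerivAt (fun t => Real.exp (-(b * I t)))
        (Real.exp (-(b * I x)) * (-(b * c x))) x := ((hdI.const_mul b).neg).exp
    exact hdV.mul hdE
  have hanti : AntitoneOn E (Icc 0 T) := by
    apply antitoneOn_of_deriv_nonpos (convex_Icc 0 T) hEc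
    · intro x hx
      rw [hint] at hx
      exact ((key x hx).differentiableAt).differentiableWithinAt
    · intro x hx
      rw [hint] at hx
      rw [(key x hx).deriv]
      have hvV : v x ≤ V x := hineq x (Ioo_subset_Icc_self hx)
      have hcx : 0 ≤ c x := hc0 x (Ioo_subset_Icc_self hx)
      have hcve : cv x = c x * v x := rfl
      have heq : (b * cv x) * Real.exp (-(b * I x)) + V x * (Real.exp (-(b * I x)) * (-(b * c x)))
          = (b * c x * Real.exp (-(b * I x))) * (v x - V x) := by rw [hcve]; ring
      rw [heq]
      exact mul_nonpos_of_nonneg_of_nonpos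
        (mul_nonneg (mul_nonneg hb hcx) (Real.exp_pos _).le) (by linarith)
  intro t ht
  have hE0 : E t ≤ E 0 := hanti (left_mem_Icc.2 hT.le) ht ht.1
  have hE0v : E 0 = A := by
    simp [hE_def, hV_def, hI_def, intervalIntegral.integral_same]
  rw [hE0v] at hE0
  have hVt : V t ≤ A * Real.exp (b * I t) := by
    calc V t = (V t * Real.exp (-(b * I t))) * Real.exp (b * I t) := by
          rw [mul_assoc, ← Real.exp_add]; simp
      _ ≤ A * Real.exp (b * I t) :=
          mul_le_mul_of_nonneg_right hE0 (Real.exp_pos _).le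
  exact le_trans (hineq t ht) hVt

lemma holder_step {T α p q : ℝ} (hT : 0 < T) (hα0 : 0 ≤ α)
    (hpq : p.HolderConjugate q) (hpα : p * α < 1)
    {φ : ℝ → ℝ} (hφ : ContinuousOn φ (Icc 0 T)) (hφ0 : ∀ s ∈ Icc (0:ℝ) T, 0 ≤ φ s)
    {t : ℝ} (ht0 : 0 < t) (htT : t ≤ T) :
    ∫ s in (0:ℝ)..t, (t - s) ^ (-α) * φ s ≤
      (T ^ (1 - p * α) / (1 - p * α)) ^ (1 / p) * (∫ s in (0:ℝ)..t, φ s ^ q) ^ (1 / q) := by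
  have hsub : Icc (0:ℝ) t ⊆ Icc 0 T := Icc_subset_Icc le_rfl htT
  have hφ' : ContinuousOn φ (Icc 0 t) := hφ.mono hsub
  have hp1 : 1 < p := hpq.lt
  have hp0 : 0 < p := hpq.pos
  have hq0 : 0 < q := hpq.symm.pos
  have hpα0 : 0 ≤ p * α := mul_nonneg hp0.le hα0
  have hexp : (-1:ℝ) < -(p * α) := by linarith
  -- kernel
  set k : ℝ → ℝ := fun s => (t - s) ^ (-α) with hk_def
  have hk_meas : Measurable k := (measurable_const.sub measurable_id).pow measurable_const
  -- integrability of k^p type things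
  have hkp_int : IntegrableOn (fun s => (t - s) ^ (-(p * α))) (Ioc 0 t) volume := by
    have h1 : IntervalIntegrable (fun x : ℝ => x ^ (-(p * α))) volume 0 t :=
      intervalIntegrable_rpow' hexp
    have h2 := h1.comp_sub_left t
    simp only [sub_self, sub_zero] at h2
    exact h2.symm.1
  -- Memℒp of the kernel
  have hk_mem : MemLp k (ENNReal.ofReal p) (volume.restrict (Ioc 0 t)) := by
    have hp_ne : ENNReal.ofReal p ≠ 0 := by
      simp [ENNReal.ofReal_eq_zero, not_le, hp0]
    have hp_top : ENNReal.ofReal p ≠ ⊤ := ENNReal.ofReal_ne_top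
    have := (memLp_norm_rpow_iff (q := ENNReal.ofReal p) (p := ENNReal.ofReal p)
      (μ := volume.restrict (Ioc 0 t))
      ((hk_meas.aestronglyMeasurable (μ := volume)).restrict (s := Ioc 0 t)) hp_ne hp_top)
    rw [ENNReal.div_self hp_ne hp_top] at this
    apply this.1
    rw [memLp_one_iff_integrable]
    rw [ENNReal.toReal_ofReal hp0.le]
    apply hkp_int.congr_fun ?_ measurableSet_Ioc
    intro s hs
    have h1 : (0:ℝ) ≤ t - s := by linarith [hs.2]
    simp only [hk_def, Real.norm_eq_abs, abs_of_nonneg (Real.rpow_nonneg h1 (-α))]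
    rw [← Real.rpow_mul h1]
    ring_nf
  -- Memℒp of φ
  have hφ_mem : MemLp φ (ENNReal.ofReal q) (volume.restrict (Ioc 0 t)) := by
    have hq_ne : ENNReal.ofReal q ≠ 0 := by
      simp [ENNReal.ofReal_eq_zero, not_le, hq0]
    have hq_top : ENNReal.ofReal q ≠ ⊤ := ENNReal.ofReal_ne_top
    have hφm : AEStronglyMeasurable φ (volume.restrict (Ioc 0 t)) :=
      (hφ'.mono Ioc_subset_Icc_self).aestronglyMeasurable measurableSet_Ioc
    have := (memLp_norm_rpow_iff (q := ENNReal.ofReal q) (p := ENNReal.ofReal q)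
      (μ := volume.restrict (Ioc 0 t)) hφm hq_ne hq_top)
    rw [ENNReal.div_self hq_ne hq_top] at this
    apply this.1
    rw [memLp_one_iff_integrable, ENNReal.toReal_ofReal hq0.le]
    have hcont : ContinuousOn (fun x => ‖φ x‖ ^ q) (Icc 0 t) := by
      apply ContinuousOn.rpow_const
      · exact continuous_norm.comp_continuousOn hφ'
      · exact fun x _ => Or.inr hq0.le
    exact (hcont.integrableOn_Icc).mono_set Ioc_subset_Icc_self
  -- a.e. nonnegativity
  have hk_nn : 0 ≤ᵐ[volume.restrict (Ioc 0 t)] k := by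
    filter_upwards [ae_restrict_mem measurableSet_Ioc] with s hs
    exact Real.rpow_nonneg (by linarith [hs.2] : (0:ℝ) ≤ t - s) _
  have hφ_nn : 0 ≤ᵐ[volume.restrict (Ioc 0 t)] φ := by
    filter_upwards [ae_restrict_mem measurableSet_Ioc] with s hs
    exact hφ0 s ⟨hs.1.le, hs.2.trans htT⟩
  have hold := MeasureTheory.integral_mul_le_Lp_mul_Lq_of_nonneg hpq hk_nn hφ_nn hk_mem hφ_mem
  -- compute the kernel Lp integral
  have hone : 0 < 1 - p * α := by linarith
  have hval : ∫ s in Ioc (0:ℝ) t, k s ^ p = t ^ (1 - p * α) / (1 - p * α) := by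
    have h1 : ∫ s in Ioc (0:ℝ) t, k s ^ p = ∫ s in Ioc (0:ℝ) t, (t - s) ^ (-(p * α)) := by
      apply setIntegral_congr_fun measurableSet_Ioc
      intro s hs
      have h1 : (0:ℝ) ≤ t - s := by linarith [hs.2]
      simp only [hk_def]
      rw [← Real.rpow_mul h1]
      ring_nf
    rw [h1, ← intervalIntegral.integral_of_le ht0.le]
    rw [intervalIntegral.integral_comp_sub_left (fun u : ℝ => u ^ (-(p * α))) t]
    rw [sub_self, sub_zero]
    rw [integral_rpow (Or.inl hexp)]
    rw [Real.zero_rpow (by linarith : -(p * α) + 1 ≠ 0)]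
    ring_nf
  -- final bound
  rw [intervalIntegral.integral_of_le ht0.le, intervalIntegral.integral_of_le ht0.le]
  refine le_trans hold ?_
  apply mul_le_mul_of_nonneg_right ?_ ?_
  · apply Real.rpow_le_rpow ?_ ?_ (by positivity : (0:ℝ) ≤ 1 / p)
    · apply setIntegral_nonneg measurableSet_Ioc
      intro s hs
      exact Real.rpow_nonneg (Real.rpow_nonneg (by linarith [hs.2] : (0:ℝ) ≤ t - s) _) _
    · rw [hval]
      apply div_le_div_of_nonneg_right ?_ hone.le
      exact Real.rpow_le_rpow ht0.le htT hone.le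
  · apply Real.rpow_nonneg
    apply setIntegral_nonneg measurableSet_Ioc
    intro s hs
    exact Real.rpow_nonneg (hφ0 s ⟨hs.1.le, hs.2.trans htT⟩) _

lemma add_rpow_le_main {x y q : ℝ} (hx : 0 ≤ x) (hy : 0 ≤ y) (hq : 0 ≤ q) :
    (x + y) ^ q ≤ 2 ^ q * (x ^ q + y ^ q) := by
  have hm : x + y ≤ 2 * max x y := by
    rcases le_total x y with h | h
    · rw [max_eq_right h]; linarith
    · rw [max_eq_left h]; linarith
  calc (x + y) ^ q ≤ (2 * max x y) ^ q :=
        Real.rpow_le_rpow (by positivity) hm hq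
    _ = 2 ^ q * (max x y) ^ q := Real.mul_rpow (by norm_num) (le_max_of_le_left hx)
    _ ≤ 2 ^ q * (x ^ q + y ^ q) := by
        apply mul_le_mul_of_nonneg_left ?_ (by positivity)
        rcases le_total x y with h | h
        · rw [max_eq_right h]; nlinarith [Real.rpow_nonneg hx q]
        · rw [max_eq_left h]; nlinarith [Real.rpow_nonneg hy q]

/-- Singular Gronwall inequality with weakly singular kernel `(t-s)^(-α)`. -/
theorem singular_gronwall
    (T α : ℝ) (hT : 0 < T) (hα0 : 0 ≤ α) (hα1 : α < 1)
    (q : ℝ) (hq : 1 / (1 - α) < q) :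
    ∃ C > 0, ∀ f h g : ℝ → ℝ,
      ContinuousOn f (Icc 0 T) → ContinuousOn h (Icc 0 T) → ContinuousOn g (Icc 0 T) →
      (∀ t ∈ Icc (0:ℝ) T, 0 ≤ f t) → (∀ t ∈ Icc (0:ℝ) T, 0 ≤ h t) →
      (∀ t ∈ Icc (0:ℝ) T, 0 ≤ g t) →
      (∀ t ∈ Icc (0:ℝ) T, f t ≤ h t + ∫ s in (0:ℝ)..t, (t - s) ^ (-α) * g s * f s) →
      ∀ t ∈ Ioc (0:ℝ) T,
        f t ≤ h t + C * Real.exp (C * ∫ s in (0:ℝ)..T, g s ^ q) *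
          (∫ s in (0:ℝ)..t, h s ^ q * g s ^ q) ^ (1 / q) := by
  have h1α : 0 < 1 - α := by linarith
  have hq1 : 1 < q := by
    have h1 : (1:ℝ) ≤ 1 / (1 - α) := by rw [le_div_iff₀ h1α]; linarith
    linarith
  have hq0 : 0 < q := by linarith
  set p := Real.conjExponent q with hp_def
  have hpq : p.HolderConjugate q := (Real.HolderConjugate.conjExponent hq1).symm
  have hp0 : 0 < p := hpq.pos
  have hqinv : 1 / q < 1 - α := by
    rw [div_lt_iff₀ hq0]
    rw [div_lt_iff₀ h1α] at hq
    nlinarith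
  have hpα : p * α < 1 := by
    have hsum : p⁻¹ + q⁻¹ = 1 := hpq.inv_add_inv_eq_one
    have hαinv : α < p⁻¹ := by
      rw [one_div] at hqinv; linarith
    calc p * α < p * p⁻¹ := mul_lt_mul_of_pos_left hαinv hp0
      _ = 1 := mul_inv_cancel₀ hp0.ne'
  set K : ℝ := (T ^ (1 - p * α) / (1 - p * α)) ^ (1 / p) with hK_def
  have hone : 0 < 1 - p * α := by linarith
  have hK0 : 0 ≤ K := Real.rpow_nonneg
    (div_nonneg (Real.rpow_nonneg hT.le _) hone.le) _
  set a : ℝ := 2 ^ q * K ^ q with ha_def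
  have ha0 : 0 ≤ a := by positivity
  set C : ℝ := max (a ^ (1 / q)) (a / q) + 1 with hC_def
  have hC1 : a ^ (1 / q) ≤ C := by
    have := le_max_left (a ^ (1 / q)) (a / q); linarith
  have hC2 : a / q ≤ C := by
    have := le_max_right (a ^ (1 / q)) (a / q); linarith
  have hC0 : 0 < C := by
    have h1 : (0:ℝ) ≤ a ^ (1 / q) := Real.rpow_nonneg ha0 _
    have h2 := le_max_left (a ^ (1 / q)) (a / q)
    simp only [hC_def]
    linarith
  refine ⟨C, hC0, ?_⟩
  intro f h g hf hh hg hf0 hh0 hg0 hfh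
  -- auxiliary functions
  set w : ℝ → ℝ := fun s => max (f s - h s) 0 with hw_def
  set v : ℝ → ℝ := fun s => w s ^ q with hv_def
  have hw_cont : ContinuousOn w (Icc 0 T) := ContinuousOn.sup (hf.sub hh) continuousOn_const
  have hw0 : ∀ s, 0 ≤ w s := fun s => le_max_right _ _
  have hfhw : ∀ s, f s ≤ h s + w s := fun s => by
    have := le_max_left (f s - h s) 0; simp only [hw_def]; linarith
  have hv_cont : ContinuousOn v (Icc 0 T) :=
    hw_cont.rpow_const (fun x _ => Or.inr hq0.le)
  have hv0 : ∀ s, 0 ≤ v s := fun s => Real.rpow_nonneg (hw0 s) _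
  have hgq_cont : ContinuousOn (fun s => g s ^ q) (Icc 0 T) :=
    hg.rpow_const (fun x _ => Or.inr hq0.le)
  have hgq0 : ∀ s ∈ Icc (0:ℝ) T, 0 ≤ g s ^ q := fun s hs => Real.rpow_nonneg (hg0 s hs) _
  have hhq_cont : ContinuousOn (fun s => h s ^ q) (Icc 0 T) :=
    hh.rpow_const (fun x _ => Or.inr hq0.le)
  set Ψ : ℝ → ℝ := fun u => ∫ s in (0:ℝ)..u, h s ^ q * g s ^ q with hΨ_def
  have hΨint : ContinuousOn (fun s => h s ^ q * g s ^ q) (Icc 0 T) := hhq_cont.mul hgq_cont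
  have hΨint0 : ∀ s ∈ Icc (0:ℝ) T, 0 ≤ h s ^ q * g s ^ q := fun s hs =>
    mul_nonneg (Real.rpow_nonneg (hh0 s hs) _) (hgq0 s hs)
  -- monotone primitives of nonnegative continuous integrands
  have hmono : ∀ (c : ℝ → ℝ), ContinuousOn c (Icc 0 T) → (∀ s ∈ Icc (0:ℝ) T, 0 ≤ c s) →
      ∀ u u' : ℝ, 0 ≤ u → u ≤ u' → u' ≤ T →
      (∫ s in (0:ℝ)..u, c s) ≤ ∫ s in (0:ℝ)..u', c s := by
    intro c hc hc0 u u' hu huu' huT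
    have hi1 : IntervalIntegrable c volume 0 u :=
      (hc.mono (Icc_subset_Icc le_rfl (huu'.trans huT))).intervalIntegrable_of_Icc hu
    have hi2 : IntervalIntegrable c volume u u' := by
      apply ContinuousOn.intervalIntegrable_of_Icc huu'
      exact hc.mono (Icc_subset_Icc hu huT)
    have hsplit := intervalIntegral.integral_add_adjacent_intervals hi1 hi2
    have hpos : 0 ≤ ∫ s in u..u', c s :=
      intervalIntegral.integral_nonneg huu'
        (fun s hs => hc0 s ⟨hu.trans hs.1, hs.2.trans huT⟩)
    linarith [hsplit]
  have hΨ0 : ∀ u, 0 ≤ u → u ≤ T → 0 ≤ Ψ u := fun u hu huT =>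
    intervalIntegral.integral_nonneg hu (fun s hs => hΨint0 s ⟨hs.1, hs.2.trans huT⟩)
  -- the key integral inequality for v
  have key : ∀ t ∈ Icc (0:ℝ) T, v t ≤ a * Ψ t + a * ∫ s in (0:ℝ)..t, g s ^ q * v s := by
    intro t ht
    rcases eq_or_lt_of_le ht.1 with h0 | ht0
    · -- t = 0
      have hf0' := hfh 0 (left_mem_Icc.2 hT.le)
      rw [intervalIntegral.integral_same] at hf0'
      have hw00 : w 0 = 0 := by
        simp only [hw_def]
        rw [max_eq_right]; linarith
      simp only [← h0, hv_def, hΨ_def, hw00, intervalIntegral.integral_same]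
      rw [Real.zero_rpow hq0.ne']
      simp
    · -- t > 0
      have htT := ht.2
      have hIccsub : Icc (0:ℝ) t ⊆ Icc 0 T := Icc_subset_Icc le_rfl htT
      -- kernel integrability
      have kEk : IntervalIntegrable (fun s => (t - s) ^ (-α)) volume 0 t := by
        have h1 : IntervalIntegrable (fun x : ℝ => x ^ (-α)) volume 0 t :=
          intervalIntegrable_rpow' (by linarith : (-1:ℝ) < -α)
        have h2 := h1.comp_sub_left t
        simp only [sub_self, sub_zero] at h2
        exact h2.symm
      have kint : ∀ φ : ℝ → ℝ, ContinuousOn φ (Icc 0 T) →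
          IntervalIntegrable (fun s => (t - s) ^ (-α) * φ s) volume 0 t := by
        intro φ hφ
        apply kEk.mul_continuousOn
        rw [uIcc_of_le ht0.le]
        exact hφ.mono hIccsub
      have hknn : ∀ s ∈ Icc (0:ℝ) t, 0 ≤ (t - s) ^ (-α) := fun s hs =>
        Real.rpow_nonneg (by linarith [hs.2]) _
      -- step A : bound f t - h t by the two integrals
      set X : ℝ := ∫ s in (0:ℝ)..t, (t - s) ^ (-α) * (g s * h s) with hX_def
      set Y : ℝ := ∫ s in (0:ℝ)..t, (t - s) ^ (-α) * (g s * w s) with hY_def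
      have hX0 : 0 ≤ X := intervalIntegral.integral_nonneg ht0.le (fun s hs =>
        mul_nonneg (hknn s hs) (mul_nonneg (hg0 s (hIccsub hs)) (hh0 s (hIccsub hs))))
      have hY0 : 0 ≤ Y := intervalIntegral.integral_nonneg ht0.le (fun s hs =>
        mul_nonneg (hknn s hs) (mul_nonneg (hg0 s (hIccsub hs)) (hw0 s)))
      have hwXY : w t ≤ X + Y := by
        have hmono_int : (∫ s in (0:ℝ)..t, (t - s) ^ (-α) * g s * f s) ≤
            ∫ s in (0:ℝ)..t, (t - s) ^ (-α) * (g s * (h s + w s)) := by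
          apply intervalIntegral.integral_mono_on ht0.le ?_ ?_ ?_
          · have := kint (fun s => g s * f s) (hg.mul hf)
            simpa [mul_assoc] using this
          · exact kint (fun s => g s * (h s + w s)) (hg.mul (hh.add hw_cont))
          · intro s hs
            rw [mul_assoc]
            apply mul_le_mul_of_nonneg_left ?_ (hknn s hs)
            apply mul_le_mul_of_nonneg_left (hfhw s) (hg0 s (hIccsub hs))
        have hsplit : (∫ s in (0:ℝ)..t, (t - s) ^ (-α) * (g s * (h s + w s))) = X + Y := by
          rw [hX_def, hY_def, ← intervalIntegral.integral_add
            (kint (fun s => g s * h s) (hg.mul hh))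
            (kint (fun s => g s * w s) (hg.mul hw_cont))]
          apply intervalIntegral.integral_congr
          intro s _
          ring
        have hft := hfh t ht
        rw [hsplit] at hmono_int
        have : f t - h t ≤ X + Y := by linarith
        simp only [hw_def]
        exact max_le this (by linarith)
      -- Hölder bounds
      have hXb : X ≤ K * (∫ s in (0:ℝ)..t, (g s * h s) ^ q) ^ (1 / q) :=
        holder_step hT hα0 hpq hpα (hg.mul hh)
          (fun s hs => mul_nonneg (hg0 s hs) (hh0 s hs)) ht0 htT
      have hYb : Y ≤ K * (∫ s in (0:ℝ)..t, (g s * w s) ^ q) ^ (1 / q) :=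
        holder_step hT hα0 hpq hpα (hg.mul hw_cont)
          (fun s hs => mul_nonneg (hg0 s hs) (hw0 s)) ht0 htT
      set Z1 : ℝ := ∫ s in (0:ℝ)..t, (g s * h s) ^ q with hZ1_def
      set Z2 : ℝ := ∫ s in (0:ℝ)..t, (g s * w s) ^ q with hZ2_def
      have hZ10 : 0 ≤ Z1 := intervalIntegral.integral_nonneg ht0.le (fun s hs =>
        Real.rpow_nonneg (mul_nonneg (hg0 s (hIccsub hs)) (hh0 s (hIccsub hs))) _)
      have hZ20 : 0 ≤ Z2 := intervalIntegral.integral_nonneg ht0.le (fun s hs =>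
        Real.rpow_nonneg (mul_nonneg (hg0 s (hIccsub hs)) (hw0 s)) _)
      -- rise to power q
      have hvt : v t ≤ 2 ^ q * ((K * Z1 ^ (1 / q)) ^ q + (K * Z2 ^ (1 / q)) ^ q) := by
        have h1 : w t ≤ K * Z1 ^ (1 / q) + K * Z2 ^ (1 / q) := by
          calc w t ≤ X + Y := hwXY
            _ ≤ K * Z1 ^ (1 / q) + K * Z2 ^ (1 / q) := add_le_add hXb hYb
        have h2 : v t ≤ (K * Z1 ^ (1 / q) + K * Z2 ^ (1 / q)) ^ q :=
          Real.rpow_le_rpow (hw0 t) h1 hq0.le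
        refine h2.trans (add_rpow_le_main ?_ ?_ hq0.le)
        · exact mul_nonneg hK0 (Real.rpow_nonneg hZ10 _)
        · exact mul_nonneg hK0 (Real.rpow_nonneg hZ20 _)
      have hpow : ∀ Z : ℝ, 0 ≤ Z → (K * Z ^ (1 / q)) ^ q = K ^ q * Z := by
        intro Z hZ
        rw [Real.mul_rpow hK0 (Real.rpow_nonneg hZ _), ← Real.rpow_mul hZ,
          one_div_mul_cancel hq0.ne', Real.rpow_one]
      rw [hpow Z1 hZ10, hpow Z2 hZ20] at hvt
      -- identify Z1 with Ψ t and Z2 with the v-integral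
      have hZ1eq : Z1 = Ψ t := by
        apply intervalIntegral.integral_congr
        intro s hs
        rw [uIcc_of_le ht0.le] at hs
        show (g s * h s) ^ q = h s ^ q * g s ^ q
        rw [Real.mul_rpow (hg0 s (hIccsub hs)) (hh0 s (hIccsub hs)), mul_comm]
      have hZ2eq : Z2 = ∫ s in (0:ℝ)..t, g s ^ q * v s := by
        apply intervalIntegral.integral_congr
        intro s hs
        rw [uIcc_of_le ht0.le] at hs
        show (g s * w s) ^ q = g s ^ q * v s
        rw [Real.mul_rpow (hg0 s (hIccsub hs)) (hw0 s)]
      rw [hZ1eq, hZ2eq] at hvt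
      calc v t ≤ 2 ^ q * (K ^ q * Ψ t + K ^ q * ∫ s in (0:ℝ)..t, g s ^ q * v s) := hvt
        _ = a * Ψ t + a * ∫ s in (0:ℝ)..t, g s ^ q * v s := by rw [ha_def]; ring
  -- Gronwall on [0, t₀]
  intro t₀ ht₀
  have ht₀T := ht₀.2
  have hIccsub₀ : Icc (0:ℝ) t₀ ⊆ Icc 0 T := Icc_subset_Icc le_rfl ht₀T
  have hA0 : 0 ≤ a * Ψ t₀ := mul_nonneg ha0 (hΨ0 t₀ ht₀.1.le ht₀T)
  have hgron := gronwall_const (T := t₀) (A := a * Ψ t₀) (b := a) ht₀.1 hA0 ha0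
    (hv_cont.mono hIccsub₀) (hgq_cont.mono hIccsub₀)
    (fun s hs => hgq0 s (hIccsub₀ hs))
    (fun u hu => by
      have hk := key u (hIccsub₀ hu)
      have hΨmono : Ψ u ≤ Ψ t₀ := hmono _ hΨint hΨint0 u t₀ hu.1 hu.2 ht₀T
      nlinarith)
    t₀ (right_mem_Icc.2 ht₀.1.le)
  set G : ℝ := ∫ s in (0:ℝ)..T, g s ^ q with hG_def
  have hG0 : 0 ≤ G := intervalIntegral.integral_nonneg hT.le hgq0
  have hGmono : (∫ s in (0:ℝ)..t₀, g s ^ q) ≤ G :=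
    hmono _ hgq_cont hgq0 t₀ T ht₀.1.le ht₀T le_rfl
  have hvt₀ : v t₀ ≤ a * Ψ t₀ * Real.exp (a * G) := by
    refine hgron.trans ?_
    apply mul_le_mul_of_nonneg_left ?_ hA0
    exact Real.exp_le_exp.2 (mul_le_mul_of_nonneg_left hGmono ha0)
  -- take q-th root
  have hΨt₀0 : 0 ≤ Ψ t₀ := hΨ0 t₀ ht₀.1.le ht₀T
  have hwt₀ : w t₀ ≤ (a * Ψ t₀ * Real.exp (a * G)) ^ (1 / q) := by
    have h1 : (v t₀) ^ (1 / q) ≤ (a * Ψ t₀ * Real.exp (a * G)) ^ (1 / q) :=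
      Real.rpow_le_rpow (hv0 t₀) hvt₀ (by positivity)
    have h2 : (v t₀) ^ (1 / q) = w t₀ := by
      rw [hv_def, ← Real.rpow_mul (hw0 t₀)]
      rw [mul_one_div_cancel hq0.ne', Real.rpow_one]
    rw [← h2]; exact h1
  have hrhs : (a * Ψ t₀ * Real.exp (a * G)) ^ (1 / q) ≤
      C * Real.exp (C * G) * Ψ t₀ ^ (1 / q) := by
    rw [Real.mul_rpow (mul_nonneg ha0 hΨt₀0) (Real.exp_pos _).le,
      Real.mul_rpow ha0 hΨt₀0, ← Real.exp_mul]
    have he1 : Real.exp (a * G * (1 / q)) ≤ Real.exp (C * G) := by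
      apply Real.exp_le_exp.2
      have : a * G * (1 / q) = (a / q) * G := by ring
      rw [this]
      exact mul_le_mul_of_nonneg_right hC2 hG0
    calc a ^ (1 / q) * Ψ t₀ ^ (1 / q) * Real.exp (a * G * (1 / q))
        ≤ C * Ψ t₀ ^ (1 / q) * Real.exp (C * G) := by
          apply mul_le_mul ?_ he1 (Real.exp_pos _).le ?_
          · exact mul_le_mul_of_nonneg_right hC1 (Real.rpow_nonneg hΨt₀0 _)
          · exact mul_nonneg hC0.le (Real.rpow_nonneg hΨt₀0 _)
      _ = C * Real.exp (C * G) * Ψ t₀ ^ (1 / q) := by ring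
  have := hfhw t₀
  have hfinal : w t₀ ≤ C * Real.exp (C * G) * Ψ t₀ ^ (1 / q) := hwt₀.trans hrhs
  simp only [hΨ_def] at hfinal
  linarith
end

section
/- Let f : [s,t] → [1,∞) be absolutely continuous with f(t) = 1, let g : [s,t] → [0,∞) be continuous, let β ∈ (0,1), C_β := 2(1−β)^{β−1}, μ₁ ≥ 0, and suppose there is a continuous function L : [s,t] → [0,∞) such that f'(r) ≥ −C_β·μ₁·g(r)·L(r)^{1−β}·f(r)^{β} for a.e. r ∈ [s,t]. Then f(s) ≤ [1 + 2μ₁(1−β)^{β}·∫_s^t g(r)·L(r)^{1−β} dr]^{1/(1−β)}. -/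
open Real MeasureTheory Set

/-- A Bernoulli-type differential inequality integrated backwards in time. -/
theorem bernoulli_backward_inequality (s t β μ1 : ℝ) (hst : s < t)
    (hβ : β ∈ Ioo (0:ℝ) 1) (hμ : 0 ≤ μ1)
    (f f' g L : ℝ → ℝ)
    (hf1 : ∀ r ∈ Icc s t, 1 ≤ f r) (hft : f t = 1)
    (hg : ContinuousOn g (Icc s t)) (hg0 : ∀ r ∈ Icc s t, 0 ≤ g r)
    (hL : ContinuousOn L (Icc s t)) (hL0 : ∀ r ∈ Icc s t, 0 ≤ L r)
    (hf : ContinuousOn f (Icc s t))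
    (hderiv : ∀ r ∈ Icc s t, HasDerivAt f (f' r) r)
    (hint : IntervalIntegrable f' volume s t)
    (hineq : ∀ r ∈ Icc s t,
      -(2 * (1 - β) ^ (β - 1)) * μ1 * g r * (L r) ^ (1 - β) * (f r) ^ β ≤ f' r) :
    f s ≤ (1 + 2 * μ1 * (1 - β) ^ β * ∫ r in s..t, g r * (L r) ^ (1 - β)) ^ (1 / (1 - β)) := by
  obtain ⟨hβ0, hβ1⟩ := hβ
  have h1β : (0:ℝ) < 1 - β := by linarith
  have hfpos : ∀ r ∈ Icc s t, 0 < f r := fun r hr => lt_of_lt_of_le one_pos (hf1 r hr)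
  set h : ℝ → ℝ := fun r => f r ^ (1 - β) with hh
  set h' : ℝ → ℝ := fun r => f' r * ((1 - β) * f r ^ (-β)) with hh'
  have hderivh : ∀ r ∈ Icc s t, HasDerivAt h (h' r) r := by
    intro r hr
    have := (hderiv r hr).rpow_const (p := 1 - β) (Or.inl (ne_of_gt (hfpos r hr)))
    have he : (1:ℝ) - β - 1 = -β := by ring
    rw [he] at this
    simpa [hh, hh', mul_comm, mul_assoc, mul_left_comm] using this
  -- integrability of h'
  have hinth' : IntervalIntegrable h' volume s t := by
    apply hint.mul_continuousOn
    rw [uIcc_of_le hst.le]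
    exact (hf.rpow_const (fun x hx => Or.inl (ne_of_gt (hfpos x hx)))).const_smul (1 - β)
  have hFTC : ∫ r in s..t, h' r = h t - h s := by
    apply intervalIntegral.integral_eq_sub_of_hasDerivAt
    · intro x hx
      exact hderivh x (by rwa [uIcc_of_le hst.le] at hx)
    · exact hinth'
  have hht : h t = 1 := by simp [hh, hft]
  -- pointwise lower bound
  set lo : ℝ → ℝ := fun r => -((1 - β) * (2 * (1 - β) ^ (β - 1)) * μ1 * (g r * L r ^ (1 - β)))
    with hlo
  have hle : ∀ r ∈ Icc s t, lo r ≤ h' r := by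
    intro r hr
    have hfr := hfpos r hr
    have hcancel : f r ^ β * f r ^ (-β) = 1 := by
      rw [← Real.rpow_add hfr]; norm_num
    have hmulpos : 0 ≤ (1 - β) * f r ^ (-β) :=
      mul_nonneg h1β.le (Real.rpow_nonneg hfr.le _)
    have hkey := mul_le_mul_of_nonneg_right (hineq r hr) hmulpos
    have heq : -(2 * (1 - β) ^ (β - 1)) * μ1 * g r * L r ^ (1 - β) * f r ^ β *
        ((1 - β) * f r ^ (-β)) = lo r := by
      calc -(2 * (1 - β) ^ (β - 1)) * μ1 * g r * L r ^ (1 - β) * f r ^ β *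
            ((1 - β) * f r ^ (-β))
          = -((1 - β) * (2 * (1 - β) ^ (β - 1)) * μ1 * (g r * L r ^ (1 - β))) *
            (f r ^ β * f r ^ (-β)) := by ring
        _ = lo r := by rw [hcancel, hlo]; ring
    calc lo r = _ := heq.symm
      _ ≤ f' r * ((1 - β) * f r ^ (-β)) := hkey
  have hintlo : IntervalIntegrable lo volume s t := by
    apply ContinuousOn.intervalIntegrable
    rw [uIcc_of_le hst.le]
    exact (continuousOn_const.mul (hg.mul (hL.rpow_const (fun x hx => Or.inr h1β.le)))).neg
  have hmono : ∫ r in s..t, lo r ≤ ∫ r in s..t, h' r :=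
    intervalIntegral.integral_mono_on hst.le hintlo hinth' hle
  have hloint : ∫ r in s..t, lo r
      = -((1 - β) * (2 * (1 - β) ^ (β - 1)) * μ1) * ∫ r in s..t, g r * L r ^ (1 - β) := by
    rw [← intervalIntegral.integral_const_mul]
    apply intervalIntegral.integral_congr
    intro x hx
    simp only [hlo]; ring
  have hcoef : (1 - β) * (2 * (1 - β) ^ (β - 1)) = 2 * (1 - β) ^ β := by
    have hr1 : (1 - β) ^ (1:ℝ) * (1 - β) ^ (β - 1) = (1 - β) ^ β := by
      rw [← Real.rpow_add h1β]; norm_num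
    rw [Real.rpow_one] at hr1
    calc (1 - β) * (2 * (1 - β) ^ (β - 1)) = 2 * ((1 - β) * (1 - β) ^ (β - 1)) := by ring
      _ = 2 * (1 - β) ^ β := by rw [hr1]
  -- conclude bound on h s
  have hhs : h s = 1 - ∫ r in s..t, h' r := by rw [← hht]; linarith [hFTC]
  have hsbound : h s ≤ 1 + 2 * μ1 * (1 - β) ^ β * ∫ r in s..t, g r * (L r) ^ (1 - β) := by
    rw [hloint] at hmono
    have hc2 : (1 - β) * (2 * (1 - β) ^ (β - 1)) * μ1 * (∫ r in s..t, g r * L r ^ (1 - β))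
        = 2 * μ1 * (1 - β) ^ β * ∫ r in s..t, g r * L r ^ (1 - β) := by
      rw [hcoef]; ring
    rw [hhs]
    nlinarith [hmono, hc2]
  have hspos : 0 < f s := hfpos s ⟨le_refl s, hst.le⟩
  have hfs : f s = h s ^ (1 / (1 - β)) := by
    show f s = (f s ^ (1 - β)) ^ (1 / (1 - β))
    rw [← Real.rpow_mul hspos.le]
    have : (1 - β) * (1 / (1 - β)) = 1 := by field_simp
    rw [this, Real.rpow_one]
  rw [hfs]
  exact Real.rpow_le_rpow (Real.rpow_nonneg hspos.le _) hsbound (by positivity)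
end

section
/- If u, p are smooth solutions of the incompressible Navier–Stokes equations (so that ∇p(x) = ∫_{ℝ^d}[u_i(x−z)−u_i(x)][u_j(x−z)−u_j(x)]∂_i∂_j∇φ(z)dz with φ the fundamental solution of the Laplacian), then for every t, ‖∇p(t,·)‖_{L^∞} ≤ C_d·‖∇u(t,·)‖_{L^∞}·‖u(t,·)‖_{L^∞}, for a constant C_d depending only on the dimension d ≥ 3. -/
open Real MeasureTheory Set

open Metric

lemma abs_coord_le_norm {d : ℕ} (v : EuclideanSpace ℝ (Fin d)) (i : Fin d) : |v i| ≤ ‖v‖ := by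
  rw [EuclideanSpace.norm_eq]
  have h1 : |v i| = √(‖v i‖ ^ 2) := by
    rw [Real.sqrt_sq_eq_abs]; simp [Real.norm_eq_abs]
  rw [h1]
  exact Real.sqrt_le_sqrt (Finset.single_le_sum (fun j _ => sq_nonneg ‖v j‖) (Finset.mem_univ i))

lemma norm_le_card_mul {d : ℕ} (v : EuclideanSpace ℝ (Fin d)) {M : ℝ} (hM : 0 ≤ M)
    (h : ∀ i, |v i| ≤ M) : ‖v‖ ≤ d * M := by
  rw [EuclideanSpace.norm_eq]
  have h2 : √((d * M) ^ 2) = d * M := Real.sqrt_sq (by positivity)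
  rw [← h2]
  apply Real.sqrt_le_sqrt
  calc ∑ i, ‖v i‖ ^ 2 ≤ ∑ _i : Fin d, M ^ 2 := by
        apply Finset.sum_le_sum
        intro i _
        have := h i
        have h3 : ‖v i‖ = |v i| := Real.norm_eq_abs _
        nlinarith [abs_nonneg (v i)]
    _ = d * M ^ 2 := by simp [Finset.sum_const, nsmul_eq_mul]
    _ ≤ (d * M) ^ 2 := by
        have : (d : ℝ) ≤ (d : ℝ) ^ 2 := by
          rcases Nat.eq_zero_or_pos d with h | h
          · simp [h]
          · have : (1:ℝ) ≤ d := by exact_mod_cast h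
            nlinarith
        nlinarith [sq_nonneg M]


lemma kernel_bound (d : ℕ) (hd : 3 ≤ d) :
    ∃ K : ℝ, 0 < K ∧ ∀ z : EuclideanSpace ℝ (Fin d), z ≠ 0 →
      ‖iteratedFDeriv ℝ 3 (fun w : EuclideanSpace ℝ (Fin d) => ‖w‖ ^ ((2:ℝ) - d)) z‖ ≤
        K * ‖z‖ ^ (-(d:ℝ) - 1) := by
  set E := EuclideanSpace ℝ (Fin d)
  set α : ℝ := (2:ℝ) - d with hα
  set f : E → ℝ := fun w => ‖w‖ ^ α with hf
  have hop : IsOpen ({0}ᶜ : Set E) := isOpen_compl_singleton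
  have hu : UniqueDiffOn ℝ ({0}ᶜ : Set E) := hop.uniqueDiffOn
  have hcd : ContDiffOn ℝ ((3:ℕ) : WithTop ℕ∞) f ({0}ᶜ : Set E) := by
    intro z hz
    have hz0 : z ≠ 0 := hz
    exact ((contDiffAt_norm ℝ hz0).rpow_const_of_ne
      (norm_ne_zero_iff.2 hz0)).contDiffWithinAt
  have hco : ContinuousOn (fun w : E => ‖iteratedFDeriv ℝ 3 f w‖) ({0}ᶜ : Set E) := by
    apply ContinuousOn.norm
    exact (hcd.continuousOn_iteratedFDerivWithin le_rfl hu).congr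
      ((iteratedFDerivWithin_of_isOpen 3 hop).symm)
  have hsub : (sphere (0:E) 1 : Set E) ⊆ ({0}ᶜ : Set E) := by
    intro w hw
    have : ‖w‖ = 1 := by simpa using hw
    simp only [mem_compl_iff, mem_singleton_iff]
    intro h; rw [h] at this; simp at this
  obtain ⟨C, hC⟩ := (isCompact_sphere (0:E) 1).exists_bound_of_continuousOn (hco.mono hsub)
  refine ⟨max C 1, lt_of_lt_of_le one_pos (le_max_right _ _), ?_⟩
  intro z hz
  set c : ℝ := ‖z‖ with hc
  have hcpos : 0 < c := norm_pos_iff.2 hz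
  set w : E := c⁻¹ • z with hwdef
  have hw1 : ‖w‖ = 1 := by
    rw [hwdef, norm_smul, Real.norm_eq_abs, abs_of_pos (inv_pos.2 hcpos)]
    field_simp
    exact hc.symm
  have hwne : w ≠ 0 := by
    intro h; rw [h] at hw1; simp at hw1
  set g : E →L[ℝ] E := c • ContinuousLinearMap.id ℝ E with hg
  have hgw : g w = z := by
    simp only [hg, hwdef, ContinuousLinearMap.smul_apply, ContinuousLinearMap.id_apply,
      smul_smul]
    rw [mul_inv_cancel₀ hcpos.ne', one_smul]
  have hpre : ⇑g ⁻¹' ({0}ᶜ : Set E) = ({0}ᶜ : Set E) := by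
    ext x
    simp only [mem_preimage, mem_compl_iff, mem_singleton_iff, hg,
      ContinuousLinearMap.smul_apply, ContinuousLinearMap.id_apply, smul_eq_zero]
    constructor
    · intro h h'; exact h (Or.inr h')
    · intro h h'; rcases h' with h' | h'
      · exact hcpos.ne' h'
      · exact h h'
  have key := ContinuousLinearMap.iteratedFDerivWithin_comp_right g hcd hu
    (by rw [hpre]; exact hu) (x := w) (by rw [hgw]; exact hz) (i := 3) le_rfl
  rw [hpre] at key
  have hfg : f ∘ ⇑g = (c ^ α) • f := by
    funext x
    simp only [Function.comp_apply, hf, Pi.smul_apply, smul_eq_mul, hg,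
      ContinuousLinearMap.smul_apply, ContinuousLinearMap.id_apply]
    rw [norm_smul, Real.norm_eq_abs, abs_of_pos hcpos, Real.mul_rpow hcpos.le (norm_nonneg x)]
  rw [hfg, iteratedFDerivWithin_const_smul_apply (hcd w hwne) hu hwne, hgw] at key
  -- key : c^α • T_w = T_z.compContinuousLinearMap (fun _ => g)
  have hzopen : iteratedFDeriv ℝ 3 f z = iteratedFDerivWithin ℝ 3 f ({0}ᶜ : Set E) z :=
    ((iteratedFDerivWithin_of_isOpen 3 hop) hz).symm
  rw [hzopen]
  have hTw : ‖iteratedFDerivWithin ℝ 3 f ({0}ᶜ : Set E) w‖ ≤ C := by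
    have h1 := (iteratedFDerivWithin_of_isOpen (𝕜 := ℝ) (f := f) 3 hop) (hwne : w ∈ ({0}ᶜ : Set E))
    rw [h1]
    have := hC w (by simpa [mem_sphere_iff_norm] using hw1)
    simpa using this
  apply ContinuousMultilinearMap.opNorm_le_bound
  · positivity
  intro m
  have happ := congrArg (fun T => T m) key
  simp only [ContinuousMultilinearMap.smul_apply,
    ContinuousMultilinearMap.compContinuousLinearMap_apply] at happ
  have happ2 : c ^ α * iteratedFDerivWithin ℝ 3 f ({0}ᶜ : Set E) w m =
      c ^ (3:ℕ) * iteratedFDerivWithin ℝ 3 f ({0}ᶜ : Set E) z m := by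
    rw [smul_eq_mul] at happ
    rw [happ]
    have h' : (fun i : Fin 3 => g (m i)) = fun i : Fin 3 => c • (m i) := by
      funext i; simp [hg]
    rw [h', ContinuousMultilinearMap.map_smul_univ]
    simp [Finset.prod_const]
  have hTz : iteratedFDerivWithin ℝ 3 f ({0}ᶜ : Set E) z m =
      (c ^ α / c ^ (3:ℕ)) * iteratedFDerivWithin ℝ 3 f ({0}ᶜ : Set E) w m := by
    field_simp
    linarith [happ2]
  rw [hTz]
  have hpow : c ^ α / c ^ (3:ℕ) = c ^ (-(d:ℝ) - 1) := by
    rw [← Real.rpow_natCast c 3, ← Real.rpow_sub hcpos]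
    norm_num [hα]
    ring_nf
  rw [hpow]
  have hC0 : 0 ≤ C := le_trans (norm_nonneg _) (hC w (by simpa [mem_sphere_iff_norm] using hw1))
  have he : (0:ℝ) ≤ c ^ (-(d:ℝ) - 1) := Real.rpow_nonneg hcpos.le _
  calc ‖c ^ (-(d:ℝ) - 1) * iteratedFDerivWithin ℝ 3 f ({0}ᶜ : Set E) w m‖
      = c ^ (-(d:ℝ) - 1) * ‖iteratedFDerivWithin ℝ 3 f ({0}ᶜ : Set E) w m‖ := by
        rw [norm_mul, Real.norm_eq_abs (c ^ (-(d:ℝ) - 1)), abs_of_nonneg he]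
    _ ≤ c ^ (-(d:ℝ) - 1) * ((max C 1) * ∏ i : Fin 3, ‖m i‖) := by
        apply mul_le_mul_of_nonneg_left _ he
        calc ‖iteratedFDerivWithin ℝ 3 f ({0}ᶜ : Set E) w m‖
            ≤ ‖iteratedFDerivWithin ℝ 3 f ({0}ᶜ : Set E) w‖ * ∏ i : Fin 3, ‖m i‖ :=
              ContinuousMultilinearMap.le_opNorm _ m
          _ ≤ (max C 1) * ∏ i : Fin 3, ‖m i‖ := by
              apply mul_le_mul_of_nonneg_right (hTw.trans (le_max_left _ _))
              exact Finset.prod_nonneg fun i _ => norm_nonneg _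
    _ = (max C 1) * c ^ (-(d:ℝ) - 1) * ∏ i : Fin 3, ‖m i‖ := by ring


lemma radial_near (d : ℕ) (hd : 1 ≤ d) (s : ℝ) (h1 : -(d:ℝ) < s) (h2 : s ≤ 0) :
    ∃ C : ℝ, 0 ≤ C ∧ ∀ ρ : ℝ, 0 < ρ →
      IntegrableOn (fun z : EuclideanSpace ℝ (Fin d) => ‖z‖ ^ s) (ball 0 ρ) volume ∧
      ∫ z in ball (0 : EuclideanSpace ℝ (Fin d)) ρ, ‖z‖ ^ s ≤ C * ρ ^ (s + d) := by
  classical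
  set E := EuclideanSpace ℝ (Fin d)
  haveI : Nontrivial E := by
    refine ⟨EuclideanSpace.single ⟨0, hd⟩ 1, 0, fun h => ?_⟩
    have h1 : ‖EuclideanSpace.single (⟨0, hd⟩ : Fin d) (1:ℝ)‖ = 0 := by rw [h]; simp
    rw [EuclideanSpace.norm_single] at h1
    norm_num at h1
  set V : ℝ := (volume (ball (0:E) 1)).toReal with hV
  have hV0 : 0 ≤ V := ENNReal.toReal_nonneg
  set P : ℝ := (2:ℝ)⁻¹ with hP
  have hP0 : (0:ℝ) < P := by norm_num [hP]
  have hP1 : P < 1 := by norm_num [hP]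
  set w : ℝ := P ^ (s + (d:ℝ)) with hw
  have hsd : 0 < s + (d:ℝ) := by linarith
  have hw0 : 0 < w := Real.rpow_pos_of_pos hP0 _
  have hw1 : w < 1 := Real.rpow_lt_one hP0.le hP1 hsd
  have h1w : (0:ℝ) < 1 - w := by linarith
  refine ⟨P ^ s * V * (1 - w)⁻¹, by positivity, ?_⟩
  intro ρ hρ
  set f : E → ℝ := fun z => ‖z‖ ^ s with hfdef
  have hfnn : ∀ z : E, 0 ≤ f z := fun z => Real.rpow_nonneg (norm_nonneg z) s
  have hfabs : ∀ z : E, ‖f z‖ = f z := fun z => by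
    rw [Real.norm_eq_abs, abs_of_nonneg (hfnn z)]
  have hfm : Measurable f := measurable_norm.pow_const s
  set a : ℕ → ℝ := fun n => ρ * P ^ n with ha
  have ha0 : ∀ n, 0 < a n := fun n => by positivity
  have hamono : ∀ {m n : ℕ}, m ≤ n → a n ≤ a m := by
    intro m n hmn
    exact mul_le_mul_of_nonneg_left (pow_le_pow_of_le_one hP0.le hP1.le hmn) hρ.le
  set A : ℕ → Set E := fun n => (fun z : E => ‖z‖) ⁻¹' Ico (a (n+1)) (a n) with hA
  have hmeasA : ∀ n, MeasurableSet (A n) := fun n => measurable_norm measurableSet_Ico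
  have hmemA : ∀ {n z}, z ∈ A n ↔ a (n+1) ≤ ‖z‖ ∧ ‖z‖ < a n := fun {n z} => Iff.rfl
  have hdisj : Pairwise (Function.onFun Disjoint A) := by
    have key : ∀ m n, m < n → Disjoint (A m) (A n) := by
      intro m n hmn
      rw [Set.disjoint_left]
      intro z hzm hzn
      have h1 := (hmemA.1 hzm).1
      have h2 := (hmemA.1 hzn).2
      have : a n ≤ a (m+1) := hamono hmn
      linarith
    intro m n hmn
    rcases hmn.lt_or_gt with h | h
    · exact key m n h
    · exact (key n m h).symm
  have hAsub : ∀ n, A n ⊆ ball (0:E) (a n) := by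
    intro n z hz
    rw [mem_ball, dist_zero_right]
    exact (hmemA.1 hz).2
  have hμA : ∀ n, volume (A n) ≤ ENNReal.ofReal ((a n) ^ d) * volume (ball (0:E) 1) := by
    intro n
    calc volume (A n) ≤ volume (ball (0:E) (a n)) := measure_mono (hAsub n)
      _ = ENNReal.ofReal ((a n) ^ d) * volume (ball (0:E) 1) := by
          rw [Measure.addHaar_ball volume 0 (ha0 n).le, finrank_euclideanSpace_fin]
  have hμAreal : ∀ n, (volume (A n)).toReal ≤ (a n) ^ d * V := by
    intro n
    have hfin : ENNReal.ofReal ((a n) ^ d) * volume (ball (0:E) 1) ≠ ⊤ :=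
      ENNReal.mul_ne_top ENNReal.ofReal_ne_top measure_ball_lt_top.ne
    calc (volume (A n)).toReal ≤ (ENNReal.ofReal ((a n) ^ d) * volume (ball (0:E) 1)).toReal :=
          ENNReal.toReal_mono hfin (hμA n)
      _ = (a n) ^ d * V := by
          rw [ENNReal.toReal_mul, ENNReal.toReal_ofReal (by positivity)]
  have hμAfin : ∀ n, volume (A n) ≠ ⊤ := fun n =>
    ((measure_mono (hAsub n)).trans_lt measure_ball_lt_top).ne
  have hint : ∀ n, IntegrableOn f (A n) volume := by
    intro n
    apply Measure.integrableOn_of_bounded (hμAfin n) hfm.aestronglyMeasurable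
      (M := a (n+1) ^ s)
    filter_upwards [ae_restrict_mem (hmeasA n)] with z hz
    rw [hfabs z]
    exact Real.rpow_le_rpow_of_nonpos (ha0 (n+1)) (hmemA.1 hz).1 h2
  set b : ℕ → ℝ := fun n => a (n+1) ^ s * ((a n) ^ d * V) with hb
  have hIb : ∀ n, ∫ z in A n, f z ≤ b n := by
    intro n
    have hconst : IntegrableOn (fun _ : E => a (n+1) ^ s) (A n) volume := by
      apply integrableOn_const (hμAfin n)
    calc ∫ z in A n, f z ≤ ∫ _z in A n, a (n+1) ^ s := by
          apply setIntegral_mono_on (hint n) hconst (hmeasA n)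
          intro z hz
          exact Real.rpow_le_rpow_of_nonpos (ha0 (n+1)) (hmemA.1 hz).1 h2
      _ = (volume (A n)).toReal * a (n+1) ^ s := by rw [setIntegral_const]; simp [Measure.real]
      _ ≤ ((a n) ^ d * V) * a (n+1) ^ s := by
          apply mul_le_mul_of_nonneg_right (hμAreal n) (Real.rpow_nonneg (ha0 _).le _)
      _ = b n := by rw [hb]; ring
  have hbnn : ∀ n, 0 ≤ b n := by
    intro n; rw [hb]
    have := ha0 n; have := ha0 (n+1); positivity
  have hbgeom : ∀ n, b n = (P ^ s * V * ρ ^ (s + (d:ℝ))) * w ^ n := by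
    intro n
    have hPn : (0:ℝ) < P ^ n := by positivity
    have e1 : a (n+1) ^ s = ρ ^ s * (P ^ s * (P ^ n) ^ s) := by
      simp only [ha]
      rw [pow_succ, show ρ * (P ^ n * P) = ρ * P * P ^ n by ring,
        Real.mul_rpow (by positivity) hPn.le, Real.mul_rpow hρ.le hP0.le]
      ring
    have e2 : ((a n) : ℝ) ^ d = ρ ^ d * (P ^ n) ^ d := by simp only [ha]; rw [mul_pow]
    have e3 : ρ ^ (s + (d:ℝ)) = ρ ^ s * ρ ^ d := by
      rw [Real.rpow_add hρ, Real.rpow_natCast]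
    have e4 : w ^ n = (P ^ n) ^ s * (P ^ n) ^ (d:ℕ) := by
      rw [hw, ← Real.rpow_natCast (P ^ (s + (d:ℝ))) n, ← Real.rpow_natCast P n,
        ← Real.rpow_mul hP0.le, ← Real.rpow_mul hP0.le, ← Real.rpow_natCast (P ^ (n:ℝ)) d,
        ← Real.rpow_mul hP0.le, ← Real.rpow_add hP0]
      ring_nf
    simp only [hb]
    rw [e1, e2, e3, e4]
    ring
  have hbsummable : Summable b := by
    apply Summable.congr (((summable_geometric_of_lt_one hw0.le hw1).mul_left
      (P ^ s * V * ρ ^ (s + (d:ℝ)))))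
    intro n
    rw [hbgeom n]
  have hbtsum : ∑' n, b n = (P ^ s * V * (1 - w)⁻¹) * ρ ^ (s + (d:ℝ)) := by
    calc ∑' n, b n = ∑' n, (P ^ s * V * ρ ^ (s + (d:ℝ))) * w ^ n := by
          congr 1; funext n; exact hbgeom n
      _ = (P ^ s * V * ρ ^ (s + (d:ℝ))) * ∑' n, w ^ n := tsum_mul_left
      _ = (P ^ s * V * ρ ^ (s + (d:ℝ))) * (1 - w)⁻¹ := by
          rw [tsum_geometric_of_lt_one hw0.le hw1]
      _ = _ := by ring
  -- union identity
  have hunion : ball (0:E) ρ \ {0} = ⋃ n, A n := by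
    ext z
    simp only [mem_diff, mem_ball, dist_zero_right, mem_singleton_iff, mem_iUnion]
    constructor
    · rintro ⟨hzρ, hz0⟩
      have hzpos : 0 < ‖z‖ := norm_pos_iff.2 hz0
      have hex : ∃ n, a (n+1) ≤ ‖z‖ := by
        obtain ⟨n, hn⟩ := exists_pow_lt_of_lt_one (div_pos hzpos hρ) hP1
        refine ⟨n, ?_⟩
        have : ρ * P ^ n < ‖z‖ := (lt_div_iff₀' hρ).1 hn
        exact le_trans (hamono (Nat.le_succ n)) this.le
      refine ⟨Nat.find hex, Nat.find_spec hex, ?_⟩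
      rcases Nat.eq_zero_or_pos (Nat.find hex) with h0 | hpos
      · rw [h0]; simpa [ha] using hzρ
      · obtain ⟨m, hm⟩ := Nat.exists_eq_succ_of_ne_zero hpos.ne'
        rw [hm]
        have := Nat.find_min hex (by omega : m < Nat.find hex)
        push_neg at this
        simpa using this
    · rintro ⟨n, hn1, hn2⟩
      constructor
      · calc ‖z‖ < a n := hn2
          _ ≤ a 0 := hamono (Nat.zero_le n)
          _ = ρ := by simp [ha]
      · intro h
        rw [h] at hn1
        simp only [norm_zero] at hn1
        exact absurd hn1 (not_le.2 (ha0 (n+1)))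
  have hintnorm : ∀ n, ∫ z in A n, ‖f z‖ ≤ b n := by
    intro n
    calc ∫ z in A n, ‖f z‖ = ∫ z in A n, f z := by
          congr 1; funext z; exact hfabs z
      _ ≤ b n := hIb n
  have hintnormnn : ∀ n, 0 ≤ ∫ z in A n, ‖f z‖ := fun n =>
    integral_nonneg fun z => norm_nonneg _
  have hsum2 : Summable fun n => ∫ z in A n, ‖f z‖ :=
    Summable.of_nonneg_of_le hintnormnn hintnorm hbsummable
  have hintU : IntegrableOn f (⋃ n, A n) volume :=
    integrableOn_iUnion_of_summable_integral_norm hint hsum2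
  have hint0 : IntegrableOn f ({0} : Set E) volume := by
    rw [IntegrableOn, Measure.restrict_eq_zero.2 (measure_singleton 0)]
    exact integrable_zero_measure
  have hintball : IntegrableOn f (ball (0:E) ρ) volume := by
    have : ball (0:E) ρ ⊆ (⋃ n, A n) ∪ {0} := by
      intro z hz
      by_cases h : z = 0
      · exact Or.inr h
      · exact Or.inl (hunion ▸ ⟨hz, h⟩)
    exact (hintU.union hint0).mono_set this
  refine ⟨hintball, ?_⟩
  have hae : (ball (0:E) ρ : Set E) =ᵐ[volume] (ball (0:E) ρ \ {0} : Set E) := by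
    refine (MeasureTheory.ae_eq_set.2 ⟨?_, ?_⟩)
    · apply measure_mono_null (fun z hz => ?_) (measure_singleton (0:E))
      rcases hz with ⟨h1, h2⟩
      simp only [mem_diff, mem_singleton_iff, not_and, not_not] at h2
      exact h2 h1
    · have hemp : (ball (0:E) ρ \ {0}) \ ball (0:E) ρ = ∅ := by
        ext z; simp only [mem_diff, mem_empty_iff_false, iff_false, not_and, not_not]
        tauto
      rw [hemp]; simp
  calc ∫ z in ball (0:E) ρ, f z = ∫ z in (ball (0:E) ρ \ {0}), f z :=
        setIntegral_congr_set hae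
    _ = ∫ z in (⋃ n, A n), f z := by rw [hunion]
    _ = ∑' n, ∫ z in A n, f z := integral_iUnion hmeasA hdisj (hunion ▸ hintU)
    _ ≤ ∑' n, b n := by
        apply Summable.tsum_le_tsum hIb _ hbsummable
        apply Summable.congr hsum2
        intro n; congr 1; funext z; exact hfabs z
    _ = (P ^ s * V * (1 - w)⁻¹) * ρ ^ (s + (d:ℝ)) := hbtsum


lemma radial_far (d : ℕ) (hd : 1 ≤ d) (s : ℝ) (h1 : s < -(d:ℝ)) :
    ∃ C : ℝ, 0 ≤ C ∧ ∀ ρ : ℝ, 0 < ρ →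
      IntegrableOn (fun z : EuclideanSpace ℝ (Fin d) => ‖z‖ ^ s) (ball 0 ρ)ᶜ volume ∧
      ∫ z in (ball (0 : EuclideanSpace ℝ (Fin d)) ρ)ᶜ, ‖z‖ ^ s ≤ C * ρ ^ (s + d) := by
  classical
  set E := EuclideanSpace ℝ (Fin d)
  haveI : Nontrivial E := by
    refine ⟨EuclideanSpace.single ⟨0, hd⟩ 1, 0, fun h => ?_⟩
    have h1' : ‖EuclideanSpace.single (⟨0, hd⟩ : Fin d) (1:ℝ)‖ = 0 := by rw [h]; simp
    rw [EuclideanSpace.norm_single] at h1'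
    norm_num at h1'
  have h2 : s ≤ 0 := by
    have : (0:ℝ) < d := by exact_mod_cast hd
    linarith
  set V : ℝ := (volume (ball (0:E) 1)).toReal with hV
  have hV0 : 0 ≤ V := ENNReal.toReal_nonneg
  set w : ℝ := (2:ℝ) ^ (s + (d:ℝ)) with hw
  have hsd : s + (d:ℝ) < 0 := by linarith
  have hw0 : 0 < w := Real.rpow_pos_of_pos (by norm_num) _
  have hw1 : w < 1 := Real.rpow_lt_one_of_one_lt_of_neg (by norm_num) hsd
  have h1w : (0:ℝ) < 1 - w := by linarith
  refine ⟨(2:ℝ) ^ (d:ℕ) * V * (1 - w)⁻¹, by positivity, ?_⟩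
  intro ρ hρ
  set f : E → ℝ := fun z => ‖z‖ ^ s with hfdef
  have hfnn : ∀ z : E, 0 ≤ f z := fun z => Real.rpow_nonneg (norm_nonneg z) s
  have hfabs : ∀ z : E, ‖f z‖ = f z := fun z => by
    rw [Real.norm_eq_abs, abs_of_nonneg (hfnn z)]
  have hfm : Measurable f := measurable_norm.pow_const s
  set a : ℕ → ℝ := fun n => ρ * 2 ^ n with ha
  have ha0 : ∀ n, 0 < a n := fun n => by positivity
  have hamono : ∀ {m n : ℕ}, m ≤ n → a m ≤ a n := by
    intro m n hmn
    exact mul_le_mul_of_nonneg_left (pow_le_pow_right₀ (by norm_num) hmn) hρ.le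
  set A : ℕ → Set E := fun n => (fun z : E => ‖z‖) ⁻¹' Ico (a n) (a (n+1)) with hA
  have hmeasA : ∀ n, MeasurableSet (A n) := fun n => measurable_norm measurableSet_Ico
  have hmemA : ∀ {n z}, z ∈ A n ↔ a n ≤ ‖z‖ ∧ ‖z‖ < a (n+1) := fun {n z} => Iff.rfl
  have hdisj : Pairwise (Function.onFun Disjoint A) := by
    have key : ∀ m n, m < n → Disjoint (A m) (A n) := by
      intro m n hmn
      rw [Set.disjoint_left]
      intro z hzm hzn
      have hz1 := (hmemA.1 hzm).2
      have hz2 := (hmemA.1 hzn).1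
      have : a (m+1) ≤ a n := hamono hmn
      linarith
    intro m n hmn
    rcases hmn.lt_or_gt with h | h
    · exact key m n h
    · exact (key n m h).symm
  have hAsub : ∀ n, A n ⊆ ball (0:E) (a (n+1)) := by
    intro n z hz
    rw [mem_ball, dist_zero_right]
    exact (hmemA.1 hz).2
  have hμAreal : ∀ n, (volume (A n)).toReal ≤ (a (n+1)) ^ d * V := by
    intro n
    have hμA : volume (A n) ≤ ENNReal.ofReal ((a (n+1)) ^ d) * volume (ball (0:E) 1) := by
      calc volume (A n) ≤ volume (ball (0:E) (a (n+1))) := measure_mono (hAsub n)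
        _ = ENNReal.ofReal ((a (n+1)) ^ d) * volume (ball (0:E) 1) := by
            rw [Measure.addHaar_ball volume 0 (ha0 (n+1)).le, finrank_euclideanSpace_fin]
    have hfin : ENNReal.ofReal ((a (n+1)) ^ d) * volume (ball (0:E) 1) ≠ ⊤ :=
      ENNReal.mul_ne_top ENNReal.ofReal_ne_top measure_ball_lt_top.ne
    calc (volume (A n)).toReal
        ≤ (ENNReal.ofReal ((a (n+1)) ^ d) * volume (ball (0:E) 1)).toReal :=
          ENNReal.toReal_mono hfin hμA
      _ = (a (n+1)) ^ d * V := by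
          rw [ENNReal.toReal_mul, ENNReal.toReal_ofReal (by positivity)]
  have hμAfin : ∀ n, volume (A n) ≠ ⊤ := fun n =>
    ((measure_mono (hAsub n)).trans_lt measure_ball_lt_top).ne
  have hint : ∀ n, IntegrableOn f (A n) volume := by
    intro n
    apply Measure.integrableOn_of_bounded (hμAfin n) hfm.aestronglyMeasurable
      (M := a n ^ s)
    filter_upwards [ae_restrict_mem (hmeasA n)] with z hz
    rw [hfabs z]
    exact Real.rpow_le_rpow_of_nonpos (ha0 n) (hmemA.1 hz).1 h2
  set b : ℕ → ℝ := fun n => a n ^ s * ((a (n+1)) ^ d * V) with hb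
  have hIb : ∀ n, ∫ z in A n, f z ≤ b n := by
    intro n
    have hconst : IntegrableOn (fun _ : E => a n ^ s) (A n) volume := by
      apply integrableOn_const (hμAfin n)
    calc ∫ z in A n, f z ≤ ∫ _z in A n, a n ^ s := by
          apply setIntegral_mono_on (hint n) hconst (hmeasA n)
          intro z hz
          exact Real.rpow_le_rpow_of_nonpos (ha0 n) (hmemA.1 hz).1 h2
      _ = (volume (A n)).toReal * a n ^ s := by rw [setIntegral_const]; simp [Measure.real]
      _ ≤ ((a (n+1)) ^ d * V) * a n ^ s := by
          apply mul_le_mul_of_nonneg_right (hμAreal n) (Real.rpow_nonneg (ha0 _).le _)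
      _ = b n := by simp only [hb]; ring
  have hbgeom : ∀ n, b n = ((2:ℝ) ^ (d:ℕ) * V * ρ ^ (s + (d:ℝ))) * w ^ n := by
    intro n
    have hPn : (0:ℝ) < (2:ℝ) ^ n := by positivity
    have e1 : a n ^ s = ρ ^ s * ((2:ℝ) ^ n) ^ s := by
      simp only [ha]
      rw [Real.mul_rpow hρ.le hPn.le]
    have e2 : (a (n+1)) ^ d = ρ ^ d * ((2:ℝ) ^ d * ((2:ℝ) ^ n) ^ d) := by
      simp only [ha]
      rw [pow_succ, show ρ * ((2:ℝ) ^ n * 2) = ρ * 2 * 2 ^ n by ring, mul_pow, mul_pow]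
      ring
    have e3 : ρ ^ (s + (d:ℝ)) = ρ ^ s * ρ ^ d := by
      rw [Real.rpow_add hρ, Real.rpow_natCast]
    have e4 : w ^ n = ((2:ℝ) ^ n) ^ s * ((2:ℝ) ^ n) ^ (d:ℕ) := by
      rw [hw, ← Real.rpow_natCast ((2:ℝ) ^ (s + (d:ℝ))) n, ← Real.rpow_natCast (2:ℝ) n,
        ← Real.rpow_mul (by norm_num), ← Real.rpow_mul (by norm_num),
        ← Real.rpow_natCast ((2:ℝ) ^ (n:ℝ)) d, ← Real.rpow_mul (by positivity),
        ← Real.rpow_add (by positivity)]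
      ring_nf
    simp only [hb]
    rw [e1, e2, e3, e4]
    ring
  have hbsummable : Summable b := by
    apply Summable.congr (((summable_geometric_of_lt_one hw0.le hw1).mul_left
      ((2:ℝ) ^ (d:ℕ) * V * ρ ^ (s + (d:ℝ)))))
    intro n
    rw [hbgeom n]
  have hbtsum : ∑' n, b n = ((2:ℝ) ^ (d:ℕ) * V * (1 - w)⁻¹) * ρ ^ (s + (d:ℝ)) := by
    calc ∑' n, b n = ∑' n, ((2:ℝ) ^ (d:ℕ) * V * ρ ^ (s + (d:ℝ))) * w ^ n := by
          congr 1; funext n; exact hbgeom n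
      _ = ((2:ℝ) ^ (d:ℕ) * V * ρ ^ (s + (d:ℝ))) * ∑' n, w ^ n := tsum_mul_left
      _ = ((2:ℝ) ^ (d:ℕ) * V * ρ ^ (s + (d:ℝ))) * (1 - w)⁻¹ := by
          rw [tsum_geometric_of_lt_one hw0.le hw1]
      _ = _ := by ring
  have hunion : (ball (0:E) ρ)ᶜ = ⋃ n, A n := by
    ext z
    simp only [mem_compl_iff, mem_ball, dist_zero_right, not_lt, mem_iUnion]
    constructor
    · intro hzρ
      have hex : ∃ n, ‖z‖ < a (n+1) := by
        obtain ⟨n, hn⟩ := pow_unbounded_of_one_lt (‖z‖ / ρ) (by norm_num : (1:ℝ) < 2)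
        refine ⟨n, ?_⟩
        have : ‖z‖ < ρ * 2 ^ n := by
          rw [div_lt_iff₀ hρ] at hn
          calc ‖z‖ < 2 ^ n * ρ := hn
            _ = ρ * 2 ^ n := by ring
        exact lt_of_lt_of_le this (hamono (Nat.le_succ n))
      refine ⟨Nat.find hex, ?_, Nat.find_spec hex⟩
      rcases Nat.eq_zero_or_pos (Nat.find hex) with h0 | hpos
      · rw [h0]; simpa [ha] using hzρ
      · obtain ⟨m, hm⟩ := Nat.exists_eq_succ_of_ne_zero hpos.ne'
        rw [hm]
        have := Nat.find_min hex (by omega : m < Nat.find hex)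
        push_neg at this
        simpa using this
    · rintro ⟨n, hn1, _⟩
      calc ρ = a 0 := by simp [ha]
        _ ≤ a n := hamono (Nat.zero_le n)
        _ ≤ ‖z‖ := hn1
  have hintnorm : ∀ n, ∫ z in A n, ‖f z‖ ≤ b n := by
    intro n
    calc ∫ z in A n, ‖f z‖ = ∫ z in A n, f z := by
          congr 1; funext z; exact hfabs z
      _ ≤ b n := hIb n
  have hintnormnn : ∀ n, 0 ≤ ∫ z in A n, ‖f z‖ := fun n =>
    integral_nonneg fun z => norm_nonneg _
  have hsum2 : Summable fun n => ∫ z in A n, ‖f z‖ :=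
    Summable.of_nonneg_of_le hintnormnn hintnorm hbsummable
  have hintU : IntegrableOn f (⋃ n, A n) volume :=
    integrableOn_iUnion_of_summable_integral_norm hint hsum2
  refine ⟨hunion ▸ hintU, ?_⟩
  calc ∫ z in (ball (0:E) ρ)ᶜ, f z = ∫ z in (⋃ n, A n), f z := by rw [hunion]
    _ = ∑' n, ∫ z in A n, f z := integral_iUnion hmeasA hdisj (hunion ▸ hintU)
    _ ≤ ∑' n, b n := by
        apply Summable.tsum_le_tsum hIb _ hbsummable
        apply Summable.congr hsum2
        intro n; congr 1; funext z; exact hfabs z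
    _ = ((2:ℝ) ^ (d:ℕ) * V * (1 - w)⁻¹) * ρ ^ (s + (d:ℝ)) := hbtsum

/-- `L^∞` bound on the pressure gradient for Navier–Stokes:
`‖∇p‖_∞ ≤ C_d ‖∇u‖_∞ ‖u‖_∞`, given the kernel representation of `∇p`. -/
theorem pressure_gradient_Linfty_bound (d : ℕ) (hd : 3 ≤ d) :
    ∃ C > 0, ∀ (u gradp : EuclideanSpace ℝ (Fin d) → EuclideanSpace ℝ (Fin d))
      (φ : EuclideanSpace ℝ (Fin d) → ℝ) (U G : ℝ),
      ContDiff ℝ (⊤ : ℕ∞) u →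
      (∀ z, φ z = ‖z‖ ^ ((2:ℝ) - d)) →
      (∀ x k, gradp x k = ∫ z : EuclideanSpace ℝ (Fin d), ∑ i, ∑ j,
          (u (x - z) i - u x i) * (u (x - z) j - u x j) *
            iteratedFDeriv ℝ 3 φ z
              ![EuclideanSpace.single i 1, EuclideanSpace.single j 1,
                EuclideanSpace.single k 1]) →
      (∀ x, ‖u x‖ ≤ U) → (∀ x, ‖fderiv ℝ u x‖ ≤ G) →
      ∀ x, ‖gradp x‖ ≤ C * G * U := by
  classical
  obtain ⟨K, hK0, hKb⟩ := kernel_bound d hd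
  have hd1 : 1 ≤ d := by omega
  have hdr : (3:ℝ) ≤ (d:ℝ) := by exact_mod_cast hd
  obtain ⟨C1, hC10, hC1⟩ := radial_near d hd1 (1 - (d:ℝ)) (by linarith) (by linarith)
  obtain ⟨C2, hC20, hC2⟩ := radial_far d hd1 (-(d:ℝ) - 1) (by linarith)
  refine ⟨(d:ℝ) * ((d:ℝ) ^ 2 * K * ((2*C1 + 2*C2))) + 1, by positivity, ?_⟩
  intro u gradp φ U G hu hφ hgradp hU hG x
  have hφf : φ = fun z : EuclideanSpace ℝ (Fin d) => ‖z‖ ^ ((2:ℝ) - d) := funext hφ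
  subst hφf
  have hU0 : 0 ≤ U := le_trans (norm_nonneg _) (hU 0)
  have hG0 : 0 ≤ G := le_trans (norm_nonneg _) (hG 0)
  by_cases hUG : U = 0 ∨ G = 0
  · -- degenerate case: u (x - z) = u x for all z, integrand vanishes
    have hdiff0 : ∀ z : EuclideanSpace ℝ (Fin d), u (x - z) = u x := by
      rcases hUG with h | h
      · intro z
        have h1 : ∀ y : EuclideanSpace ℝ (Fin d), u y = 0 := fun y =>
          norm_le_zero_iff.1 (le_trans (hU y) (le_of_eq h))
        rw [h1, h1]
      · intro z
        have h2 : ‖u (x - z) - u x‖ ≤ 0 * ‖(x - z) - x‖ :=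
          Convex.norm_image_sub_le_of_norm_fderiv_le
            (fun y _ => (hu.differentiable (by simp)).differentiableAt)
            (fun y _ => le_trans (hG y) (le_of_eq h)) convex_univ (mem_univ x)
            (mem_univ (x - z))
        rw [zero_mul] at h2
        exact sub_eq_zero.1 (norm_le_zero_iff.1 h2)
    have hzero : gradp x = 0 := by
      ext k
      rw [hgradp x k]
      have : ∀ z : EuclideanSpace ℝ (Fin d), (∑ i, ∑ j, (u (x - z) i - u x i) * (u (x - z) j - u x j) *
          iteratedFDeriv ℝ 3 (fun z : EuclideanSpace ℝ (Fin d) => ‖z‖ ^ ((2:ℝ) - d)) z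
            ![EuclideanSpace.single i 1, EuclideanSpace.single j 1,
              EuclideanSpace.single k 1]) = 0 := by
        intro z
        apply Finset.sum_eq_zero
        intro i _
        apply Finset.sum_eq_zero
        intro j _
        rw [hdiff0 z, sub_self, zero_mul, zero_mul]
      simp only [this, integral_zero]
      rfl
    rw [hzero]
    simp only [norm_zero]
    positivity
  · push_neg at hUG
    obtain ⟨hUne, hGne⟩ := hUG
    have hUpos : 0 < U := lt_of_le_of_ne hU0 (Ne.symm hUne)
    have hGpos : 0 < G := lt_of_le_of_ne hG0 (Ne.symm hGne)
    haveI : Nontrivial (EuclideanSpace ℝ (Fin d)) := by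
      refine ⟨EuclideanSpace.single ⟨0, hd1⟩ 1, 0, fun h => ?_⟩
      have h1' : ‖EuclideanSpace.single (⟨0, hd1⟩ : Fin d) (1:ℝ)‖ = 0 := by rw [h]; simp
      rw [EuclideanSpace.norm_single] at h1'
      norm_num at h1'
    set ρ : ℝ := 2 * U / G with hρdef
    have hρ : 0 < ρ := by positivity
    -- difference bound
    have hdiffb : ∀ (z : EuclideanSpace ℝ (Fin d)) (i : Fin d), |u (x - z) i - u x i| ≤ min (2*U) (G * ‖z‖) := by
      intro z i
      have hv : u (x - z) i - u x i = (u (x - z) - u x) i := by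
        rw [PiLp.sub_apply]
      rw [hv]
      have hbase := abs_coord_le_norm (u (x - z) - u x) i
      refine le_min ?_ ?_
      · refine le_trans hbase ?_
        calc ‖u (x - z) - u x‖ ≤ ‖u (x - z)‖ + ‖u x‖ := norm_sub_le _ _
          _ ≤ U + U := add_le_add (hU _) (hU _)
          _ = 2 * U := by ring
      · refine le_trans hbase ?_
        calc ‖u (x - z) - u x‖ ≤ G * ‖(x - z) - x‖ :=
              Convex.norm_image_sub_le_of_norm_fderiv_le
                (fun y _ => (hu.differentiable (by simp)).differentiableAt)
                (fun y _ => hG y) convex_univ (mem_univ x) (mem_univ (x - z))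
          _ = G * ‖z‖ := by rw [show x - z - x = -z by abel, norm_neg]
    set m : EuclideanSpace ℝ (Fin d) → ℝ := fun z => min (2*U) (G * ‖z‖) with hmdef
    have hm0 : ∀ z, 0 ≤ m z := fun z => le_min (by positivity) (by positivity)
    set g : EuclideanSpace ℝ (Fin d) → ℝ := fun z => m z ^ 2 * ‖z‖ ^ (-(d:ℝ) - 1) with hgdef
    have hgnn : ∀ z, 0 ≤ g z := fun z => by
      apply mul_nonneg (sq_nonneg _) (Real.rpow_nonneg (norm_nonneg z) _)
    have hgm : Measurable g := by
      apply Measurable.mul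
      · exact ((continuous_const.min (continuous_const.mul continuous_norm)).measurable).pow_const 2
      · exact measurable_norm.pow_const _
    -- integrability and integral bound on the ball
    obtain ⟨hI1, hB1⟩ := hC1 ρ hρ
    obtain ⟨hI2, hB2⟩ := hC2 ρ hρ
    have hptball : ∀ z : EuclideanSpace ℝ (Fin d), g z ≤ G ^ 2 * ‖z‖ ^ (1 - (d:ℝ)) := by
      intro z
      by_cases hz : z = (0 : EuclideanSpace ℝ (Fin d))
      · rw [hz]
        simp only [hgdef, norm_zero]
        rw [Real.zero_rpow (by intro h; linarith : -(d:ℝ) - 1 ≠ 0),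
          Real.zero_rpow (by intro h; linarith : 1 - (d:ℝ) ≠ 0)]
        simp
      · have hzpos : 0 < ‖z‖ := norm_pos_iff.2 hz
        have h1 : m z ^ 2 ≤ (G * ‖z‖) ^ 2 := by
          apply sq_le_sq' _ (min_le_right _ _)
          have := hm0 z
          nlinarith [hm0 z]
        have h2 : (G * ‖z‖) ^ 2 * ‖z‖ ^ (-(d:ℝ) - 1) = G ^ 2 * ‖z‖ ^ (1 - (d:ℝ)) := by
          rw [mul_pow, mul_assoc, ← Real.rpow_natCast ‖z‖ 2, ← Real.rpow_add hzpos,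
            show ((2:ℕ):ℝ) + (-(d:ℝ) - 1) = 1 - (d:ℝ) by push_cast; ring]
        calc g z ≤ (G * ‖z‖) ^ 2 * ‖z‖ ^ (-(d:ℝ) - 1) := by
              apply mul_le_mul_of_nonneg_right h1 (Real.rpow_nonneg (norm_nonneg z) _)
          _ = G ^ 2 * ‖z‖ ^ (1 - (d:ℝ)) := h2
    have hptcompl : ∀ z : EuclideanSpace ℝ (Fin d), g z ≤ 4 * U ^ 2 * ‖z‖ ^ (-(d:ℝ) - 1) := by
      intro z
      have h1 : m z ^ 2 ≤ 4 * U ^ 2 := by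
        have h2 : m z ≤ 2 * U := min_le_left _ _
        nlinarith [hm0 z]
      calc g z ≤ (4 * U ^ 2) * ‖z‖ ^ (-(d:ℝ) - 1) := by
            apply mul_le_mul_of_nonneg_right h1 (Real.rpow_nonneg (norm_nonneg z) _)
        _ = 4 * U ^ 2 * ‖z‖ ^ (-(d:ℝ) - 1) := by ring
    have hintball : IntegrableOn g (ball (0 : EuclideanSpace ℝ (Fin d)) ρ) volume := by
      apply Integrable.mono' (hI1.const_mul (G ^ 2)) hgm.aestronglyMeasurable
      filter_upwards with z
      rw [Real.norm_eq_abs, abs_of_nonneg (hgnn z)]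
      exact hptball z
    have hintcompl : IntegrableOn g ((ball (0 : EuclideanSpace ℝ (Fin d)) ρ)ᶜ) volume := by
      apply Integrable.mono' (hI2.const_mul (4 * U ^ 2)) hgm.aestronglyMeasurable
      filter_upwards with z
      rw [Real.norm_eq_abs, abs_of_nonneg (hgnn z)]
      exact hptcompl z
    have hgint : Integrable g volume := by
      rw [← integrableOn_univ, ← union_compl_self (ball (0 : EuclideanSpace ℝ (Fin d)) ρ)]
      exact hintball.union hintcompl
    have hIball : ∫ z in ball (0 : EuclideanSpace ℝ (Fin d)) ρ, g z ≤ G ^ 2 * (C1 * ρ) := by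
      calc ∫ z in ball (0 : EuclideanSpace ℝ (Fin d)) ρ, g z ≤ ∫ z in ball (0 : EuclideanSpace ℝ (Fin d)) ρ, G ^ 2 * ‖z‖ ^ (1 - (d:ℝ)) := by
            apply setIntegral_mono_on hintball (hI1.const_mul (G ^ 2)) measurableSet_ball
            intro z _
            exact hptball z
        _ = G ^ 2 * ∫ z in ball (0 : EuclideanSpace ℝ (Fin d)) ρ, ‖z‖ ^ (1 - (d:ℝ)) := by
            rw [integral_const_mul]
        _ ≤ G ^ 2 * (C1 * ρ) := by
            apply mul_le_mul_of_nonneg_left _ (sq_nonneg G)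
            have := hB1
            rwa [show (1 - (d:ℝ)) + d = 1 by ring, Real.rpow_one] at this
    have hIcompl : ∫ z in (ball (0 : EuclideanSpace ℝ (Fin d)) ρ)ᶜ, g z ≤ 4 * U ^ 2 * (C2 * ρ⁻¹) := by
      calc ∫ z in (ball (0 : EuclideanSpace ℝ (Fin d)) ρ)ᶜ, g z
          ≤ ∫ z in (ball (0 : EuclideanSpace ℝ (Fin d)) ρ)ᶜ, 4 * U ^ 2 * ‖z‖ ^ (-(d:ℝ) - 1) := by
            apply setIntegral_mono_on hintcompl (hI2.const_mul (4 * U ^ 2))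
              measurableSet_ball.compl
            intro z _
            exact hptcompl z
        _ = 4 * U ^ 2 * ∫ z in (ball (0 : EuclideanSpace ℝ (Fin d)) ρ)ᶜ, ‖z‖ ^ (-(d:ℝ) - 1) := by
            rw [integral_const_mul]
        _ ≤ 4 * U ^ 2 * (C2 * ρ⁻¹) := by
            apply mul_le_mul_of_nonneg_left _ (by positivity)
            have := hB2
            rwa [show (-(d:ℝ) - 1) + d = -1 by ring, Real.rpow_neg_one] at this
    have hgGU : ∫ z, g z ≤ (2*C1 + 2*C2) * (G * U) := by
      have hsplit : ∫ z, g z = (∫ z in ball (0 : EuclideanSpace ℝ (Fin d)) ρ, g z) + ∫ z in (ball (0 : EuclideanSpace ℝ (Fin d)) ρ)ᶜ, g z :=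
        (integral_add_compl measurableSet_ball hgint).symm
      rw [hsplit]
      have e1 : G ^ 2 * (C1 * ρ) = 2 * C1 * (G * U) := by
        rw [hρdef]; field_simp
      have e2 : 4 * U ^ 2 * (C2 * ρ⁻¹) = 2 * C2 * (G * U) := by
        rw [hρdef]; field_simp; ring
      calc (∫ z in ball (0 : EuclideanSpace ℝ (Fin d)) ρ, g z) + ∫ z in (ball (0 : EuclideanSpace ℝ (Fin d)) ρ)ᶜ, g z
          ≤ G ^ 2 * (C1 * ρ) + 4 * U ^ 2 * (C2 * ρ⁻¹) := add_le_add hIball hIcompl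
        _ = (2*C1 + 2*C2) * (G * U) := by rw [e1, e2]; ring
    -- componentwise bound
    have hcomp : ∀ k, |gradp x k| ≤ (d:ℝ) ^ 2 * K * ((2*C1 + 2*C2) * (G * U)) := by
      intro k
      rw [hgradp x k]
      have hae0 : ∀ᵐ z : EuclideanSpace ℝ (Fin d) ∂volume, z ≠ (0 : EuclideanSpace ℝ (Fin d)) := by
        rw [ae_iff]
        simpa using measure_singleton (0 : EuclideanSpace ℝ (Fin d))
      have hbound : ∀ᵐ z : EuclideanSpace ℝ (Fin d) ∂volume,
          ‖∑ i, ∑ j, (u (x - z) i - u x i) * (u (x - z) j - u x j) *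
            iteratedFDeriv ℝ 3 (fun z : EuclideanSpace ℝ (Fin d) => ‖z‖ ^ ((2:ℝ) - d)) z
              ![EuclideanSpace.single i 1, EuclideanSpace.single j 1,
                EuclideanSpace.single k 1]‖ ≤ (d:ℝ) ^ 2 * K * g z := by
        filter_upwards [hae0] with z hz
        have hker : ∀ i j : Fin d,
            |iteratedFDeriv ℝ 3 (fun z : EuclideanSpace ℝ (Fin d) => ‖z‖ ^ ((2:ℝ) - d)) z
              ![EuclideanSpace.single i 1, EuclideanSpace.single j 1,
                EuclideanSpace.single k 1]| ≤ K * ‖z‖ ^ (-(d:ℝ) - 1) := by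
          intro i j
          have hop := ContinuousMultilinearMap.le_opNorm
            (iteratedFDeriv ℝ 3 (fun z : EuclideanSpace ℝ (Fin d) => ‖z‖ ^ ((2:ℝ) - d)) z)
            ![EuclideanSpace.single i 1, EuclideanSpace.single j 1,
              EuclideanSpace.single k 1]
          have hprod : (∏ l : Fin 3, ‖(![EuclideanSpace.single i 1, EuclideanSpace.single j 1,
              EuclideanSpace.single k (1:ℝ)] : Fin 3 → EuclideanSpace ℝ (Fin d)) l‖) = 1 := by
            simp [Fin.prod_univ_three, EuclideanSpace.norm_single]
          rw [hprod, mul_one] at hop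
          calc |iteratedFDeriv ℝ 3 (fun z : EuclideanSpace ℝ (Fin d) => ‖z‖ ^ ((2:ℝ) - d)) z
                ![EuclideanSpace.single i 1, EuclideanSpace.single j 1,
                  EuclideanSpace.single k 1]|
              ≤ ‖iteratedFDeriv ℝ 3 (fun z : EuclideanSpace ℝ (Fin d) => ‖z‖ ^ ((2:ℝ) - d)) z‖ := hop
            _ ≤ K * ‖z‖ ^ (-(d:ℝ) - 1) := hKb z hz
        have hterm : ∀ i j : Fin d,
            |(u (x - z) i - u x i) * (u (x - z) j - u x j) *
              iteratedFDeriv ℝ 3 (fun z : EuclideanSpace ℝ (Fin d) => ‖z‖ ^ ((2:ℝ) - d)) z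
                ![EuclideanSpace.single i 1, EuclideanSpace.single j 1,
                  EuclideanSpace.single k 1]| ≤ m z * m z * (K * ‖z‖ ^ (-(d:ℝ) - 1)) := by
          intro i j
          rw [abs_mul, abs_mul]
          have h1 := hdiffb z i
          have h2 := hdiffb z j
          have h3 := hker i j
          have hKz : 0 ≤ K * ‖z‖ ^ (-(d:ℝ) - 1) := by
            apply mul_nonneg hK0.le (Real.rpow_nonneg (norm_nonneg z) _)
          apply mul_le_mul _ h3 (abs_nonneg _) (mul_nonneg (hm0 z) (hm0 z))
          exact mul_le_mul h1 h2 (abs_nonneg _) (hm0 z)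
        rw [Real.norm_eq_abs]
        calc |∑ i, ∑ j, (u (x - z) i - u x i) * (u (x - z) j - u x j) *
              iteratedFDeriv ℝ 3 (fun z : EuclideanSpace ℝ (Fin d) => ‖z‖ ^ ((2:ℝ) - d)) z
                ![EuclideanSpace.single i 1, EuclideanSpace.single j 1,
                  EuclideanSpace.single k 1]|
            ≤ ∑ i : Fin d, |∑ j, (u (x - z) i - u x i) * (u (x - z) j - u x j) *
              iteratedFDeriv ℝ 3 (fun z : EuclideanSpace ℝ (Fin d) => ‖z‖ ^ ((2:ℝ) - d)) z
                ![EuclideanSpace.single i 1, EuclideanSpace.single j 1,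
                  EuclideanSpace.single k 1]| := Finset.abs_sum_le_sum_abs _ _
          _ ≤ ∑ _i : Fin d, ∑ _j : Fin d, m z * m z * (K * ‖z‖ ^ (-(d:ℝ) - 1)) := by
              apply Finset.sum_le_sum
              intro i _
              calc |∑ j, (u (x - z) i - u x i) * (u (x - z) j - u x j) *
                    iteratedFDeriv ℝ 3 (fun z : EuclideanSpace ℝ (Fin d) => ‖z‖ ^ ((2:ℝ) - d)) z
                      ![EuclideanSpace.single i 1, EuclideanSpace.single j 1,
                        EuclideanSpace.single k 1]|
                  ≤ ∑ j : Fin d, |(u (x - z) i - u x i) * (u (x - z) j - u x j) *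
                    iteratedFDeriv ℝ 3 (fun z : EuclideanSpace ℝ (Fin d) => ‖z‖ ^ ((2:ℝ) - d)) z
                      ![EuclideanSpace.single i 1, EuclideanSpace.single j 1,
                        EuclideanSpace.single k 1]| := Finset.abs_sum_le_sum_abs _ _
                _ ≤ ∑ _j : Fin d, m z * m z * (K * ‖z‖ ^ (-(d:ℝ) - 1)) :=
                    Finset.sum_le_sum fun j _ => hterm i j
          _ = (d:ℝ) ^ 2 * K * g z := by
              simp only [Finset.sum_const, Finset.card_univ, Fintype.card_fin, nsmul_eq_mul]
              rw [hgdef]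
              ring
      have hdom : Integrable (fun z : EuclideanSpace ℝ (Fin d) => (d:ℝ) ^ 2 * K * g z) volume :=
        hgint.const_mul _
      calc |∫ z : EuclideanSpace ℝ (Fin d), ∑ i, ∑ j, (u (x - z) i - u x i) * (u (x - z) j - u x j) *
              iteratedFDeriv ℝ 3 (fun z : EuclideanSpace ℝ (Fin d) => ‖z‖ ^ ((2:ℝ) - d)) z
                ![EuclideanSpace.single i 1, EuclideanSpace.single j 1,
                  EuclideanSpace.single k 1]|
          = ‖∫ z : EuclideanSpace ℝ (Fin d), ∑ i, ∑ j, (u (x - z) i - u x i) * (u (x - z) j - u x j) *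
              iteratedFDeriv ℝ 3 (fun z : EuclideanSpace ℝ (Fin d) => ‖z‖ ^ ((2:ℝ) - d)) z
                ![EuclideanSpace.single i 1, EuclideanSpace.single j 1,
                  EuclideanSpace.single k 1]‖ := (Real.norm_eq_abs _).symm
        _ ≤ ∫ z : EuclideanSpace ℝ (Fin d), (d:ℝ) ^ 2 * K * g z := norm_integral_le_of_norm_le hdom hbound
        _ = (d:ℝ) ^ 2 * K * ∫ z : EuclideanSpace ℝ (Fin d), g z := by
            rw [integral_const_mul]
        _ ≤ (d:ℝ) ^ 2 * K * ((2*C1 + 2*C2) * (G * U)) := by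
            apply mul_le_mul_of_nonneg_left hgGU (by positivity)
    -- assemble
    have hfinal := norm_le_card_mul (gradp x)
      (M := (d:ℝ) ^ 2 * K * ((2*C1 + 2*C2) * (G * U)))
      (by positivity) hcomp
    have hGU : 0 ≤ G * U := by positivity
    calc ‖gradp x‖ ≤ (d:ℝ) * ((d:ℝ) ^ 2 * K * ((2*C1 + 2*C2) * (G * U))) := hfinal
      _ ≤ ((d:ℝ) * ((d:ℝ) ^ 2 * K * ((2*C1 + 2*C2))) + 1) * G * U := by nlinarith
end

section
/- Let u : ℝ^d → ℝ^d be a C² vector field in W^{2,∞}(ℝ^d) admitting a Lipschitz modulus of continuity ω (i.e. ω is continuous, nondecreasing, C² on (0,∞), ω(0)=0, ω''(0⁺)=−∞, ω'(0)<∞, and |u(x)−u(y)| ≤ ω(|x−y|) for all x,y). Then ‖∇u‖_{L^∞} < ω'(0), where ‖∇u‖_{L^∞} := sup_x sup_{|e|=1} |J_u(x)e| with J_u the Jacobian matrix of u. -/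
open Real Set Filter

theorem taylor_bound {E F : Type*} [NormedAddCommGroup E] [NormedSpace ℝ E]
    [NormedAddCommGroup F] [NormedSpace ℝ F]
    (u : E → F) (hu : ContDiff ℝ 2 u) (M : ℝ)
    (hM : ∀ z, ‖iteratedFDeriv ℝ 2 u z‖ ≤ M) :
    ∀ x y, ‖u y - u x - fderiv ℝ u x (y - x)‖ ≤ M * ‖y - x‖^2 := by
  have hd2 : ∀ z, ‖fderiv ℝ (fderiv ℝ u) z‖ ≤ M := by
    intro z
    have e1 : ‖iteratedFDeriv ℝ 0 (fderiv ℝ (fderiv ℝ u)) z‖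
        = ‖iteratedFDeriv ℝ 1 (fderiv ℝ u) z‖ := norm_iteratedFDeriv_fderiv
    have e2 : ‖iteratedFDeriv ℝ 1 (fderiv ℝ u) z‖ = ‖iteratedFDeriv ℝ 2 u z‖ :=
      norm_iteratedFDeriv_fderiv
    rw [norm_iteratedFDeriv_zero] at e1
    rw [e1, e2]; exact hM z
  have hud : Differentiable ℝ u := hu.differentiable (by norm_num)
  have hu'cd : ContDiff ℝ 1 (fderiv ℝ u) := hu.fderiv_right (by norm_num)
  have hu'd : Differentiable ℝ (fderiv ℝ u) := hu'cd.differentiable one_ne_zero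
  -- fderiv u is M-Lipschitz
  have hLip : ∀ a b : E, ‖fderiv ℝ u b - fderiv ℝ u a‖ ≤ M * ‖b - a‖ := by
    intro a b
    exact convex_univ.norm_image_sub_le_of_norm_fderiv_le
      (fun z _ => hu'd z) (fun z _ => hd2 z) (mem_univ a) (mem_univ b)
  intro x y
  set g : E → F := fun z => u z - fderiv ℝ u x z with hgdef
  have hgd : ∀ z, DifferentiableAt ℝ g z := fun z =>
    (hud z).sub ((fderiv ℝ u x).differentiable z)
  have hgderiv : ∀ z, fderiv ℝ g z = fderiv ℝ u z - fderiv ℝ u x := by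
    intro z
    rw [hgdef]
    rw [fderiv_fun_sub (hud z) ((fderiv ℝ u x).differentiable z)]
    rw [ContinuousLinearMap.fderiv]
  have hseg : ∀ z ∈ segment ℝ x y, ‖z - x‖ ≤ ‖y - x‖ := by
    intro z hz
    rw [segment_eq_image'] at hz
    obtain ⟨t, ht, rfl⟩ := hz
    simp only [add_sub_cancel_left]
    rw [norm_smul, Real.norm_eq_abs, abs_of_nonneg ht.1]
    nlinarith [norm_nonneg (y - x), ht.2]
  have hbound : ∀ z ∈ segment ℝ x y, ‖fderiv ℝ g z‖ ≤ M * ‖y - x‖ := by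
    intro z hz
    rw [hgderiv z]
    calc ‖fderiv ℝ u z - fderiv ℝ u x‖ ≤ M * ‖z - x‖ := hLip x z
      _ ≤ M * ‖y - x‖ := by
          have hM0 : 0 ≤ M := le_trans (norm_nonneg _) (hM x)
          exact mul_le_mul_of_nonneg_left (hseg z hz) hM0
  have := (convex_segment x y).norm_image_sub_le_of_norm_fderiv_le
    (fun z _ => hgd z) hbound (left_mem_segment ℝ x y) (right_mem_segment ℝ x y)
  have heq : g y - g x = u y - u x - fderiv ℝ u x (y - x) := by
    simp only [hgdef, map_sub]
    abel
  rw [heq] at this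
  calc ‖u y - u x - (fderiv ℝ u x) (y - x)‖ ≤ M * ‖y - x‖ * ‖y - x‖ := this
    _ = M * ‖y - x‖^2 := by ring

theorem omega_quad_bound (ω : ℝ → ℝ) (ω'0 : ℝ)
    (hωc : ContinuousOn ω (Ici 0))
    (hω2 : ContDiffOn ℝ 2 ω (Ioi 0)) (hω0 : ω 0 = 0)
    (hω'0 : HasDerivWithinAt ω ω'0 (Ici 0) 0)
    (K δ : ℝ) (hδ : 0 < δ)
    (hK : ∀ t ∈ Ioo (0:ℝ) δ, deriv (deriv ω) t ≤ -K) :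
    ∀ ξ ∈ Ioo (0:ℝ) δ, ω ξ ≤ ω'0 * ξ - K/2 * ξ^2 := by
  set g : ℝ → ℝ := fun t => ω t - ω'0 * t + K/2 * t^2 with hg
  have hωdiff : ∀ t ∈ Ioi (0:ℝ), DifferentiableAt ℝ ω t := by
    intro t ht
    exact (hω2.contDiffAt ((isOpen_Ioi).mem_nhds ht)).differentiableAt (by norm_num)
  have hω'cd : ContDiffOn ℝ 1 (deriv ω) (Ioi 0) :=
    hω2.deriv_of_isOpen isOpen_Ioi (m := 1) (by norm_num)
  have hω'diff : ∀ t ∈ Ioi (0:ℝ), DifferentiableAt ℝ (deriv ω) t := by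
    intro t ht
    exact (hω'cd.contDiffAt ((isOpen_Ioi).mem_nhds ht)).differentiableAt one_ne_zero
  have hgdiff : ∀ t ∈ Ioi (0:ℝ), DifferentiableAt ℝ g t := by
    intro t ht
    exact ((hωdiff t ht).sub ((differentiable_id.const_mul ω'0) t)).add
      (((differentiable_id.pow 2).const_mul (K/2)) t)
  have hderivg : ∀ t ∈ Ioi (0:ℝ), deriv g t = deriv ω t - ω'0 + K * t := by
    intro t ht
    have h1 : HasDerivAt g (deriv ω t - ω'0 * 1 + K/2 * (2 * t^1)) t :=
      (((hωdiff t ht).hasDerivAt).sub ((hasDerivAt_id t).const_mul ω'0)).add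
        ((hasDerivAt_pow 2 t).const_mul (K/2))
    rw [h1.deriv]; ring
  have hdgdiff : ∀ t ∈ Ioi (0:ℝ), DifferentiableAt ℝ (deriv g) t := by
    intro t ht
    have : DifferentiableAt ℝ (fun s => deriv ω s - ω'0 + K * s) t :=
      ((hω'diff t ht).sub (differentiableAt_const ω'0)).add
        ((differentiable_id.const_mul K) t)
    exact this.congr_of_eventuallyEq
      (eventuallyEq_of_mem ((isOpen_Ioi).mem_nhds ht) hderivg)
  have hderiv2g : ∀ t ∈ Ioo (0:ℝ) δ, deriv (deriv g) t ≤ 0 := by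
    intro t ht
    have heq : deriv (deriv g) t = deriv (fun s => deriv ω s - ω'0 + K * s) t :=
      Filter.EventuallyEq.deriv_eq
        (eventuallyEq_of_mem ((isOpen_Ioi).mem_nhds ht.1) hderivg)
    rw [heq]
    have h2 : HasDerivAt (fun s => deriv ω s - ω'0 + K * s) (deriv (deriv ω) t - 0 + K * 1) t :=
      (((hω'diff t ht.1).hasDerivAt).sub (hasDerivAt_const t ω'0)).add
        ((hasDerivAt_id t).const_mul K)
    rw [h2.deriv]
    have := hK t ht
    linarith
  have hconc : ConcaveOn ℝ (Icc 0 δ) g := by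
    apply concaveOn_of_deriv2_nonpos (convex_Icc 0 δ)
    · apply ContinuousOn.add
      · exact (hωc.mono (Icc_subset_Ici_self)).sub (continuous_const.mul continuous_id).continuousOn
      · exact (continuous_const.mul (continuous_pow 2)).continuousOn
    · rw [interior_Icc]
      exact fun t ht => (hgdiff t ht.1).differentiableWithinAt
    · rw [interior_Icc]
      exact fun t ht => (hdgdiff t ht.1).differentiableWithinAt
    · rw [interior_Icc]
      intro t ht
      have := hderiv2g t ht
      simpa [Function.iterate_succ, Function.comp] using this
  have hg0 : g 0 = 0 := by simp [hg, hω0]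
  have hgd0 : HasDerivWithinAt g 0 (Ici 0) 0 := by
    have h1 : HasDerivWithinAt g (ω'0 - ω'0 * 1 + K/2 * (2 * 0^1)) (Ici 0) 0 :=
      (hω'0.sub (((hasDerivAt_id (0:ℝ)).const_mul ω'0).hasDerivWithinAt)).add
        (((hasDerivAt_pow 2 (0:ℝ)).const_mul (K/2)).hasDerivWithinAt)
    convert h1 using 1; ring
  have hslope : Tendsto (fun h => g h / h) (nhdsWithin 0 (Ioi 0)) (nhds 0) := by
    have := (hasDerivWithinAt_iff_tendsto_slope).mp hgd0
    rw [show (Ici (0:ℝ)) \ {0} = Ioi 0 by rw [Ici_sdiff_left]] at this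
    refine this.congr' ?_
    filter_upwards [self_mem_nhdsWithin] with h hh
    simp [slope, hg0, div_eq_inv_mul]
  intro ξ hξ
  have key : ∀ h ∈ Ioo (0:ℝ) ξ, g ξ / ξ ≤ g h / h := by
    intro h hh
    have hbξ : ξ ∈ Icc (0:ℝ) δ := ⟨hξ.1.le, hξ.2.le⟩
    have hb0 : (0:ℝ) ∈ Icc (0:ℝ) δ := ⟨le_refl 0, hδ.le⟩
    have ha : (0:ℝ) ≤ 1 - h/ξ := by
      have : h/ξ ≤ 1 := (div_le_one hξ.1).mpr hh.2.le
      linarith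
    have hb : (0:ℝ) ≤ h/ξ := div_nonneg hh.1.le hξ.1.le
    have := hconc.2 hb0 hbξ ha hb (by ring)
    have heval : (1 - h/ξ) • (0:ℝ) + (h/ξ) • ξ = h := by
      rw [smul_eq_mul, smul_eq_mul, mul_zero, zero_add, div_mul_cancel₀ _ hξ.1.ne']
    rw [heval, hg0] at this
    -- this : (1 - h/ξ) * 0 + (h/ξ) * g ξ ≤ g h  (smul on ℝ)
    rw [div_le_div_iff₀ hξ.1 hh.1]
    have h2 : (h/ξ) * g ξ ≤ g h := by simpa using this
    rw [div_mul_eq_mul_div, div_le_iff₀ hξ.1] at h2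
    linarith
  have hfin : g ξ / ξ ≤ 0 := by
    refine ge_of_tendsto hslope ?_
    filter_upwards [Ioo_mem_nhdsGT_of_mem (by exact ⟨le_refl 0, hξ.1⟩ : (0:ℝ) ∈ Ico 0 ξ)] with h hh
    exact key h hh
  have : g ξ ≤ 0 := by
    by_contra hcon
    push_neg at hcon
    have : 0 < g ξ / ξ := div_pos hcon hξ.1
    linarith
  simp only [hg] at this
  linarith

/-- A `C²`, `W^{2,∞}` vector field with a Lipschitz modulus of continuity `ω`
satisfies the strict gradient bound `‖∇u‖_∞ < ω'(0)`. -/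
theorem grad_bound_of_modulus (d : ℕ)
    (u : EuclideanSpace ℝ (Fin d) → EuclideanSpace ℝ (Fin d))
    (hu : ContDiff ℝ 2 u)
    (hbdd : ∃ M, ∀ x, ‖u x‖ + ‖fderiv ℝ u x‖ + ‖iteratedFDeriv ℝ 2 u x‖ ≤ M)
    (ω : ℝ → ℝ) (ω'0 : ℝ)
    (hωc : ContinuousOn ω (Ici 0)) (hωmono : MonotoneOn ω (Ici 0))
    (hω2 : ContDiffOn ℝ 2 ω (Ioi 0)) (hω0 : ω 0 = 0)
    (hsing : Tendsto (fun ξ => deriv (deriv ω) ξ) (nhdsWithin 0 (Ioi 0)) atBot)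
    (hω'0 : HasDerivWithinAt ω ω'0 (Ici 0) 0)
    (hmod : ∀ x y, ‖u x - u y‖ ≤ ω ‖x - y‖) :
    (⨆ x, ‖fderiv ℝ u x‖) < ω'0 := by
  obtain ⟨M, hM⟩ := hbdd
  have hM2 : ∀ z, ‖iteratedFDeriv ℝ 2 u z‖ ≤ M := by
    intro z
    have := hM z
    have h1 := norm_nonneg (u z)
    have h2 := norm_nonneg (fderiv ℝ u z)
    linarith
  have hM0 : 0 ≤ M := le_trans (norm_nonneg _) (hM2 0)
  set K : ℝ := 2 * M + 2 with hKdef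
  have hev : ∀ᶠ ξ in nhdsWithin 0 (Ioi 0), deriv (deriv ω) ξ ≤ -K :=
    hsing.eventually (eventually_le_atBot (-K))
  obtain ⟨δ, hδmem, hsub⟩ := mem_nhdsGT_iff_exists_Ioo_subset.mp hev
  have hδ : (0:ℝ) < δ := hδmem
  have hq := omega_quad_bound ω ω'0 hωc hω2 hω0 hω'0 K δ hδ (fun t ht => hsub ht)
  set ε : ℝ := δ / 2 with hεdef
  have hε : ε ∈ Ioo (0:ℝ) δ := ⟨by positivity, by rw [hεdef]; linarith⟩
  have hωε0 : 0 ≤ ω ε := by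
    have := hωmono (mem_Ici.mpr le_rfl) (mem_Ici.mpr hε.1.le) hε.1.le
    rw [hω0] at this; exact this
  have hqε : ω ε ≤ ω'0 * ε - (M + 1) * ε^2 := by
    have := hq ε hε
    rw [hKdef] at this
    linarith
  have hω'0ε : ε ≤ ω'0 := by nlinarith [hε.1]
  have hTay := taylor_bound u hu M hM2
  have hxbound : ∀ x, ‖fderiv ℝ u x‖ ≤ ω'0 - ε := by
    intro x
    apply ContinuousLinearMap.opNorm_le_bound _ (by linarith)
    intro v
    rcases eq_or_ne v 0 with rfl | hv
    · simp
    · have hvn : (0:ℝ) < ‖v‖ := norm_pos_iff.mpr hv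
      set w : EuclideanSpace ℝ (Fin d) := (ε / ‖v‖) • v with hwdef
      have hwn : ‖w‖ = ε := by
        rw [hwdef, norm_smul, Real.norm_eq_abs, abs_of_pos (by positivity)]
        field_simp
      set y : EuclideanSpace ℝ (Fin d) := x + w with hydef
      have hyx : y - x = w := by rw [hydef]; abel
      have h1 : ‖u y - u x‖ ≤ ω ε := by
        have := hmod y x
        rwa [show y - x = w from hyx, hwn] at this
      have h2 : ‖u y - u x - fderiv ℝ u x w‖ ≤ M * ε^2 := by
        have := hTay x y
        rw [hyx] at this
        rwa [hwn] at this
      have h3 : ‖fderiv ℝ u x w‖ ≤ (ω'0 - ε) * ε := by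
        have h4 : ‖fderiv ℝ u x w‖ ≤ ‖u y - u x‖ + ‖u y - u x - fderiv ℝ u x w‖ := by
          have e : fderiv ℝ u x w = (u y - u x) - (u y - u x - fderiv ℝ u x w) := by abel
          conv_lhs => rw [e]
          exact norm_sub_le _ _
        calc ‖fderiv ℝ u x w‖ ≤ ω ε + M * ε^2 := le_trans h4 (add_le_add h1 h2)
          _ ≤ (ω'0 - ε) * ε := by nlinarith [hqε]
      have hsmul : fderiv ℝ u x w = (ε / ‖v‖) • fderiv ℝ u x v := by
        rw [hwdef, map_smul]
      have : ‖fderiv ℝ u x w‖ = (ε / ‖v‖) * ‖fderiv ℝ u x v‖ := by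
        rw [hsmul, norm_smul, Real.norm_eq_abs, abs_of_pos (by positivity)]
      rw [this] at h3
      rw [div_mul_eq_mul_div, div_le_iff₀ hvn] at h3
      have h5 : ε * ‖fderiv ℝ u x v‖ ≤ ε * ((ω'0 - ε) * ‖v‖) := by nlinarith [h3]
      exact le_of_mul_le_mul_left h5 hε.1
  have hlt : ω'0 - ε < ω'0 := by linarith [hε.1]
  exact lt_of_le_of_lt (ciSup_le hxbound) hlt
end

section
/- Let θ ∈ C²(ℝ^d) have modulus of continuity ω (a nondecreasing continuous function with ω(0)=0, C² on (0,∞)), and suppose θ(x₀) − θ(y₀) = ω(|x₀−y₀|) for some x₀ ≠ y₀ with x₀ − y₀ = ξ·e₁, ξ > 0. Then ∂₁θ(x₀) = ∂₁θ(y₀) = ω'(ξ), ∂_jθ(x₀) = ∂_jθ(y₀) = 0 for j ≠ 1, and Δθ(x₀) − Δθ(y₀) ≤ 4ω''(ξ). -/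
/-!
Along any pair of lines `t ↦ x₀ + t u`, `t ↦ y₀ + t w`, the function
`t ↦ ω ‖x₀ - y₀ + t (u - w)‖ - (θ (x₀ + t u) - θ (y₀ + t w))` is nonnegative and vanishes at
`t = 0`, so its first derivative vanishes and its second derivative is nonnegative there.
Taking `w = 0` or `u = 0` gives `∇θ(x₀) = ∇θ(y₀) = ω'(ξ) e₁`. Translating both points by the same
vector `v` keeps the distance equal to `ξ`, so `∂²_v θ(x₀) ≤ ∂²_v θ(y₀)`; moving them apart along
`e₁` gives `ξ + 2t` and hence `∂²₁θ(x₀) - ∂²₁θ(y₀) ≤ 4 ω''(ξ)`. Summing over coordinates bounds the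
difference of Laplacians.
-/

open Real Set Filter Topology

theorem IsLocalMin.nonneg_of_hasDerivAt_of_hasDerivAt {f f' : ℝ → ℝ} {a c : ℝ}
    (h : IsLocalMin f a) (hf : ∀ᶠ t in 𝓝 a, HasDerivAt f (f' t) t) (hf' : HasDerivAt f' c a) :
    0 ≤ c := by
  have hderiv : deriv f =ᶠ[𝓝 a] f' := hf.mono fun t ht => ht.deriv
  have hc : deriv (deriv f) a = c := hderiv.deriv_eq.trans hf'.deriv
  by_contra! hneg
  have hmax : IsLocalMax f a :=
    isLocalMax_of_deriv_deriv_neg (hc ▸ hneg) h.deriv_eq_zero hf.self_of_nhds.continuousAt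
  -- `a` is then also a local maximum, so `f` is locally constant and `f'' a = 0`
  have hconst : f =ᶠ[𝓝 a] fun _ => f a := by
    filter_upwards [h, hmax] with t hmin hmax using le_antisymm hmax hmin
  have : deriv (deriv f) a = 0 := by
    rw [hconst.deriv.deriv_eq]
    simp
  linarith

section Lines

variable {E : Type*} [NormedAddCommGroup E] [NormedSpace ℝ E] {θ : E → ℝ}

theorem hasDerivAt_comp_add_smul {a u : E} {t : ℝ} (hθ : DifferentiableAt ℝ θ (a + t • u)) :
    HasDerivAt (fun s : ℝ => θ (a + s • u)) (fderiv ℝ θ (a + t • u) u) t := by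
  have hline : HasDerivAt (fun s : ℝ => a + s • u) u t := by
    simpa using ((hasDerivAt_id t).smul_const u).const_add a
  exact hθ.hasFDerivAt.comp_hasDerivAt t hline

theorem hasDerivAt_fderiv_comp_add_smul {a u : E} (hθ : DifferentiableAt ℝ (fderiv ℝ θ) a) :
    HasDerivAt (fun s : ℝ => fderiv ℝ θ (a + s • u) u) (fderiv ℝ (fderiv ℝ θ) a u u) 0 := by
  have hline : HasDerivAt (fun s : ℝ => a + s • u) u 0 := by
    simpa using ((hasDerivAt_id (0:ℝ)).smul_const u).const_add a
  have h := (zero_smul ℝ u ▸ add_zero a ▸ hθ).hasFDerivAt.comp_hasDerivAt (0:ℝ) hline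
  simpa using h.clm_apply (hasDerivAt_const (0:ℝ) u)

variable {x0 y0 u w : E} {φ φ' : ℝ → ℝ} {c : ℝ}

theorem isLocalMin_of_touch (hle : ∀ᶠ t in 𝓝 0, θ (x0 + t • u) - θ (y0 + t • w) ≤ φ t)
    (heq : θ x0 - θ y0 = φ 0) :
    IsLocalMin (fun t => φ t - (θ (x0 + t • u) - θ (y0 + t • w))) 0 := by
  filter_upwards [hle] with t ht
  simp only [zero_smul, add_zero, ← heq, sub_self]
  linarith

theorem fderiv_sub_fderiv_eq_of_touch (hx : DifferentiableAt ℝ θ x0)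
    (hy : DifferentiableAt ℝ θ y0) (hφ : HasDerivAt φ c 0)
    (hle : ∀ᶠ t in 𝓝 0, θ (x0 + t • u) - θ (y0 + t • w) ≤ φ t) (heq : θ x0 - θ y0 = φ 0) :
    fderiv ℝ θ x0 u - fderiv ℝ θ y0 w = c := by
  have hmin := isLocalMin_of_touch hle heq
  have hder := hφ.sub
    ((hasDerivAt_comp_add_smul (a := x0) (u := u) (t := 0) (by simpa using hx)).sub
      (hasDerivAt_comp_add_smul (a := y0) (u := w) (t := 0) (by simpa using hy)))
  simp only [zero_smul, add_zero] at hder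
  linarith [hmin.hasDerivAt_eq_zero hder]

theorem fderiv_fderiv_sub_le_of_touch (hθ : ContDiff ℝ 2 θ)
    (hφ : ∀ᶠ t in 𝓝 0, HasDerivAt φ (φ' t) t) (hφ' : HasDerivAt φ' c 0)
    (hle : ∀ᶠ t in 𝓝 0, θ (x0 + t • u) - θ (y0 + t • w) ≤ φ t) (heq : θ x0 - θ y0 = φ 0) :
    fderiv ℝ (fderiv ℝ θ) x0 u u - fderiv ℝ (fderiv ℝ θ) y0 w w ≤ c := by
  have hθ1 : Differentiable ℝ θ := hθ.differentiable (by norm_num)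
  have hθ2 : Differentiable ℝ (fderiv ℝ θ) :=
    (hθ.fderiv_right (m := 1) (by norm_num)).differentiable (by norm_num)
  have hmin := isLocalMin_of_touch hle heq
  have hder : ∀ᶠ t in 𝓝 0, HasDerivAt (fun t => φ t - (θ (x0 + t • u) - θ (y0 + t • w)))
      (φ' t - (fderiv ℝ θ (x0 + t • u) u - fderiv ℝ θ (y0 + t • w) w)) t := by
    filter_upwards [hφ] with t ht
    exact ht.sub ((hasDerivAt_comp_add_smul (hθ1 _)).sub (hasDerivAt_comp_add_smul (hθ1 _)))
  have hder2 := hφ'.sub ((hasDerivAt_fderiv_comp_add_smul (u := u) (hθ2 x0)).sub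
    (hasDerivAt_fderiv_comp_add_smul (u := w) (hθ2 y0)))
  linarith [hmin.nonneg_of_hasDerivAt_of_hasDerivAt hder hder2]

end Lines

section InnerProduct

variable {E : Type*} [NormedAddCommGroup E] [InnerProductSpace ℝ E]

theorem hasDerivAt_norm_add_smul {v : E} (hv : v ≠ 0) (u : E) :
    HasDerivAt (fun t : ℝ => ‖v + t • u‖) (inner ℝ v u / ‖v‖) 0 := by
  have hsq : HasDerivAt (fun t : ℝ => ‖v + t • u‖ ^ 2) (2 * inner ℝ v u) 0 := by
    have hline : HasDerivAt (fun s : ℝ => v + s • u) u 0 := by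
      simpa using ((hasDerivAt_id (0:ℝ)).smul_const u).const_add v
    simpa using hline.norm_sq
  have h := hsq.sqrt (by simpa using hv)
  simp_rw [zero_smul, add_zero, sqrt_sq (norm_nonneg _)] at h
  rwa [mul_div_mul_left _ _ two_ne_zero] at h

theorem ContDiffAt.eventually_hasDerivAt_deriv {f : ℝ → ℝ} {x : ℝ} (h : ContDiffAt ℝ 2 f x) :
    ∀ᶠ y in 𝓝 x, HasDerivAt f (deriv f y) y :=
  (h.eventually (by simp)).mono fun _ hy => (hy.differentiableAt (by norm_num)).hasDerivAt

theorem ContDiffAt.hasDerivAt_deriv_deriv {f : ℝ → ℝ} {x : ℝ} (h : ContDiffAt ℝ 2 f x) :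
    HasDerivAt (deriv f) (deriv (deriv f) x) x :=
  ((h.derivWithin (m := 1) (by norm_num)).differentiableAt (by norm_num)).hasDerivAt

variable {θ : E → ℝ} {ω : ℝ → ℝ} {x0 y0 e : E} {ξ : ℝ}

theorem fderiv_sub_fderiv_eq_of_modulus_touch (hmod : ∀ x y, θ x - θ y ≤ ω ‖x - y‖)
    (hx : DifferentiableAt ℝ θ x0) (hy : DifferentiableAt ℝ θ y0)
    (hω : DifferentiableAt ℝ ω ξ) (hξ : 0 < ξ) (he : ‖e‖ = 1) (hxy : x0 - y0 = ξ • e)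
    (htouch : θ x0 - θ y0 = ω ξ) (u w : E) :
    fderiv ℝ θ x0 u - fderiv ℝ θ y0 w = deriv ω ξ * inner ℝ e (u - w) := by
  have hξe : ‖ξ • e‖ = ξ := by rw [norm_smul, he, mul_one, norm_of_nonneg hξ.le]
  have hξe0 : ξ • e ≠ 0 := by rw [← norm_ne_zero_iff, hξe]; exact hξ.ne'
  have hnorm := hasDerivAt_norm_add_smul hξe0 (u - w)
  rw [hξe, real_inner_smul_left, mul_div_cancel_left₀ _ hξ.ne'] at hnorm
  have hφ : HasDerivAt (fun t : ℝ => ω ‖ξ • e + t • (u - w)‖)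
      (deriv ω ξ * inner ℝ e (u - w)) 0 := by
    have hω' : HasDerivAt ω (deriv ω ξ) ‖ξ • e + (0:ℝ) • (u - w)‖ := by
      simpa [hξe] using hω.hasDerivAt
    exact hω'.comp 0 hnorm
  refine fderiv_sub_fderiv_eq_of_touch hx hy hφ (Eventually.of_forall fun t => ?_)
    (by simpa [hξe])
  have hdiff : x0 + t • u - (y0 + t • w) = ξ • e + t • (u - w) := by
    rw [smul_sub, ← hxy]; abel
  simpa [hdiff] using hmod (x0 + t • u) (y0 + t • w)

theorem fderiv_eq_smul_innerSL_of_modulus_touch (hmod : ∀ x y, θ x - θ y ≤ ω ‖x - y‖)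
    (hx : DifferentiableAt ℝ θ x0) (hy : DifferentiableAt ℝ θ y0)
    (hω : DifferentiableAt ℝ ω ξ) (hξ : 0 < ξ) (he : ‖e‖ = 1) (hxy : x0 - y0 = ξ • e)
    (htouch : θ x0 - θ y0 = ω ξ) :
    fderiv ℝ θ x0 = deriv ω ξ • innerSL ℝ e ∧ fderiv ℝ θ y0 = deriv ω ξ • innerSL ℝ e := by
  have h := fderiv_sub_fderiv_eq_of_modulus_touch hmod hx hy hω hξ he hxy htouch
  constructor <;> ext u
  · simpa using h u 0
  · simpa [inner_neg_right] using h 0 u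

theorem fderiv_fderiv_sub_nonpos_of_modulus_touch (hθ : ContDiff ℝ 2 θ)
    (hmod : ∀ x y, θ x - θ y ≤ ω ‖x - y‖) (htouch : θ x0 - θ y0 = ω ‖x0 - y0‖) (v : E) :
    fderiv ℝ (fderiv ℝ θ) x0 v v - fderiv ℝ (fderiv ℝ θ) y0 v v ≤ 0 := by
  refine fderiv_fderiv_sub_le_of_touch hθ (φ := fun _ => ω ‖x0 - y0‖) (φ' := fun _ => 0)
    (Eventually.of_forall fun t => hasDerivAt_const t _) (hasDerivAt_const 0 0)
    (Eventually.of_forall fun t => ?_) htouch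
  simpa using hmod (x0 + t • v) (y0 + t • v)

theorem fderiv_fderiv_sub_le_of_modulus_touch (hθ : ContDiff ℝ 2 θ)
    (hmod : ∀ x y, θ x - θ y ≤ ω ‖x - y‖) (hω : ContDiffAt ℝ 2 ω ξ) (hξ : 0 < ξ)
    (he : ‖e‖ = 1) (hxy : x0 - y0 = ξ • e) (htouch : θ x0 - θ y0 = ω ξ) :
    fderiv ℝ (fderiv ℝ θ) x0 e e - fderiv ℝ (fderiv ℝ θ) y0 e e ≤ 4 * deriv (deriv ω) ξ := by
  have haff : ∀ t : ℝ, HasDerivAt (fun s : ℝ => ξ + 2 * s) 2 t := fun t => by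
    simpa using ((hasDerivAt_id t).const_mul 2).const_add ξ
  have hφ : ∀ᶠ t in 𝓝 0, HasDerivAt (fun s => ω (ξ + 2 * s)) (deriv ω (ξ + 2 * t) * 2) t := by
    have hlim : Tendsto (fun s : ℝ => ξ + 2 * s) (𝓝 0) (𝓝 ξ) := by
      simpa using (haff 0).continuousAt.tendsto
    filter_upwards [hlim.eventually hω.eventually_hasDerivAt_deriv] with t ht
    exact ht.comp t (haff t)
  have hφ' : HasDerivAt (fun t => deriv ω (ξ + 2 * t) * 2) (deriv (deriv ω) ξ * 2 * 2) 0 := by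
    have h : HasDerivAt (deriv ω) (deriv (deriv ω) ξ) (ξ + 2 * 0) := by
      simpa using hω.hasDerivAt_deriv_deriv
    simpa only [Function.comp_def] using (h.comp 0 (haff 0)).mul_const 2
  have hle : ∀ᶠ t in 𝓝 0, θ (x0 + t • e) - θ (y0 + t • -e) ≤ ω (ξ + 2 * t) := by
    filter_upwards [Ioi_mem_nhds (show -(ξ / 2) < 0 by linarith)] with t ht
    have hdiff : x0 + t • e - (y0 + t • -e) = (ξ + 2 * t) • e := by
      rw [add_smul, mul_smul, two_smul, ← hxy, smul_neg]; abel
    have hpos : 0 < ξ + 2 * t := by linarith [mem_Ioi.mp ht]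
    have h := hmod (x0 + t • e) (y0 + t • -e)
    rwa [hdiff, norm_smul, he, mul_one, norm_of_nonneg hpos.le] at h
  have h := fderiv_fderiv_sub_le_of_touch hθ hφ hφ' hle (by simpa using htouch)
  simp only [map_neg, neg_apply, neg_neg] at h
  linarith

end InnerProduct

/-- First and second order information at a breakthrough point where a `C²` scalar
function touches its modulus of continuity. -/
theorem breakthrough_point_derivatives (d : ℕ) (hd : 1 ≤ d)
    (θ : EuclideanSpace ℝ (Fin d) → ℝ) (hθ : ContDiff ℝ 2 θ)
    (ω : ℝ → ℝ) (hω2 : ContDiffOn ℝ 2 ω (Ioi 0))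
    (hmod : ∀ x y, |θ x - θ y| ≤ ω ‖x - y‖)
    (x0 y0 : EuclideanSpace ℝ (Fin d)) (ξ : ℝ) (hξ : 0 < ξ)
    (hxy : x0 - y0 = ξ • (EuclideanSpace.single (⟨0, by omega⟩ : Fin d) (1:ℝ)))
    (htouch : θ x0 - θ y0 = ω ξ) :
    fderiv ℝ θ x0 (EuclideanSpace.single (⟨0, by omega⟩ : Fin d) 1) = deriv ω ξ ∧
    fderiv ℝ θ y0 (EuclideanSpace.single (⟨0, by omega⟩ : Fin d) 1) = deriv ω ξ ∧
    (∀ j : Fin d, j ≠ (⟨0, by omega⟩ : Fin d) →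
      fderiv ℝ θ x0 (EuclideanSpace.single j 1) = 0 ∧
      fderiv ℝ θ y0 (EuclideanSpace.single j 1) = 0) ∧
    (∑ j, iteratedFDeriv ℝ 2 θ x0 ![EuclideanSpace.single j 1, EuclideanSpace.single j 1])
        - (∑ j, iteratedFDeriv ℝ 2 θ y0 ![EuclideanSpace.single j 1, EuclideanSpace.single j 1])
      ≤ 4 * deriv (deriv ω) ξ := by
  set i0 : Fin d := ⟨0, by omega⟩
  have hmod' : ∀ x y, θ x - θ y ≤ ω ‖x - y‖ := fun x y => (le_abs_self _).trans (hmod x y)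
  have hω : ContDiffAt ℝ 2 ω ξ := hω2.contDiffAt (Ioi_mem_nhds hξ)
  have he : ‖EuclideanSpace.single i0 (1:ℝ)‖ = 1 := by simp
  have hθ1 : Differentiable ℝ θ := hθ.differentiable (by norm_num)
  obtain ⟨hgradx, hgrady⟩ := fderiv_eq_smul_innerSL_of_modulus_touch hmod' (hθ1 x0) (hθ1 y0)
    (hω.differentiableAt (by norm_num)) hξ he hxy htouch
  have hinner (j : Fin d) (hj : j ≠ i0) :
      inner ℝ (EuclideanSpace.single i0 (1:ℝ)) (EuclideanSpace.single j 1) = 0 := by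
    simp [EuclideanSpace.inner_single_left, Ne.symm hj]
  refine ⟨by simp [hgradx], by simp [hgrady], fun j hj => ⟨by simp [hgradx, hinner j hj],
    by simp [hgrady, hinner j hj]⟩, ?_⟩
  have htouch' : θ x0 - θ y0 = ω ‖x0 - y0‖ := by
    rw [hxy, norm_smul, he, mul_one, norm_of_nonneg hξ.le, htouch]
  have hdiag := fderiv_fderiv_sub_le_of_modulus_touch hθ hmod' hω hξ he hxy htouch
  have hoff := Finset.sum_nonpos fun j (_ : j ∈ Finset.univ.erase i0) =>
    fderiv_fderiv_sub_nonpos_of_modulus_touch hθ hmod' htouch' (EuclideanSpace.single j (1:ℝ))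
  simp only [iteratedFDeriv_two_apply, Matrix.cons_val_zero, Matrix.cons_val_one]
  rw [← Finset.sum_sub_distrib, ← Finset.add_sum_erase _ _ (Finset.mem_univ i0)]
  linarith
end

section
/- Let β ∈ (0,1), δ ∈ (0,1/4), and define ω : [0,∞) → [0,∞) by ω(σ) = σ − σ^{3/2} for σ ∈ [0,δ], and ω(σ) = δ − δ^{3/2} + (1/4)∫_δ^σ exp(−η^{β+1}/(4(β+1))) dη for σ ≥ δ. Then ω is continuous, increasing, concave, C² away from σ = δ, and satisfies 4ω''(σ) + σ^β ω'(σ) ≤ 0 for all σ ∈ (0,δ) ∪ (δ,∞). -/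
open Real Set intervalIntegral MeasureTheory

namespace ExplicitModulusAux

noncomputable def E (β η : ℝ) : ℝ := Real.exp (-η ^ (β + 1) / (4 * (β + 1)))

noncomputable def W (β δ σ : ℝ) : ℝ :=
  if σ ≤ δ then 1 - (3/2) * σ ^ ((1:ℝ)/2) else (1/4) * E β σ

variable {β δ : ℝ}

lemma continuous_E (hβ : 0 < β) : Continuous (E β) := by
  apply Real.continuous_exp.comp
  apply Continuous.div_const
  apply Continuous.neg
  rw [continuous_iff_continuousAt]
  exact fun x => Real.continuousAt_rpow_const x (β+1) (Or.inr (by linarith))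

lemma E_pos (η : ℝ) : 0 < E β η := Real.exp_pos _

lemma E_le_one (hβ : 0 < β) {η : ℝ} (hη : 0 ≤ η) : E β η ≤ 1 := by
  rw [E, Real.exp_le_one_iff]
  have h1 : (0:ℝ) ≤ η ^ (β+1) := Real.rpow_nonneg hη _
  have h2 : (0:ℝ) < 4 * (β+1) := by linarith
  exact div_nonpos_of_nonpos_of_nonneg (by linarith) h2.le

lemma rpow_half_lt_half {x : ℝ} (hx0 : 0 ≤ x) (hx : x < 1/4) : x ^ ((1:ℝ)/2) < 1/2 := by
  rw [← Real.sqrt_eq_rpow]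
  have h : Real.sqrt (1/4) = 1/2 := by
    rw [show (1/4:ℝ) = (1/2)^2 by norm_num, Real.sqrt_sq (by norm_num)]
  calc Real.sqrt x < Real.sqrt (1/4) := (Real.sqrt_lt_sqrt_iff hx0).2 hx
    _ = 1/2 := h

lemma W_anti (hβ : 0 < β) (hδ0 : 0 < δ) (hδ1 : δ < 1/4) : AntitoneOn (W β δ) (Ici 0) := by
  intro s hs t ht hst
  simp only [mem_Ici] at hs ht
  by_cases ht' : t ≤ δ
  · have hs' : s ≤ δ := hst.trans ht'
    rw [W, W, if_pos hs', if_pos ht']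
    have : s ^ ((1:ℝ)/2) ≤ t ^ ((1:ℝ)/2) := Real.rpow_le_rpow hs hst (by norm_num)
    linarith
  · by_cases hs' : s ≤ δ
    · rw [W, W, if_pos hs', if_neg ht']
      have h1 : E β t ≤ 1 := E_le_one hβ ht
      have h2 : s ^ ((1:ℝ)/2) < 1/2 := rpow_half_lt_half hs (lt_of_le_of_lt hs' hδ1)
      nlinarith
    · rw [W, W, if_neg hs', if_neg ht']
      have h1 : s ^ (β+1) ≤ t ^ (β+1) := Real.rpow_le_rpow hs hst (by linarith)
      have h2 : (0:ℝ) < 4 * (β+1) := by linarith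
      have : -t ^ (β+1) / (4*(β+1)) ≤ -s ^ (β+1) / (4*(β+1)) := by
        gcongr
      have := Real.exp_le_exp.2 this
      rw [E, E]
      linarith

lemma W_pos (hδ0 : 0 < δ) (hδ1 : δ < 1/4) {σ : ℝ} (hσ : 0 ≤ σ) : 0 < W β δ σ := by
  rw [W]; split_ifs with h
  · have : σ ^ ((1:ℝ)/2) < 1/2 := rpow_half_lt_half hσ (lt_of_le_of_lt h hδ1)
    linarith
  · have := E_pos (β := β) σ; positivity

lemma W_le_one (hβ : 0 < β) {σ : ℝ} (hσ : 0 ≤ σ) : W β δ σ ≤ 1 := by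
  rw [W]; split_ifs with h
  · have : (0:ℝ) ≤ σ ^ ((1:ℝ)/2) := Real.rpow_nonneg hσ _
    linarith
  · have := E_le_one hβ hσ; linarith

lemma W_integrable (hβ : 0 < β) (hδ0 : 0 < δ) (hδ1 : δ < 1/4) {x y : ℝ}
    (hx : 0 ≤ x) (hy : 0 ≤ y) : IntervalIntegrable (W β δ) volume x y := by
  apply AntitoneOn.intervalIntegrable
  apply (W_anti hβ hδ0 hδ1).mono
  intro t htm
  rw [Set.mem_uIcc] at htm
  simp only [mem_Ici]
  rcases htm with ⟨h1, _⟩ | ⟨h1, _⟩ <;> linarith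


lemma hasDerivAt_f (x : ℝ) :
    HasDerivAt (fun t : ℝ => t - t ^ ((3:ℝ)/2)) (1 - (3/2) * x ^ ((1:ℝ)/2)) x := by
  have h := Real.hasDerivAt_rpow_const (x := x) (p := (3:ℝ)/2) (Or.inr (by norm_num))
  have h2 := (hasDerivAt_id' x).fun_sub h
  exact h2.congr_deriv (by norm_num)

lemma continuous_fd : Continuous (fun t : ℝ => 1 - (3/2) * t ^ ((1:ℝ)/2)) := by
  apply continuous_const.sub (continuous_const.mul ?_)
  rw [continuous_iff_continuousAt]
  exact fun x => Real.continuousAt_rpow_const x _ (Or.inr (by norm_num))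

lemma f_ftc (x y : ℝ) :
    (y - y ^ ((3:ℝ)/2)) - (x - x ^ ((3:ℝ)/2)) = ∫ t in x..y, (1 - (3/2) * t ^ ((1:ℝ)/2)) :=
  (intervalIntegral.integral_eq_sub_of_hasDerivAt (fun t _ => hasDerivAt_f t)
    (continuous_fd.intervalIntegrable _ _)).symm

lemma omega_ftc (hβ : 0 < β) (hδ0 : 0 < δ) (hδ1 : δ < 1/4) {ω : ℝ → ℝ}
    (hω : ∀ σ : ℝ, ω σ = if σ ≤ δ then σ - σ ^ ((3:ℝ)/2)
      else δ - δ ^ ((3:ℝ)/2) + (1/4) * ∫ η in δ..σ, E β η)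
    {x y : ℝ} (hx : 0 ≤ x) (hxy : x ≤ y) :
    ω y - ω x = ∫ t in x..y, W β δ t := by
  have hcase1 : ∀ a b : ℝ, b ≤ δ → a ≤ b → ω b - ω a = ∫ t in a..b, W β δ t := by
    intro a b hb hab
    rw [hω a, hω b, if_pos hb, if_pos (hab.trans hb), f_ftc a b]
    apply intervalIntegral.integral_congr
    intro t htm
    rw [Set.uIcc_of_le hab, Set.mem_Icc] at htm
    rw [W, if_pos (htm.2.trans hb)]
  have hcase2 : ∀ a b : ℝ, δ ≤ a → a ≤ b → ω b - ω a = ∫ t in a..b, W β δ t := by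
    intro a b ha hab
    have hg : ∀ z, δ ≤ z → ω z = δ - δ ^ ((3:ℝ)/2) + (1/4) * ∫ η in δ..z, E β η := by
      intro z hz
      rw [hω z]; split_ifs with h
      · have hzδ : z = δ := le_antisymm h hz
        subst hzδ; simp
      · rfl
    rw [hg a ha, hg b (ha.trans hab)]
    have hadd : (∫ η in δ..a, E β η) + ∫ η in a..b, E β η = ∫ η in δ..b, E β η :=
      intervalIntegral.integral_add_adjacent_intervals
        ((continuous_E hβ).intervalIntegrable _ _) ((continuous_E hβ).intervalIntegrable _ _)
    have key : ∫ t in a..b, W β δ t = (1/4) * ∫ η in a..b, E β η := by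
      rw [← intervalIntegral.integral_const_mul]
      apply intervalIntegral.integral_congr_ae
      apply Filter.Eventually.of_forall
      intro t ht
      rw [Set.uIoc_of_le hab, Set.mem_Ioc] at ht
      rw [W, if_neg (not_le.2 (lt_of_le_of_lt ha ht.1))]
    rw [key, ← hadd]; ring
  by_cases hyδ : y ≤ δ
  · exact hcase1 x y hyδ hxy
  · by_cases hxδ : δ ≤ x
    · exact hcase2 x y hxδ hxy
    · have hxδ' : x ≤ δ := le_of_not_ge hxδ
      have hyδ' : δ ≤ y := le_of_not_ge hyδ
      have h1 := hcase1 x δ le_rfl hxδ'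
      have h2 := hcase2 δ y le_rfl hyδ'
      have hadd := intervalIntegral.integral_add_adjacent_intervals
        (W_integrable hβ hδ0 hδ1 hx hδ0.le)
        (W_integrable hβ hδ0 hδ1 hδ0.le (hδ0.le.trans hyδ'))
      linarith

lemma G_contDiffOn (hβ : 0 < β) (hδ0 : 0 < δ) :
    ContDiffOn ℝ 2 (fun u : ℝ => ∫ η in δ..u, E β η) (Ioi δ) := by
  rw [show (2 : WithTop ℕ∞) = 1 + 1 by norm_num,
    contDiffOn_succ_iff_deriv_of_isOpen isOpen_Ioi]
  have hEder : ∀ x : ℝ, HasDerivAt (fun u : ℝ => ∫ η in δ..u, E β η) (E β x) x :=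
    fun x => ((continuous_E hβ).integral_hasStrictDerivAt δ x).hasDerivAt
  refine ⟨fun x _ => (hEder x).differentiableAt.differentiableWithinAt, ?_, ?_⟩
  · intro h; exact absurd h (by norm_num)
  · have hd : deriv (fun u : ℝ => ∫ η in δ..u, E β η) = E β :=
      funext fun x => (hEder x).deriv
    rw [hd]
    intro x hx
    apply ContDiffAt.contDiffWithinAt
    have hne : x ≠ 0 := (hδ0.trans hx).ne'
    have h1 : ContDiffAt ℝ 1 (fun y : ℝ => -y ^ (β+1) / (4*(β+1))) x :=
      ((Real.contDiffAt_rpow_const_of_ne hne).neg).div_const _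
    exact Real.contDiff_exp.contDiffAt.comp x h1

lemma hasDerivAt_E (hβ : 0 < β) (x : ℝ) :
    HasDerivAt (E β) (-(x ^ β) / 4 * E β x) x := by
  have h0 : HasDerivAt (fun y : ℝ => y ^ (β+1)) ((β+1) * x ^ β) x := by
    have := Real.hasDerivAt_rpow_const (x := x) (p := β+1) (Or.inr (by linarith))
    simpa [show β + 1 - 1 = β by ring] using this
  have h1 : HasDerivAt (fun y : ℝ => -y ^ (β+1) / (4*(β+1)))
      (-((β+1) * x ^ β) / (4*(β+1))) x := h0.neg.div_const _
  have h2 := h1.exp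
  have heq : Real.exp (-x ^ (β+1) / (4*(β+1))) * (-((β+1) * x ^ β) / (4*(β+1)))
      = -(x ^ β) / 4 * E β x := by
    rw [E]
    have hne : β + 1 ≠ 0 := by linarith
    field_simp
  exact heq ▸ h2

end ExplicitModulusAux

open ExplicitModulusAux in
/-- The explicit stationary modulus of continuity balancing diffusion against a
Hölder-β drift: `4ω'' + σ^β ω' ≤ 0` away from the gluing point `δ`. -/
theorem explicit_modulus_properties (β δ : ℝ) (hβ : β ∈ Ioo (0:ℝ) 1)
    (hδ0 : 0 < δ) (hδ1 : δ < 1/4) (ω : ℝ → ℝ)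
    (hω : ∀ σ : ℝ, ω σ = if σ ≤ δ then σ - σ ^ ((3:ℝ)/2)
      else δ - δ ^ ((3:ℝ)/2) + (1/4) * ∫ η in δ..σ, Real.exp (-η ^ (β + 1) / (4 * (β + 1)))) :
    ContinuousOn ω (Ici 0) ∧
    StrictMonoOn ω (Ici 0) ∧
    ConcaveOn ℝ (Ici 0) ω ∧
    ContDiffOn ℝ 2 ω (Ioi 0 \ {δ}) ∧
    ∀ σ ∈ Ioi (0:ℝ) \ {δ}, 4 * deriv (deriv ω) σ + σ ^ β * deriv ω σ ≤ 0 := by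
  obtain ⟨hβ0, hβ1⟩ := hβ
  have hω' : ∀ σ : ℝ, ω σ = if σ ≤ δ then σ - σ ^ ((3:ℝ)/2)
      else δ - δ ^ ((3:ℝ)/2) + (1/4) * ∫ η in δ..σ, E β η := hω
  have hftc : ∀ {x y : ℝ}, 0 ≤ x → x ≤ y → ω y - ω x = ∫ t in x..y, W β δ t :=
    fun hx hxy => omega_ftc hβ0 hδ0 hδ1 hω' hx hxy
  -- the two eventual-equality facts
  have hevf : ∀ {σ : ℝ}, σ < δ → ω =ᶠ[nhds σ] fun x => x - x ^ ((3:ℝ)/2) := by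
    intro σ h
    exact Filter.eventuallyEq_of_mem (Iio_mem_nhds h) fun x hx => by
      rw [hω x, if_pos (le_of_lt hx)]
  have hevg : ∀ {σ : ℝ}, δ < σ →
      ω =ᶠ[nhds σ] fun x => δ - δ ^ ((3:ℝ)/2) + (1/4) * ∫ η in δ..x, E β η := by
    intro σ h
    exact Filter.eventuallyEq_of_mem (Ioi_mem_nhds h) fun x hx => by
      rw [hω' x, if_neg (not_le.2 hx)]
  -- basic bound lemmas for use below
  have hboundlow : ∀ {x y : ℝ}, 0 ≤ x → x ≤ y → (y - x) * W β δ y ≤ ω y - ω x := by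
    intro x y hx hxy
    rw [hftc hx hxy]
    have : ∫ t in x..y, W β δ y = (y - x) * W β δ y := by
      rw [intervalIntegral.integral_const, smul_eq_mul]
    rw [← this]
    apply intervalIntegral.integral_mono_on hxy intervalIntegrable_const
      (W_integrable hβ0 hδ0 hδ1 hx (hx.trans hxy))
    intro t ht
    exact W_anti hβ0 hδ0 hδ1 (hx.trans ht.1) (hx.trans hxy) ht.2
  have hboundhi : ∀ {x y : ℝ}, 0 ≤ x → x ≤ y → ω y - ω x ≤ (y - x) * W β δ x := by
    intro x y hx hxy
    rw [hftc hx hxy]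
    have : ∫ t in x..y, W β δ x = (y - x) * W β δ x := by
      rw [intervalIntegral.integral_const, smul_eq_mul]
    rw [← this]
    apply intervalIntegral.integral_mono_on hxy
      (W_integrable hβ0 hδ0 hδ1 hx (hx.trans hxy)) intervalIntegrable_const
    intro t ht
    exact W_anti hβ0 hδ0 hδ1 hx (hx.trans ht.1) ht.1
  refine ⟨?_, ?_, ?_, ?_, ?_⟩
  · -- continuity, via Lipschitz
    apply LipschitzOnWith.continuousOn (K := 1) (f := ω)
    apply LipschitzOnWith.of_dist_le_mul
    intro a ha b hb
    simp only [mem_Ici] at ha hb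
    have key : ∀ u v : ℝ, 0 ≤ u → u ≤ v → dist (ω v) (ω u) ≤ 1 * dist v u := by
      intro u v hu huv
      rw [Real.dist_eq, Real.dist_eq, one_mul]
      have h1 := hboundhi hu huv
      have h2 := hboundlow hu huv
      have h3 : 0 ≤ W β δ v := (W_pos hδ0 hδ1 (hu.trans huv)).le
      have h4 : W β δ u ≤ 1 := W_le_one hβ0 hu
      have h5 : 0 ≤ (v - u) * W β δ v := mul_nonneg (by linarith) h3
      have h6 : (v - u) * W β δ u ≤ (v - u) * 1 :=
        mul_le_mul_of_nonneg_left h4 (by linarith)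
      rw [abs_of_nonneg (by linarith), abs_of_nonneg (by linarith)]
      linarith
    rcases le_total a b with h | h
    · rw [dist_comm (ω a), dist_comm a]; exact key a b ha h
    · exact key b a hb h
  · -- strict monotonicity
    intro a ha b hb hab
    simp only [mem_Ici] at ha hb
    have h2 := hboundlow ha hab.le
    have h3 : 0 < (b - a) * W β δ b := mul_pos (by linarith) (W_pos hδ0 hδ1 hb)
    linarith
  · -- concavity
    apply concaveOn_of_slope_anti_adjacent (convex_Ici 0)
    intro x y z hx hz hxy hyz
    simp only [mem_Ici] at hx hz
    have hy0 : (0:ℝ) ≤ y := hx.trans hxy.le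
    have l1 := hboundlow hx hxy.le
    have l2 := hboundhi hy0 hyz.le
    calc (ω z - ω y) / (z - y) ≤ W β δ y := by
          rw [div_le_iff₀ (by linarith)]; linarith
      _ ≤ (ω y - ω x) / (y - x) := by
          rw [le_div_iff₀ (by linarith)]; linarith
  · -- C² regularity away from δ
    intro σ hσ
    obtain ⟨hσ0, hσδ⟩ := hσ
    simp only [mem_Ioi] at hσ0
    simp only [mem_singleton_iff] at hσδ
    apply ContDiffAt.contDiffWithinAt
    rcases lt_or_gt_of_ne hσδ with h | h
    · exact ((contDiffAt_id.sub (Real.contDiffAt_rpow_const_of_ne hσ0.ne')).congr_of_eventuallyEq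
        (hevf h))
    · exact ((contDiffAt_const.add (contDiffAt_const.mul
        ((G_contDiffOn hβ0 hδ0).contDiffAt (Ioi_mem_nhds h)))).congr_of_eventuallyEq (hevg h))
  · -- the differential inequality
    intro σ hσ
    obtain ⟨hσ0, hσδ⟩ := hσ
    simp only [mem_Ioi] at hσ0
    simp only [mem_singleton_iff] at hσδ
    rcases lt_or_gt_of_ne hσδ with h | h
    · -- σ < δ
      have hev := hevf h
      have hfd : ∀ x : ℝ, HasDerivAt (fun t : ℝ => t - t ^ ((3:ℝ)/2))
          (1 - (3/2) * x ^ ((1:ℝ)/2)) x := hasDerivAt_f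
      have hderf : deriv (fun t : ℝ => t - t ^ ((3:ℝ)/2))
          = fun x => 1 - (3/2) * x ^ ((1:ℝ)/2) := funext fun x => (hfd x).deriv
      have hd1 : deriv ω σ = 1 - (3/2) * σ ^ ((1:ℝ)/2) := by
        rw [hev.deriv.eq_of_nhds, hderf]
      have hdd : HasDerivAt (fun x : ℝ => 1 - (3/2) * x ^ ((1:ℝ)/2))
          (0 - (3/2) * ((1/2) * σ ^ ((1:ℝ)/2 - 1))) σ :=
        (hasDerivAt_const σ 1).sub
          ((Real.hasDerivAt_rpow_const (Or.inl hσ0.ne')).const_mul (3/2))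
      have hd2 : deriv (deriv ω) σ = 0 - (3/2) * ((1/2) * σ ^ ((1:ℝ)/2 - 1)) := by
        rw [hev.deriv.deriv.eq_of_nhds, hderf, hdd.deriv]
      rw [hd1, hd2]
      have hσ1 : σ ≤ 1 := by linarith
      have hA : σ ^ β ≤ 1 := Real.rpow_le_one hσ0.le hσ1 hβ0.le
      have hA0 : (0:ℝ) ≤ σ ^ β := Real.rpow_nonneg hσ0.le _
      have hB : 1 ≤ σ ^ ((1:ℝ)/2 - 1) :=
        Real.one_le_rpow_of_pos_of_le_one_of_nonpos hσ0 hσ1 (by norm_num)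
      have hC : (0:ℝ) ≤ σ ^ ((1:ℝ)/2) := Real.rpow_nonneg hσ0.le _
      nlinarith [mul_nonneg hA0 hC]
    · -- δ < σ
      have hev := hevg h
      have hgd : ∀ x : ℝ, HasDerivAt
          (fun s : ℝ => δ - δ ^ ((3:ℝ)/2) + (1/4) * ∫ η in δ..s, E β η)
          ((1/4) * E β x) x := fun x =>
        (hasDerivAt_const x _).add
          ((((continuous_E hβ0).integral_hasStrictDerivAt δ x).hasDerivAt.const_mul (1/4)))
        |>.congr_deriv (by ring)
      have hderg : deriv (fun s : ℝ => δ - δ ^ ((3:ℝ)/2) + (1/4) * ∫ η in δ..s, E β η)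
          = fun x => (1/4) * E β x := funext fun x => (hgd x).deriv
      have hd1 : deriv ω σ = (1/4) * E β σ := by
        rw [hev.deriv.eq_of_nhds, hderg]
      have hd2 : deriv (deriv ω) σ = (1/4) * (-(σ ^ β) / 4 * E β σ) := by
        rw [hev.deriv.deriv.eq_of_nhds, hderg,
          ((hasDerivAt_E hβ0 σ).const_mul (1/4)).deriv]
      rw [hd1, hd2]
      have : 4 * ((1/4) * (-(σ ^ β) / 4 * E β σ)) + σ ^ β * ((1/4) * E β σ) = 0 := by ring
      linarith
end

section
/- Let ν > 0, T > 0, let b, c : [0,T]×ℝ → ℝ be smooth and bounded, with b(t,·) odd about ξ = 0, nondecreasing in ξ, and concave on [0,∞), and with c(t,·) even, satisfying c ≥ 0 and ∂_ξc(t,·) ≤ 0 on (0,∞). Let u solve ∂_tu − 4ν∂²_ξu − b(t,ξ)∂_ξu − c(t,ξ)u = d(t,ξ) with initial data u₀, where u₀ and d(t,·) are nonnegative, even, and nonincreasing on [0,∞). Then for every t ∈ [0,T], u(t,·) is nonnegative, even, and nonincreasing on [0,∞); in particular ‖u(t,·)‖_{L^∞} = u(t,0). -/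
set_option maxHeartbeats 1000000

open Real Set Filter Topology

lemma deriv_differentiable_of_contDiff2 {f : ℝ → ℝ} (hf : ContDiff ℝ 2 f) :
    Differentiable ℝ (deriv f) := by
  have h : ContDiff ℝ (1+1 : ℕ) f := by exact_mod_cast hf
  rw [show ((1+1 : ℕ) : WithTop ℕ∞) = (1 : WithTop ℕ∞) + 1 by norm_cast] at h
  exact (contDiff_succ_iff_deriv.mp h).2.2.differentiable one_ne_zero

lemma second_deriv_test {f : ℝ → ℝ} (hf : ContDiff ℝ 2 f) {x : ℝ}
    (h : IsLocalMin f x) : deriv f x = 0 ∧ 0 ≤ deriv (deriv f) x := by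
  refine ⟨h.deriv_eq_zero, ?_⟩
  by_contra hneg
  push_neg at hneg
  have hdf : Differentiable ℝ f := hf.differentiable (by norm_num)
  have hddf : Differentiable ℝ (deriv f) := deriv_differentiable_of_contDiff2 hf
  have hd0 : deriv f x = 0 := h.deriv_eq_zero
  -- slope of deriv f tends to deriv (deriv f) x < 0
  have hslope : Tendsto (slope (deriv f) x) (𝓝[≠] x) (𝓝 (deriv (deriv f) x)) :=
    hasDerivAt_iff_tendsto_slope.mp (hddf x).hasDerivAt
  have hev : ∀ᶠ y in 𝓝[≠] x, slope (deriv f) x y < 0 :=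
    hslope.eventually (gt_mem_nhds hneg)
  have hev' : ∀ᶠ y in 𝓝[>] x, deriv f y < 0 := by
    have := hev.filter_mono (nhdsWithin_mono x (fun y (hy : y ∈ Ioi x) => ne_of_gt hy))
    filter_upwards [this, self_mem_nhdsWithin] with y hy (hy2 : x < y)
    rw [slope_def_field] at hy
    have h2 : y - x > 0 := by linarith
    rw [hd0, sub_zero] at hy
    have := mul_neg_of_neg_of_pos hy h2
    rw [div_mul_cancel₀ _ (by linarith : y - x ≠ 0)] at this
    linarith
  obtain ⟨b, hb, hIoo⟩ := mem_nhdsGT_iff_exists_Ioo_subset.mp hev'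
  -- all y in Ioo x b have f y < f x
  have hlt : ∀ y ∈ Ioo x b, f y < f x := by
    intro y hy
    obtain ⟨cc, hcc, hceq⟩ := exists_deriv_eq_slope f hy.1 (hdf.continuous.continuousOn)
      (hdf.differentiableOn)
    have : deriv f cc < 0 := hIoo ⟨hcc.1, lt_trans hcc.2 hy.2⟩
    rw [hceq] at this
    have h2 : y - x > 0 := by linarith [hy.1]
    have h3 := mul_neg_of_neg_of_pos this h2
    rw [div_mul_cancel₀ _ (by linarith : y - x ≠ 0)] at h3
    linarith
  have hbmem : Ioo x b ∈ 𝓝[>] x := Ioo_mem_nhdsGT_of_mem ⟨le_refl x, hb⟩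
  have hcombo := (h.filter_mono (nhdsWithin_le_nhds (s := Ioi x))).and
    (eventually_of_mem hbmem (fun y hy => hy))
  obtain ⟨y, hy1, hy2⟩ := hcombo.exists
  exact absurd (hlt y hy2) (not_lt.mpr hy1)

lemma exists_lt_of_hasDerivAt_pos {f : ℝ → ℝ} {x g' : ℝ} (h : HasDerivAt f g' x)
    (hg : 0 < g') (hx : 0 < x) : ∃ s, 0 < s ∧ s < x ∧ f s < f x := by
  have hslope : Tendsto (slope f x) (𝓝[≠] x) (𝓝 g') := hasDerivAt_iff_tendsto_slope.mp h
  have hev : ∀ᶠ y in 𝓝[≠] x, 0 < slope f x y := hslope.eventually (lt_mem_nhds hg)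
  have hev' : ∀ᶠ y in 𝓝[<] x, 0 < slope f x y :=
    hev.filter_mono (nhdsWithin_mono x (fun y (hy : y ∈ Iio x) => ne_of_lt hy))
  have hmem : Ioo 0 x ∈ 𝓝[<] x := Ioo_mem_nhdsLT_of_mem ⟨hx, le_refl x⟩
  obtain ⟨s, hs1, hs2⟩ := (hev'.and (eventually_of_mem hmem (fun y hy => hy))).exists
  refine ⟨s, hs2.1, hs2.2, ?_⟩
  rw [slope_def_field] at hs1
  have h2 : s - x < 0 := by linarith [hs2.2]
  have h3 : f s - f x = ((f s - f x)/(s-x))*(s-x) := (div_mul_cancel₀ _ (ne_of_lt h2)).symm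
  nlinarith [mul_neg_of_pos_of_neg hs1 h2]

lemma first_touch_1d (T R : ℝ) (hT : 0 < T) (w : ℝ → ℝ → ℝ)
    (hcont : Continuous (Function.uncurry w))
    (hout : ∀ t ∈ Icc (0:ℝ) T, ∀ ξ : ℝ, R ≤ |ξ| → 0 < w t ξ)
    (hinit : ∀ ξ : ℝ, 0 < w 0 ξ)
    (hstep : ∀ t ∈ Ioc (0:ℝ) T, ∀ ξ : ℝ, w t ξ = 0 → (∀ x, w t ξ ≤ w t x) →
      (∀ g', HasDerivAt (fun s => w s ξ) g' t → g' ≤ 0) → False) :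
    ∀ t ∈ Icc (0:ℝ) T, ∀ ξ : ℝ, 0 < w t ξ := by
  by_contra hcon
  push_neg at hcon
  obtain ⟨t₀, ht₀, ξ₀, hwξ₀⟩ := hcon
  set K : Set (ℝ × ℝ) := (Icc 0 T ×ˢ Icc (-R) R) ∩ {p : ℝ × ℝ | w p.1 p.2 ≤ 0} with hK
  have hKc : IsCompact K :=
    (isCompact_Icc.prod isCompact_Icc).inter_right
      (isClosed_le (by exact hcont) continuous_const)
  have hmemK : ∀ t ∈ Icc (0:ℝ) T, ∀ ξ, w t ξ ≤ 0 → (t, ξ) ∈ K := by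
    intro t ht ξ hw
    refine ⟨⟨ht, ?_⟩, hw⟩
    rw [mem_Icc, ← abs_le]
    by_contra hR
    exact absurd hw (not_le.mpr (hout t ht ξ (le_of_lt (not_le.mp hR))))
  have hKne : K.Nonempty := ⟨(t₀, ξ₀), hmemK t₀ ht₀ ξ₀ hwξ₀⟩
  obtain ⟨p, hpK, hpmin⟩ := hKc.exists_isMinOn hKne continuous_fst.continuousOn
  set ts := p.1 with hts
  have htsIcc : ts ∈ Icc (0:ℝ) T := hpK.1.1
  -- all earlier times are strictly positive
  have hearlier : ∀ t ∈ Icc (0:ℝ) T, t < ts → ∀ ξ, 0 < w t ξ := by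
    intro t ht hlt ξ
    by_contra hw
    exact absurd (hpmin (hmemK t ht ξ (not_lt.mp hw))) (not_le.mpr hlt)
  have hts0 : 0 < ts := by
    rcases eq_or_lt_of_le htsIcc.1 with h | h
    · exfalso
      have h2 : w p.1 p.2 ≤ 0 := hpK.2
      rw [← hts, ← h] at h2
      exact absurd h2 (not_le.mpr (hinit p.2))
    · exact h
  -- spatial minimum at time ts
  obtain ⟨ξs, hξsI, hξsmin⟩ := isCompact_Icc.exists_isMinOn (s := Icc (-R) R)
    ⟨p.2, hpK.1.2⟩ ((hcont.comp (Continuous.prodMk_right ts)).continuousOn)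
  have hwle : w ts ξs ≤ 0 := le_trans (hξsmin hpK.1.2) hpK.2
  have hglobal : ∀ x, w ts ξs ≤ w ts x := by
    intro x
    by_cases hx : x ∈ Icc (-R) R
    · exact hξsmin hx
    · refine le_trans hwle (le_of_lt (hout ts htsIcc x ?_))
      rw [mem_Icc, ← abs_le] at hx
      exact le_of_lt (not_le.mp hx)
  -- w ts ξs = 0 by continuity from the left
  have hwge : 0 ≤ w ts ξs := by
    have hcw : ContinuousAt (fun t => w t ξs) ts :=
      (hcont.comp (continuous_id.prodMk continuous_const)).continuousAt
    have htend : Tendsto (fun t => w t ξs) (𝓝[<] ts) (𝓝 (w ts ξs)) :=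
      (hcw.continuousWithinAt).tendsto
    refine ge_of_tendsto htend ?_
    filter_upwards [Ioo_mem_nhdsLT_of_mem (show ts ∈ Ioc 0 ts from ⟨hts0, le_refl ts⟩)]
      with t ht
    exact le_of_lt (hearlier t ⟨le_of_lt ht.1, le_trans (le_of_lt ht.2) htsIcc.2⟩ ht.2 ξs)

  have hweq : w ts ξs = 0 := le_antisymm hwle hwge
  refine hstep ts ⟨hts0, htsIcc.2⟩ ξs hweq hglobal ?_
  intro g' hg'
  by_contra hgpos
  push_neg at hgpos
  obtain ⟨s, hs0, hsts, hws⟩ := exists_lt_of_hasDerivAt_pos hg' hgpos hts0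
  have : 0 < w s ξs := hearlier s ⟨le_of_lt hs0, le_trans (le_of_lt hsts) htsIcc.2⟩ hsts ξs
  rw [hweq] at hws
  linarith

lemma iteratedDeriv_two (f : ℝ → ℝ) : iteratedDeriv 2 f = deriv (deriv f) := by
  show iteratedDeriv (1+1) f = _
  rw [iteratedDeriv_succ, iteratedDeriv_one]

lemma nonneg_principle (ν T M K : ℝ) (hν : 0 < ν) (hT : 0 < T)
    (B C D U : ℝ → ℝ → ℝ)
    (hUc : Continuous (Function.uncurry U))
    (hU2 : ∀ t, ContDiff ℝ 2 (U t))
    (hUbd : ∀ t ξ, |U t ξ| ≤ K)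
    (hBC : ∀ t ξ, |B t ξ| + |C t ξ| ≤ M)
    (hD : ∀ t ∈ Ioc (0:ℝ) T, ∀ ξ : ℝ, 0 ≤ D t ξ)
    (hinit : ∀ ξ : ℝ, 0 ≤ U 0 ξ)
    (hpde : ∀ t ∈ Ioc (0:ℝ) T, ∀ ξ : ℝ, HasDerivAt (fun s => U s ξ)
      (4*ν*iteratedDeriv 2 (U t) ξ + B t ξ * deriv (U t) ξ + C t ξ * U t ξ + D t ξ) t) :
    ∀ t ∈ Icc (0:ℝ) T, ∀ ξ : ℝ, 0 ≤ U t ξ := by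
  have hM0 : 0 ≤ M := le_trans (by positivity) (hBC 0 0)
  have hK0 : 0 ≤ K := le_trans (abs_nonneg _) (hUbd 0 0)
  set l : ℝ := 8*ν + 3*M + 1 with hl
  have hl0 : 0 < l := by positivity
  -- main epsilon claim
  have main : ∀ ε > (0:ℝ), ∀ t ∈ Icc (0:ℝ) T, ∀ ξ : ℝ,
      0 < U t ξ + ε*(1+ξ^2)*Real.exp (l*t) := by
    intro ε hε
    set R : ℝ := Real.sqrt (K/ε) + 1 with hR
    have hRK : ∀ ξ : ℝ, R ≤ |ξ| → K/ε ≤ ξ^2 := by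
      intro ξ hξ
      rw [hR] at hξ
      have h1 : Real.sqrt (K/ε) ≤ |ξ| := by linarith
      have h2 := Real.sq_sqrt (div_nonneg hK0 hε.le)
      nlinarith [sq_abs ξ, Real.sqrt_nonneg (K/ε)]
    apply first_touch_1d T R hT
    · exact hUc.add (by fun_prop)
    · -- outside
      intro t ht ξ hξ
      have h1 : K/ε ≤ ξ^2 := hRK ξ hξ
      have h2 : (1:ℝ) ≤ Real.exp (l*t) := by
        rw [← Real.exp_zero]
        exact Real.exp_le_exp.mpr (by nlinarith [ht.1])
      have h3 : -K ≤ U t ξ := (abs_le.mp (hUbd t ξ)).1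
      have h4 : K ≤ ε * ξ^2 := by
        rw [div_le_iff₀ hε] at h1; linarith [h1]
      nlinarith [mul_le_mul_of_nonneg_left h2 (by positivity : (0:ℝ) ≤ ε*(1+ξ^2))]
    · intro ξ
      have := hinit ξ
      have h2 : (0:ℝ) < ε*(1+ξ^2)*Real.exp (l*0) := by positivity
      linarith
    · -- the step
      intro t ht ξ hweq hwmin htime
      set P : ℝ := Real.exp (l*t) with hPdef
      have hP : 0 < P := Real.exp_pos _
      -- spatial function is C^2
      have hwt2 : ContDiff ℝ 2 (fun x => U t x + ε*(1+x^2)*P) := (hU2 t).add (by fun_prop)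
      -- local min
      have hmin : IsLocalMin (fun x => U t x + ε*(1+x^2)*P) ξ :=
        Filter.Eventually.of_forall hwmin
      obtain ⟨hd1, hd2⟩ := second_deriv_test hwt2 hmin
      -- derivative of the barrier part
      have hbar : ∀ x : ℝ, HasDerivAt (fun y : ℝ => ε*(1+y^2)*P) (ε*(2*x)*P) x := by
        intro x
        have h1 : HasDerivAt (fun y : ℝ => 1 + y^2) (2*x) x := by
          simpa using (hasDerivAt_pow 2 x).const_add 1
        exact (h1.const_mul ε).mul_const P
      have hUd : Differentiable ℝ (U t) := (hU2 t).differentiable (by norm_num)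
      -- first derivative value
      have hder : ∀ x : ℝ, deriv (fun y => U t y + ε*(1+y^2)*P) x
          = deriv (U t) x + ε*(2*x)*P := by
        intro x
        exact ((hUd x).hasDerivAt.add (hbar x)).deriv
      have hd1' : deriv (U t) ξ = -(ε*(2*ξ)*P) := by
        have := hder ξ; rw [hd1] at this; linarith
      -- second derivative
      have hUdd : Differentiable ℝ (deriv (U t)) := by
        have h : ContDiff ℝ (1+1 : ℕ) (U t) := by exact_mod_cast (hU2 t)
        rw [show ((1+1 : ℕ) : WithTop ℕ∞) = (1 : WithTop ℕ∞) + 1 by norm_cast] at h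
        exact (contDiff_succ_iff_deriv.mp h).2.2.differentiable one_ne_zero
      have hd2' : -(ε*2*P) ≤ iteratedDeriv 2 (U t) ξ := by
        have heq2 : deriv (fun y => U t y + ε*(1+y^2)*P) = fun x => deriv (U t) x + ε*(2*x)*P :=
          funext hder
        rw [heq2] at hd2
        have h3 : HasDerivAt (fun x : ℝ => deriv (U t) x + ε*(2*x)*P)
            (deriv (deriv (U t)) ξ + ε*2*P) ξ := by
          refine (hUdd ξ).hasDerivAt.add ?_
          have h4 : HasDerivAt (fun x : ℝ => x) 1 ξ := hasDerivAt_id ξ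
          have h5 := (h4.const_mul (2:ℝ)).const_mul ε |>.mul_const P
          exact h5.congr_deriv (by ring)
        rw [h3.deriv] at hd2
        rw [iteratedDeriv_two]
        linarith
      -- time derivative
      have htexp : HasDerivAt (fun s => ε*(1+ξ^2)*Real.exp (l*s))
          (ε*(1+ξ^2)*(Real.exp (l*t)*(l*1))) t := by
        exact (((hasDerivAt_id t).const_mul l).exp).const_mul (ε*(1+ξ^2))
      have htfull := (hpde t ht ξ).add htexp
      have hle := htime _ htfull
      -- now derive contradiction
      set i2 := iteratedDeriv 2 (U t) ξ
      set β := B t ξ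
      set γ := C t ξ
      have hUv : U t ξ = -(ε*(1+ξ^2)*P) := by
        have := hweq; linarith
      have hβγ := hBC t ξ
      have hβ : |β| ≤ M := by have := abs_nonneg (C t ξ); linarith
      have hγ : |γ| ≤ M := by have := abs_nonneg (B t ξ); linarith
      obtain ⟨hβ1, hβ2⟩ := abs_le.mp hβ
      obtain ⟨hγ1, hγ2⟩ := abs_le.mp hγ
      have hDpos := hD t ht ξ
      rw [hd1', hUv] at hle
      rw [← hPdef] at hle
      rw [hl] at hle
      have hq : 0 < ε*P := by positivity
      nlinarith [mul_nonneg (mul_nonneg (by linarith : (0:ℝ) ≤ M - β) (sq_nonneg (1+ξ)))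
          (mul_nonneg hε.le hP.le),
        mul_nonneg (mul_nonneg (by linarith : (0:ℝ) ≤ M + β) (sq_nonneg (1-ξ)))
          (mul_nonneg hε.le hP.le),
        mul_nonneg (mul_nonneg (by linarith : (0:ℝ) ≤ M - γ) (by positivity : (0:ℝ) ≤ 1+ξ^2))
          (mul_nonneg hε.le hP.le),
        mul_nonneg (mul_nonneg (by positivity : (0:ℝ) ≤ 8*ν+3*M+1) (sq_nonneg ξ))
          (mul_nonneg hε.le hP.le),
        mul_nonneg hν.le (by linarith : (0:ℝ) ≤ i2 + ε*2*P),
        mul_nonneg hM0 (mul_nonneg hε.le hP.le),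
        mul_pos hε hP]
  -- conclude
  intro t ht ξ
  by_contra hcon
  push_neg at hcon
  have hφpos : (0:ℝ) < (1+ξ^2)*Real.exp (l*t) := by positivity
  set ε := -(U t ξ)/(2*((1+ξ^2)*Real.exp (l*t))) with hεdef
  have hεpos : 0 < ε := div_pos (by linarith) (by linarith)
  have h3 := main ε hεpos t ht ξ
  have h2 : ε * ((1+ξ^2)*Real.exp (l*t)) = -(U t ξ)/2 := by
    rw [hεdef]
    field_simp
  linarith

lemma first_touch_2d (T R : ℝ) (hT : 0 < T) (w : ℝ → ℝ → ℝ → ℝ)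
    (hcont : Continuous (fun p : ℝ × ℝ × ℝ => w p.1 p.2.1 p.2.2))
    (hout : ∀ t ∈ Icc (0:ℝ) T, ∀ x y : ℝ, |x| ≤ y → R ≤ y → 0 < w t x y)
    (hinit : ∀ x y : ℝ, |x| ≤ y → 0 < w 0 x y)
    (hstep : ∀ t ∈ Ioc (0:ℝ) T, ∀ x y : ℝ, |x| ≤ y → w t x y = 0 →
      (∀ a bb : ℝ, |a| ≤ bb → w t x y ≤ w t a bb) →
      (∀ g', HasDerivAt (fun s => w s x y) g' t → g' ≤ 0) → False) :
    ∀ t ∈ Icc (0:ℝ) T, ∀ x y : ℝ, |x| ≤ y → 0 < w t x y := by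
  by_contra hcon
  push_neg at hcon
  obtain ⟨t₀, ht₀, x₀, y₀, hxy₀, hw₀⟩ := hcon
  set K : Set (ℝ × ℝ × ℝ) := (Icc 0 T ×ˢ (Icc (-R) R ×ˢ Icc 0 R)) ∩
    ({p : ℝ × ℝ × ℝ | |p.2.1| ≤ p.2.2} ∩ {p | w p.1 p.2.1 p.2.2 ≤ 0}) with hK
  have hKc : IsCompact K :=
    (isCompact_Icc.prod (isCompact_Icc.prod isCompact_Icc)).inter_right
      ((isClosed_le (continuous_abs.comp continuous_snd.fst) continuous_snd.snd).inter
        (isClosed_le hcont continuous_const))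
  have hmemK : ∀ t ∈ Icc (0:ℝ) T, ∀ x y : ℝ, |x| ≤ y → w t x y ≤ 0 → (t, x, y) ∈ K := by
    intro t ht x y hxy hw
    have hy0 : 0 ≤ y := le_trans (abs_nonneg x) hxy
    have hyR : y ≤ R := by
      by_contra hy
      exact absurd hw (not_le.mpr (hout t ht x y hxy (le_of_lt (not_le.mp hy))))
    exact ⟨⟨ht, ⟨abs_le.mp (le_trans hxy hyR), ⟨hy0, hyR⟩⟩⟩, hxy, hw⟩
  have hKne : K.Nonempty := ⟨(t₀, x₀, y₀), hmemK t₀ ht₀ x₀ y₀ hxy₀ hw₀⟩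
  obtain ⟨p, hpK, hpmin⟩ := hKc.exists_isMinOn hKne continuous_fst.continuousOn
  set ts := p.1 with hts
  have htsIcc : ts ∈ Icc (0:ℝ) T := hpK.1.1
  have hearlier : ∀ t ∈ Icc (0:ℝ) T, t < ts → ∀ x y : ℝ, |x| ≤ y → 0 < w t x y := by
    intro t ht hlt x y hxy
    by_contra hw
    exact absurd (hpmin (hmemK t ht x y hxy (not_lt.mp hw))) (not_le.mpr hlt)
  have hts0 : 0 < ts := by
    rcases eq_or_lt_of_le htsIcc.1 with h | h
    · exfalso
      have h2 : w p.1 p.2.1 p.2.2 ≤ 0 := hpK.2.2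
      rw [← hts, ← h] at h2
      exact absurd h2 (not_le.mpr (hinit p.2.1 p.2.2 hpK.2.1))
    · exact h
  -- spatial minimum at time ts over the compact truncated cone
  set S : Set (ℝ × ℝ) := (Icc (-R) R ×ˢ Icc 0 R) ∩ {q : ℝ × ℝ | |q.1| ≤ q.2} with hS
  have hSc : IsCompact S := (isCompact_Icc.prod isCompact_Icc).inter_right
    (isClosed_le (continuous_abs.comp continuous_fst) continuous_snd)
  have hSne : S.Nonempty := ⟨p.2, ⟨hpK.1.2, hpK.2.1⟩⟩
  have hwcont : Continuous (fun q : ℝ × ℝ => w ts q.1 q.2) :=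
    hcont.comp (Continuous.prodMk_right ts)
  obtain ⟨qs, hqsS, hqsmin⟩ := hSc.exists_isMinOn hSne hwcont.continuousOn
  set xs := qs.1 with hxs
  set ys := qs.2 with hys
  have hxys : |xs| ≤ ys := hqsS.2
  have hwle : w ts xs ys ≤ 0 := by
    have h1 : w ts xs ys ≤ w ts p.2.1 p.2.2 := hqsmin ⟨hpK.1.2, hpK.2.1⟩
    exact le_trans h1 hpK.2.2
  have hglobal : ∀ a bb : ℝ, |a| ≤ bb → w ts xs ys ≤ w ts a bb := by
    intro a bb hab
    by_cases hbb : bb ≤ R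
    · have hb0 : 0 ≤ bb := le_trans (abs_nonneg a) hab
      exact hqsmin (show (a, bb) ∈ S from ⟨⟨abs_le.mp (le_trans hab hbb), ⟨hb0, hbb⟩⟩, hab⟩)
    · exact le_trans hwle (le_of_lt (hout ts htsIcc a bb hab (le_of_lt (not_le.mp hbb))))
  have hwge : 0 ≤ w ts xs ys := by
    have hcw : ContinuousAt (fun t => w t xs ys) ts :=
      (hcont.comp (continuous_id.prodMk (continuous_const.prodMk continuous_const))).continuousAt
    have htend : Tendsto (fun t => w t xs ys) (𝓝[<] ts) (𝓝 (w ts xs ys)) :=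
      (hcw.continuousWithinAt).tendsto
    refine ge_of_tendsto htend ?_
    filter_upwards [Ioo_mem_nhdsLT_of_mem (show ts ∈ Ioc 0 ts from ⟨hts0, le_refl ts⟩)]
      with t ht
    exact le_of_lt (hearlier t ⟨le_of_lt ht.1, le_trans (le_of_lt ht.2) htsIcc.2⟩ ht.2 xs ys hxys)
  have hweq : w ts xs ys = 0 := le_antisymm hwle hwge
  refine hstep ts ⟨hts0, htsIcc.2⟩ xs ys hxys hweq hglobal ?_
  intro g' hg'
  by_contra hgpos
  push_neg at hgpos
  obtain ⟨s, hs0, hsts, hws⟩ := exists_lt_of_hasDerivAt_pos hg' hgpos hts0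
  have : 0 < w s xs ys :=
    hearlier s ⟨le_of_lt hs0, le_trans (le_of_lt hsts) htsIcc.2⟩ hsts xs ys hxys
  rw [hweq] at hws
  linarith

lemma even_eval_abs {f : ℝ → ℝ} (hf : ∀ ξ, f (-ξ) = f ξ) (x : ℝ) : f x = f |x| := by
  rcases abs_cases x with ⟨h1, _⟩ | ⟨h1, _⟩
  · rw [h1]
  · rw [h1]; exact (hf x).symm

lemma bnd_quad {M β ξ q : ℝ} (h1 : -M ≤ β) (h2 : β ≤ M) (hq : 0 ≤ q) :
    β * (2*ξ) * q ≤ M*(1+ξ^2)*q ∧ -(M*(1+ξ^2)*q) ≤ β * (2*ξ) * q := by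
  constructor <;>
  nlinarith [mul_nonneg (mul_nonneg (by linarith : (0:ℝ) ≤ M-β) (sq_nonneg (1+ξ))) hq,
    mul_nonneg (mul_nonneg (by linarith : (0:ℝ) ≤ M+β) (sq_nonneg (1-ξ))) hq,
    mul_nonneg (mul_nonneg (by linarith : (0:ℝ) ≤ M-β) (sq_nonneg (1-ξ))) hq,
    mul_nonneg (mul_nonneg (by linarith : (0:ℝ) ≤ M+β) (sq_nonneg (1+ξ))) hq]

lemma antitone_key (ν T M K : ℝ) (hν : 0 < ν) (hT : 0 < T)
    (b c dd u : ℝ → ℝ → ℝ) (u0 : ℝ → ℝ)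
    (hBC : ∀ t ξ, |b t ξ| + |c t ξ| ≤ M)
    (hcanti : ∀ t, AntitoneOn (c t) (Ici 0))
    (hceven : ∀ t ξ, c t (-ξ) = c t ξ)
    (hdeven : ∀ t ξ, dd t (-ξ) = dd t ξ)
    (hddec : ∀ t, AntitoneOn (dd t) (Ici 0))
    (hu0even : ∀ ξ, u0 (-ξ) = u0 ξ)
    (hu0dec : AntitoneOn u0 (Ici 0))
    (hic : ∀ ξ, u 0 ξ = u0 ξ)
    (hUc : Continuous (Function.uncurry u))
    (hu2 : ∀ t, ContDiff ℝ 2 (u t))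
    (hubd : ∀ t ξ, |u t ξ| ≤ K)
    (hueven : ∀ t ∈ Icc (0:ℝ) T, ∀ ξ, u t (-ξ) = u t ξ)
    (hupos : ∀ t ∈ Icc (0:ℝ) T, ∀ ξ : ℝ, 0 ≤ u t ξ)
    (hpde : ∀ t ∈ Ioc (0:ℝ) T, ∀ ξ : ℝ,
      HasDerivAt (fun s => u s ξ)
        (4 * ν * iteratedDeriv 2 (u t) ξ + b t ξ * deriv (u t) ξ + c t ξ * u t ξ + dd t ξ) t) :
    ∀ t ∈ Icc (0:ℝ) T, ∀ x y : ℝ, |x| ≤ y → u t y ≤ u t x := by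
  have hM0 : 0 ≤ M := le_trans (by positivity) (hBC 0 0)
  have hK0 : 0 ≤ K := le_trans (abs_nonneg _) (hubd 0 0)
  set l : ℝ := 16*ν + 3*M + 1 with hl
  have hl0 : 0 < l := by positivity
  have main : ∀ ε > (0:ℝ), ∀ t ∈ Icc (0:ℝ) T, ∀ x y : ℝ, |x| ≤ y →
      0 < u t x - u t y + ε*(1+x^2+y^2)*Real.exp (l*t) := by
    intro ε hε
    set R : ℝ := Real.sqrt (2*K/ε) + 1 with hR
    have hRK : ∀ y : ℝ, R ≤ y → 2*K/ε ≤ y^2 := by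
      intro y hy
      rw [hR] at hy
      have h2 := Real.sq_sqrt (by positivity : (0:ℝ) ≤ 2*K/ε)
      nlinarith [Real.sqrt_nonneg (2*K/ε)]
    have hcont' : Continuous (fun p : ℝ × ℝ × ℝ =>
        u p.1 p.2.1 - u p.1 p.2.2 + ε*(1+p.2.1^2+p.2.2^2)*Real.exp (l*p.1)) := by
      have c1 : Continuous (fun p : ℝ × ℝ × ℝ => u p.1 p.2.1) :=
        hUc.comp (continuous_fst.prodMk continuous_snd.fst)
      have c2 : Continuous (fun p : ℝ × ℝ × ℝ => u p.1 p.2.2) :=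
        hUc.comp (continuous_fst.prodMk continuous_snd.snd)
      exact (c1.sub c2).add (by fun_prop)
    have hout' : ∀ t ∈ Icc (0:ℝ) T, ∀ x y : ℝ, |x| ≤ y → R ≤ y →
        0 < u t x - u t y + ε*(1+x^2+y^2)*Real.exp (l*t) := by
      intro t ht x y hxy hRy
      have h1 : 2*K/ε ≤ y^2 := hRK y hRy
      have h2 : (1:ℝ) ≤ Real.exp (l*t) := by
        rw [← Real.exp_zero]
        exact Real.exp_le_exp.mpr (by nlinarith [ht.1])
      have h3 : -K ≤ u t x := (abs_le.mp (hubd t x)).1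
      have h4 : u t y ≤ K := (abs_le.mp (hubd t y)).2
      have h5 : 2*K ≤ ε * y^2 := by
        rw [div_le_iff₀ hε] at h1; linarith
      have t1 := mul_le_mul_of_nonneg_left h2 (by positivity : (0:ℝ) ≤ ε*(1+x^2+y^2))
      have t2 : (0:ℝ) < ε*(1+x^2) := by positivity
      have t3 : ε*(1+x^2+y^2)*1 = ε*(1+x^2) + ε*y^2 := by ring
      linarith only [h3, h4, h5, t1, t2, t3]
    have hinit' : ∀ x y : ℝ, |x| ≤ y → 0 < u 0 x - u 0 y + ε*(1+x^2+y^2)*Real.exp (l*0) := by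
      intro x y hxy
      have hy0 : (0:ℝ) ≤ y := le_trans (abs_nonneg x) hxy
      have h1 : u0 y ≤ u0 x := by
        rw [even_eval_abs hu0even x]
        exact hu0dec (abs_nonneg x) hy0 hxy
      have h2 : (0:ℝ) < ε*(1+x^2+y^2)*Real.exp (l*0) := by positivity
      rw [hic x, hic y]
      linarith
    have hstep' : ∀ t ∈ Ioc (0:ℝ) T, ∀ x y : ℝ, |x| ≤ y →
        u t x - u t y + ε*(1+x^2+y^2)*Real.exp (l*t) = 0 →
        (∀ a bb : ℝ, |a| ≤ bb → u t x - u t y + ε*(1+x^2+y^2)*Real.exp (l*t) ≤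
          u t a - u t bb + ε*(1+a^2+bb^2)*Real.exp (l*t)) →
        (∀ g', HasDerivAt (fun s => u s x - u s y + ε*(1+x^2+y^2)*Real.exp (l*s)) g' t →
          g' ≤ 0) → False := by
      intro t ht x y hxy heq hmin htime
      set P : ℝ := Real.exp (l*t) with hPdef
      have hP : 0 < P := Real.exp_pos _
      have htIcc : t ∈ Icc (0:ℝ) T := ⟨le_of_lt ht.1, ht.2⟩
      -- strict inequality |x| < y
      have hxy' : |x| < y := by
        rcases lt_or_eq_of_le hxy with h | h
        · exact h
        · exfalso
          have hux : u t x = u t y := by rw [even_eval_abs (hueven t htIcc) x, h]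
          have t1 := mul_pos (mul_pos hε (by positivity : (0:ℝ) < 1+x^2+y^2)) hP
          linarith only [heq, hux, t1]
      obtain ⟨hax1, hax2⟩ := abs_lt.mp hxy'
      have hy0 : 0 < y := lt_of_le_of_lt (abs_nonneg x) hxy'
      have hUd : Differentiable ℝ (u t) := (hu2 t).differentiable (by norm_num)
      have hUdd : Differentiable ℝ (deriv (u t)) := by
        have h : ContDiff ℝ (1+1 : ℕ) (u t) := by exact_mod_cast (hu2 t)
        rw [show ((1+1 : ℕ) : WithTop ℕ∞) = (1 : WithTop ℕ∞) + 1 by norm_cast] at h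
        exact (contDiff_succ_iff_deriv.mp h).2.2.differentiable one_ne_zero
      -- x-line analysis
      have hbar1 : ∀ x0 : ℝ, HasDerivAt (fun a : ℝ => ε*(1+a^2+y^2)*P) (ε*(2*x0)*P) x0 := by
        intro x0
        have h1 : HasDerivAt (fun a : ℝ => 1+a^2+y^2) (2*x0) x0 := by
          simpa using ((hasDerivAt_pow 2 x0).const_add 1).add_const (y^2)
        exact (h1.const_mul ε).mul_const P
      have hf1d : ∀ a : ℝ, HasDerivAt (fun a => u t a - u t y + ε*(1+a^2+y^2)*P)
          (deriv (u t) a + ε*(2*a)*P) a := by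
        intro a
        exact ((hUd a).hasDerivAt.sub_const (u t y)).add (hbar1 a)
      have hmin1 : IsLocalMin (fun a => u t a - u t y + ε*(1+a^2+y^2)*P) x := by
        refine Filter.eventually_of_mem (Ioo_mem_nhds hax1 hax2) ?_
        intro a ha
        exact hmin a y (le_of_lt (abs_lt.mpr ⟨ha.1, ha.2⟩))
      have hwt1 : ContDiff ℝ 2 (fun a => u t a - u t y + ε*(1+a^2+y^2)*P) :=
        ((hu2 t).sub contDiff_const).add (by fun_prop)
      obtain ⟨he1, he2⟩ := second_deriv_test hwt1 hmin1
      have hd1x : deriv (u t) x = -(ε*(2*x)*P) := by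
        have := (hf1d x).deriv
        rw [he1] at this
        linarith
      have hd2x : -(ε*2*P) ≤ iteratedDeriv 2 (u t) x := by
        have heqd : deriv (fun a => u t a - u t y + ε*(1+a^2+y^2)*P)
            = fun a => deriv (u t) a + ε*(2*a)*P := funext fun a => (hf1d a).deriv
        rw [heqd] at he2
        have h3 : HasDerivAt (fun a : ℝ => deriv (u t) a + ε*(2*a)*P)
            (deriv (deriv (u t)) x + ε*2*P) x := by
          refine (hUdd x).hasDerivAt.add ?_
          have h5 := (((hasDerivAt_id x).const_mul (2:ℝ)).const_mul ε).mul_const P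
          exact h5.congr_deriv (by ring)
        rw [h3.deriv] at he2
        rw [iteratedDeriv_two]
        linarith
      -- y-line analysis
      have hbar2 : ∀ y0 : ℝ, HasDerivAt (fun bb : ℝ => ε*(1+x^2+bb^2)*P) (ε*(2*y0)*P) y0 := by
        intro y0
        have h1 : HasDerivAt (fun bb : ℝ => 1+x^2+bb^2) (2*y0) y0 := by
          simpa using (hasDerivAt_pow 2 y0).const_add (1+x^2)
        exact (h1.const_mul ε).mul_const P
      have hf2d : ∀ bb : ℝ, HasDerivAt (fun bb => u t x - u t bb + ε*(1+x^2+bb^2)*P)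
          (-(deriv (u t) bb) + ε*(2*bb)*P) bb := by
        intro bb
        exact ((hUd bb).hasDerivAt.const_sub (u t x)).add (hbar2 bb)
      have hmin2 : IsLocalMin (fun bb => u t x - u t bb + ε*(1+x^2+bb^2)*P) y := by
        refine Filter.eventually_of_mem (isOpen_Ioi.mem_nhds (show |x| < y from hxy')) ?_
        intro bb hbb
        exact hmin x bb (le_of_lt hbb)
      have hwt2 : ContDiff ℝ 2 (fun bb => u t x - u t bb + ε*(1+x^2+bb^2)*P) :=
        (contDiff_const.sub (hu2 t)).add (by fun_prop)
      obtain ⟨hg1, hg2⟩ := second_deriv_test hwt2 hmin2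
      have hd1y : deriv (u t) y = ε*(2*y)*P := by
        have := (hf2d y).deriv
        rw [hg1] at this
        linarith
      have hd2y : iteratedDeriv 2 (u t) y ≤ ε*2*P := by
        have heqd : deriv (fun bb => u t x - u t bb + ε*(1+x^2+bb^2)*P)
            = fun bb => -(deriv (u t) bb) + ε*(2*bb)*P := funext fun bb => (hf2d bb).deriv
        rw [heqd] at hg2
        have h3 : HasDerivAt (fun bb : ℝ => -(deriv (u t) bb) + ε*(2*bb)*P)
            (-(deriv (deriv (u t)) y) + ε*2*P) y := by
          refine ((hUdd y).hasDerivAt.neg).add ?_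
          have h5 := (((hasDerivAt_id y).const_mul (2:ℝ)).const_mul ε).mul_const P
          exact h5.congr_deriv (by ring)
        rw [h3.deriv] at hg2
        rw [iteratedDeriv_two]
        linarith
      -- time derivative
      have hexp : HasDerivAt (fun s => ε*(1+x^2+y^2)*Real.exp (l*s))
          (ε*(1+x^2+y^2)*(Real.exp (l*t)*(l*1))) t :=
        (((hasDerivAt_id t).const_mul l).exp).const_mul (ε*(1+x^2+y^2))
      have htfull := ((hpde t ht x).sub (hpde t ht y)).add hexp
      have hle := htime _ htfull
      -- comparisons
      have huy : 0 ≤ u t y := hupos t htIcc y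
      have hcxy : c t y ≤ c t x := by
        rw [even_eval_abs (hceven t) x]
        exact hcanti t (abs_nonneg x) (le_of_lt hy0) hxy
      have hdxy : dd t y ≤ dd t x := by
        rw [even_eval_abs (hdeven t) x]
        exact hddec t (abs_nonneg x) (le_of_lt hy0) hxy
      have hux : u t x = u t y - ε*(1+x^2+y^2)*P := by linarith [heq]
      have hbx := abs_le.mp (show |b t x| ≤ M by have := hBC t x; have := abs_nonneg (c t x); linarith)
      have hby := abs_le.mp (show |b t y| ≤ M by have := hBC t y; have := abs_nonneg (c t y); linarith)
      have hcx := abs_le.mp (show |c t x| ≤ M by have := hBC t x; have := abs_nonneg (b t x); linarith)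
      have hcy := abs_le.mp (show |c t y| ≤ M by have := hBC t y; have := abs_nonneg (b t y); linarith)
      rw [hd1x, hd1y, hux] at hle
      rw [← hPdef] at hle
      rw [hl] at hle
      have hεP : (0:ℝ) ≤ ε*P := le_of_lt (mul_pos hε hP)
      -- stepwise bounds
      have s1 := (bnd_quad hbx.1 hbx.2 hεP (ξ := x)).1
      have s2 := (bnd_quad hby.1 hby.2 hεP (ξ := y)).1
      have s3a : (0:ℝ) ≤ (c t x - c t y) * u t y := mul_nonneg (by linarith) huy
      have s3b : c t x * ((1+x^2+y^2)*(ε*P)) ≤ M*((1+x^2+y^2)*(ε*P)) :=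
        mul_le_mul_of_nonneg_right hcx.2
          (mul_nonneg (by positivity : (0:ℝ) ≤ 1+x^2+y^2) hεP)
      have s4 := mul_le_mul_of_nonneg_left hd2x (by linarith : (0:ℝ) ≤ 4*ν)
      have s5 := mul_le_mul_of_nonneg_left hd2y (by linarith : (0:ℝ) ≤ 4*ν)
      have h9 : (0:ℝ) ≤ M*((x^2+y^2)*(ε*P)) :=
        mul_nonneg hM0 (mul_nonneg (by positivity) hεP)
      have h10 : (0:ℝ) ≤ ν*((x^2+y^2)*(ε*P)) :=
        mul_nonneg hν.le (mul_nonneg (by positivity) hεP)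
      have h11 : (0:ℝ) ≤ (x^2+y^2)*(ε*P) := mul_nonneg (by positivity) hεP
      have h12 : (0:ℝ) < ε*P := mul_pos hε hP
      linarith only [hle, s1, s2, s3a, s3b, s4, s5, h9, h10, h11, h12, hdxy]
    exact first_touch_2d T R hT
      (fun t x y => u t x - u t y + ε*(1+x^2+y^2)*Real.exp (l*t))
      hcont' hout' hinit' hstep'
  -- conclude by letting ε → 0
  intro t ht x y hxy
  by_contra hcon
  push_neg at hcon
  have hφpos : (0:ℝ) < (1+x^2+y^2)*Real.exp (l*t) := by positivity
  set ε := (u t y - u t x)/(2*((1+x^2+y^2)*Real.exp (l*t))) with hεdef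
  have hεpos : 0 < ε := div_pos (by linarith) (by linarith)
  have h3 := main ε hεpos t ht x y hxy
  have h2 : ε * ((1+x^2+y^2)*Real.exp (l*t)) = (u t y - u t x)/2 := by
    rw [hεdef]
    field_simp
  linarith

lemma even_key (ν T M K : ℝ) (hν : 0 < ν) (hT : 0 < T)
    (b c dd u : ℝ → ℝ → ℝ) (u0 : ℝ → ℝ)
    (hBC : ∀ t ξ, |b t ξ| + |c t ξ| ≤ M)
    (hbodd : ∀ t ξ, b t (-ξ) = -(b t ξ))
    (hceven : ∀ t ξ, c t (-ξ) = c t ξ)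
    (hdeven : ∀ t ξ, dd t (-ξ) = dd t ξ)
    (hu0even : ∀ ξ, u0 (-ξ) = u0 ξ)
    (hic : ∀ ξ, u 0 ξ = u0 ξ)
    (hUc : Continuous (Function.uncurry u))
    (hu2 : ∀ t, ContDiff ℝ 2 (u t))
    (hu3 : ∀ t, Differentiable ℝ (deriv (u t)))
    (hubd : ∀ t ξ, |u t ξ| ≤ K)
    (hpde : ∀ t ∈ Ioc (0:ℝ) T, ∀ ξ : ℝ,
      HasDerivAt (fun s => u s ξ)
        (4 * ν * iteratedDeriv 2 (u t) ξ + b t ξ * deriv (u t) ξ + c t ξ * u t ξ + dd t ξ) t) :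
    ∀ t ∈ Icc (0:ℝ) T, ∀ ξ : ℝ, u t (-ξ) = u t ξ := by
  have hd1 : ∀ t x, deriv (fun ξ => u t ξ - u t (-ξ)) x
      = deriv (u t) x + deriv (u t) (-x) := by
    intro t x
    have hUd : Differentiable ℝ (u t) := (hu2 t).differentiable (by norm_num)
    have hcomp : Differentiable ℝ (fun ξ : ℝ => u t (-ξ)) := hUd.comp differentiable_neg
    rw [deriv_fun_sub (hUd x) (hcomp x), deriv_comp_neg (u t) x]
    ring
  have hd2 : ∀ t x, iteratedDeriv 2 (fun ξ => u t ξ - u t (-ξ)) x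
      = iteratedDeriv 2 (u t) x - iteratedDeriv 2 (u t) (-x) := by
    intro t x
    rw [iteratedDeriv_two, iteratedDeriv_two]
    have heq : deriv (fun ξ => u t ξ - u t (-ξ))
        = fun x => deriv (u t) x + deriv (u t) (-x) := funext (hd1 t)
    rw [heq]
    have hcomp : Differentiable ℝ (fun x : ℝ => deriv (u t) (-x)) :=
      (hu3 t).comp differentiable_neg
    rw [deriv_fun_add ((hu3 t) x) (hcomp x), deriv_comp_neg (deriv (u t)) x]
    ring
  have key := nonneg_principle ν T M (2*K) hν hT b c (fun _ _ => 0)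
    (fun t ξ => u t ξ - u t (-ξ))
    (by
      have c2 : Continuous (fun p : ℝ × ℝ => u p.1 (-p.2)) :=
        hUc.comp (continuous_fst.prodMk continuous_snd.neg)
      exact hUc.sub c2)
    (fun t => (hu2 t).sub ((hu2 t).comp (contDiff_id.neg)))
    (fun t ξ => by
      have h1 := hubd t ξ
      have h2 := hubd t (-ξ)
      calc |u t ξ - u t (-ξ)| ≤ |u t ξ| + |u t (-ξ)| := abs_sub _ _
        _ ≤ 2*K := by linarith)
    hBC
    (fun t _ ξ => le_refl 0)
    (fun ξ => by show (0:ℝ) ≤ u 0 ξ - u 0 (-ξ); rw [hic ξ, hic (-ξ), hu0even ξ]; simp)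
    (fun t ht ξ => by
      have hp := (hpde t ht ξ).sub (hpde t ht (-ξ))
      have hval : 4*ν*iteratedDeriv 2 (fun ξ => u t ξ - u t (-ξ)) ξ
          + b t ξ * deriv (fun ξ => u t ξ - u t (-ξ)) ξ
          + c t ξ * (u t ξ - u t (-ξ)) + 0
          = 4 * ν * iteratedDeriv 2 (u t) ξ + b t ξ * deriv (u t) ξ + c t ξ * u t ξ + dd t ξ
          - (4 * ν * iteratedDeriv 2 (u t) (-ξ) + b t (-ξ) * deriv (u t) (-ξ)
            + c t (-ξ) * u t (-ξ) + dd t (-ξ)) := by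
        rw [hd1 t ξ, hd2 t ξ, hbodd t ξ, hceven t ξ, hdeven t ξ]
        ring
      rw [hval]
      exact hp)
  intro t ht ξ
  have h1 : 0 ≤ u t ξ - u t (-ξ) := key t ht ξ
  have h2 : 0 ≤ u t (-ξ) - u t (-(-ξ)) := key t ht (-ξ)
  rw [neg_neg] at h2
  linarith

/-- Preservation of the symmetry class (S) (nonnegative, even, nonincreasing on `[0,∞)`)
by the parabolic operator `∂_t - 4ν∂²_ξ - b∂_ξ - c`. -/
theorem symmetry_class_preservation (ν T : ℝ) (hν : 0 < ν) (hT : 0 < T)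
    (b c dd : ℝ → ℝ → ℝ) (u : ℝ → ℝ → ℝ) (u0 : ℝ → ℝ)
    (hb : ContDiff ℝ (⊤ : ℕ∞) (Function.uncurry b)) (hc : ContDiff ℝ (⊤ : ℕ∞) (Function.uncurry c))
    (hbbd : ∃ M, ∀ t ξ, |b t ξ| + |c t ξ| ≤ M)
    (hbodd : ∀ t ξ, b t (-ξ) = -(b t ξ))
    (hbmono : ∀ t, Monotone (b t))
    (hbconc : ∀ t, ConcaveOn ℝ (Ici 0) (b t))
    (hceven : ∀ t ξ, c t (-ξ) = c t ξ)
    (hc0 : ∀ t ξ, 0 ≤ c t ξ)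
    (hcdec : ∀ t, ∀ ξ ∈ Ioi (0:ℝ), deriv (c t) ξ ≤ 0)
    (hd0 : ∀ t ξ, 0 ≤ dd t ξ) (hdeven : ∀ t ξ, dd t (-ξ) = dd t ξ)
    (hddec : ∀ t, AntitoneOn (dd t) (Ici 0))
    (hu00 : ∀ ξ, 0 ≤ u0 ξ) (hu0even : ∀ ξ, u0 (-ξ) = u0 ξ)
    (hu0dec : AntitoneOn u0 (Ici 0))
    (husm : ContDiff ℝ (⊤ : ℕ∞) (Function.uncurry u))
    (hubdd : ∃ K, ∀ t ξ, |u t ξ| ≤ K)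
    (hic : ∀ ξ, u 0 ξ = u0 ξ)
    (hpde : ∀ t ∈ Ioc (0:ℝ) T, ∀ ξ : ℝ,
      HasDerivAt (fun s => u s ξ)
        (4 * ν * iteratedDeriv 2 (u t) ξ + b t ξ * deriv (u t) ξ + c t ξ * u t ξ + dd t ξ) t) :
    ∀ t ∈ Icc (0:ℝ) T,
      (∀ ξ, 0 ≤ u t ξ) ∧ (∀ ξ, u t (-ξ) = u t ξ) ∧ AntitoneOn (u t) (Ici 0) ∧
      (∀ ξ, u t ξ ≤ u t 0) := by
  obtain ⟨M, hBC⟩ := hbbd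
  obtain ⟨K, hubd⟩ := hubdd
  have hUc : Continuous (Function.uncurry u) := husm.continuous
  have hu2 : ∀ t, ContDiff ℝ 2 (u t) := fun t =>
    (husm.of_le (WithTop.coe_le_coe.mpr le_top)).comp (contDiff_const.prodMk contDiff_id)
  have hu3 : ∀ t, Differentiable ℝ (deriv (u t)) := fun t =>
    deriv_differentiable_of_contDiff2 (hu2 t)
  have hc2 : ∀ t, ContDiff ℝ 2 (c t) := fun t =>
    (hc.of_le (WithTop.coe_le_coe.mpr le_top)).comp (contDiff_const.prodMk contDiff_id)
  have hcanti : ∀ t, AntitoneOn (c t) (Ici 0) := by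
    intro t
    refine antitoneOn_of_deriv_nonpos (convex_Ici 0)
      ((hc2 t).continuous.continuousOn)
      (((hc2 t).differentiable (by norm_num)).differentiableOn) ?_
    rw [interior_Ici]
    exact hcdec t
  have hpos : ∀ t ∈ Icc (0:ℝ) T, ∀ ξ : ℝ, 0 ≤ u t ξ :=
    nonneg_principle ν T M K hν hT b c dd u hUc hu2 hubd hBC
      (fun t _ ξ => hd0 t ξ) (fun ξ => by rw [hic]; exact hu00 ξ) hpde
  have heven : ∀ t ∈ Icc (0:ℝ) T, ∀ ξ : ℝ, u t (-ξ) = u t ξ :=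
    even_key ν T M K hν hT b c dd u u0 hBC hbodd hceven hdeven hu0even hic
      hUc hu2 hu3 hubd hpde
  have hanti : ∀ t ∈ Icc (0:ℝ) T, ∀ x y : ℝ, |x| ≤ y → u t y ≤ u t x :=
    antitone_key ν T M K hν hT b c dd u u0 hBC hcanti hceven hdeven hddec
      hu0even hu0dec hic hUc hu2 hubd heven hpos hpde
  intro t ht
  refine ⟨hpos t ht, heven t ht, ?_, ?_⟩
  · intro a ha bb _ hab
    exact hanti t ht a bb (by rwa [abs_of_nonneg ha])
  · intro ξ
    have h1 : u t ξ = u t |ξ| := even_eval_abs (heven t ht) ξ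
    have h2 := hanti t ht 0 |ξ| (by simpa using abs_nonneg ξ)
    rw [h1]
    exact h2
end
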